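/- arXiv:2303.07734 — 11 statements merged into one kernel-verified Lean document; each statement's English description precedes it below -/
import Mathlib

section
/- Let Γ be a subgroup of GL(n,R) for a commutative ring R. Then there exists an ideal J of R such that the induced homomorphism Γ → GL(n, R/J) is injective and, for every nonzero ideal I of R/J, the intersection of the image of Γ with the congruence subgroup GL(n, I) is nontrivial. -/
open Matrix

lemma gl_map_eq_one_iff {n : Type*} [Fintype n] [DecidableEq n] {R S : Type*} [CommRing R]
    [CommRing S] (f : R →+* S) (g : GL n R) :
    Matrix.GeneralLinearGroup.map f g = 1 ↔ ∀ i j, f ((g.val - 1) i j) = 0 := by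
  rw [Units.ext_iff]
  constructor
  · intro h i j
    have h2 := congrFun (congrFun h i) j
    simp only [Matrix.GeneralLinearGroup.map, Units.coe_map, MonoidHom.coe_coe,
      RingHom.mapMatrix_apply] at h2
    have : f (g.val i j) = (1 : Matrix n n S) i j := h2
    simp [Matrix.sub_apply, Matrix.one_apply, map_sub, this, apply_ite f]
  · intro h
    ext i j
    have := h i j
    simp only [Matrix.sub_apply, map_sub] at this
    have h1 : f (g.val i j) = f ((1 : Matrix n n R) i j) := by
      have := sub_eq_zero.mp this; exact this
    show ((g.val).map f) i j = (1 : Matrix n n S) i j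
    simp [Matrix.map_apply, h1, Matrix.one_apply, apply_ite f]

/-- For any subgroup Γ of GL(n,R), there is an ideal J of R such that
the induced map Γ → GL(n, R/J) is injective (a "minimal embedding"): for every nonzero
ideal I of R/J, the image of Γ meets the congruence subgroup GL(n,I) nontrivially. -/
theorem exists_minimal_embedding
    {n : Type*} [Fintype n] [DecidableEq n] {R : Type*} [CommRing R]
    (Γ : Subgroup (GL n R)) :
    ∃ J : Ideal R,
      Function.Injective
        ((Matrix.GeneralLinearGroup.map (Ideal.Quotient.mk J)).comp Γ.subtype) ∧
      ∀ I : Ideal (R ⧸ J), I ≠ ⊥ →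
        ∃ γ : Γ,
          Matrix.GeneralLinearGroup.map (Ideal.Quotient.mk J) (γ : GL n R) ≠ 1 ∧
          Matrix.GeneralLinearGroup.map ((Ideal.Quotient.mk I).comp (Ideal.Quotient.mk J))
            (γ : GL n R) = 1 := by
  -- P J : the map Γ → GL(n, R/J) has trivial kernel
  set P : Ideal R → Prop :=
    fun J => ∀ γ : Γ, (∀ i j, ((γ : GL n R).val - 1) i j ∈ J) → γ = 1 with hP
  -- translation between membership and the GL map being 1
  have mem_iff : ∀ (J : Ideal R) (g : GL n R),
      Matrix.GeneralLinearGroup.map (Ideal.Quotient.mk J) g = 1 ↔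
      ∀ i j, (g.val - 1) i j ∈ J := by
    intro J g
    rw [gl_map_eq_one_iff]
    exact forall₂_congr fun i j => Ideal.Quotient.eq_zero_iff_mem
  -- ⊥ satisfies P
  have hbot : P ⊥ := by
    intro γ hγ
    have : (γ : GL n R).val = 1 := by
      ext i j
      have := hγ i j
      simp only [Ideal.mem_bot, Matrix.sub_apply] at this
      have := sub_eq_zero.mp this
      simpa using this
    have : (γ : GL n R) = 1 := Units.ext this
    exact Subtype.ext this
  -- Zorn
  have hchain : ∀ c ⊆ {J | P J}, IsChain (· ≤ ·) c → ∃ ub ∈ {J | P J}, ∀ z ∈ c, z ≤ ub := by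
    intro c hcs hc
    rcases c.eq_empty_or_nonempty with rfl | hne
    · exact ⟨⊥, hbot, by simp⟩
    · refine ⟨sSup c, ?_, fun z hz => le_sSup hz⟩
      intro γ hγ
      -- the ideal generated by the entries is compact
      set s : Set R := Set.range (fun p : n × n => ((γ : GL n R).val - 1) p.1 p.2) with hs
      have hfin : (Ideal.span s).FG := Submodule.fg_span (Set.finite_range _)
      have hcomp := (Submodule.fg_iff_compact _).mp hfin
      have hle : Ideal.span s ≤ sSup c := by
        rw [Ideal.span_le]
        rintro x ⟨p, rfl⟩
        exact hγ p.1 p.2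
      obtain ⟨J', hJ'c, hJ'⟩ :=
        (CompleteLattice.isCompactElement_iff_le_of_directed_sSup_le _ (Ideal.span s)).mp hcomp
          c hne hc.directedOn hle
      refine hcs hJ'c γ (fun i j => hJ' ?_)
      exact Ideal.subset_span ⟨(i, j), rfl⟩
  obtain ⟨J, hmax⟩ := zorn_le₀ {J | P J} hchain
  obtain ⟨hJP, hJmax⟩ := hmax
  refine ⟨J, ?_, ?_⟩
  · rw [injective_iff_map_eq_one]
    intro γ hγ
    exact hJP γ ((mem_iff J (γ : GL n R)).mp hγ)
  · intro I hI
    set J' : Ideal R := I.comap (Ideal.Quotient.mk J) with hJ'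
    have hJJ' : J ≤ J' := by
      intro x hx
      simp [hJ', Ideal.mem_comap, Ideal.Quotient.eq_zero_iff_mem.mpr hx]
    have hne : ¬ P J' := by
      intro hPJ'
      have := hJmax hPJ' hJJ'
      apply hI
      have hJeq : J' = J := le_antisymm this hJJ'
      have : I = Ideal.map (Ideal.Quotient.mk J) J' :=
        (Ideal.map_comap_of_surjective _ Ideal.Quotient.mk_surjective I).symm
      rw [this, hJeq]
      simpa using Ideal.map_quotient_self J
    simp only [hP] at hne
    push_neg at hne
    obtain ⟨γ, hγmem, hγne⟩ := hne
    refine ⟨γ, ?_, ?_⟩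
    · intro h
      exact hγne (hJP γ ((mem_iff J _).mp h))
    · rw [gl_map_eq_one_iff]
      intro i j
      have := hγmem i j
      simp only [hJ', Ideal.mem_comap] at this
      rw [RingHom.comp_apply]
      exact Ideal.Quotient.eq_zero_iff_mem.mpr this
end

section
/- Let G₁, G₂ be groups sharing a common subgroup A, with subgroups G₁' ⊆ G₁, G₂' ⊆ G₂ and A' ⊆ A satisfying G₁' ∩ A = G₂' ∩ A = A'. Then the natural homomorphism from the amalgamated product G₁' *_{A'} G₂' to G₁ *_A G₂ is injective. -/
open Monoid

set_option maxHeartbeats 2000000 in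
/-- Given an amalgamated product `G₁ *_A G₂` (formalized as the pushout of an
injective family `φ i : A →* G i`, `i : Bool`), subgroups `G' i ≤ G i` and `A' ≤ A`
satisfying `G' i ∩ A = A'` for both `i`, the natural homomorphism
`G'₁ *_{A'} G'₂ → G₁ *_A G₂` is injective. -/
theorem amalgamated_product_of_subgroups_injective
    {G : Bool → Type*} [∀ i, Group (G i)] {A : Type*} [Group A]
    (φ : ∀ i, A →* G i) (hφ : ∀ i, Function.Injective (φ i))
    (G' : ∀ i, Subgroup (G i)) (A' : Subgroup A)
    (hA' : ∀ i, (G' i).comap (φ i) = A')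
    (hsub : ∀ i, ∀ a : A, a ∈ A' → φ i a ∈ G' i) :
    Function.Injective
      (PushoutI.lift
        (φ := fun i => ((φ i).comp A'.subtype).codRestrict (G' i)
          (fun a => hsub i a a.2))
        (fun i => (PushoutI.of (φ := φ) i).comp (G' i).subtype)
        ((PushoutI.base φ).comp A'.subtype)
        (fun i => by
          ext a
          exact PushoutI.of_apply_eq_base φ i a.1)) := by
    classical
  set ψ : ∀ i, (A' : Type _) →* (G' i : Type _) :=
    fun i => ((φ i).comp A'.subtype).codRestrict (G' i) (fun a => hsub i a a.2) with hψ
  have hψinj : ∀ i, Function.Injective (ψ i) := by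
    intro i a b hab
    have : φ i a = φ i b := congrArg Subtype.val hab
    exact Subtype.ext (hφ i this)
  set f := (PushoutI.lift
        (φ := ψ)
        (fun i => (PushoutI.of (φ := φ) i).comp (G' i).subtype)
        ((PushoutI.base φ).comp A'.subtype)
        (fun i => by
          ext a
          exact PushoutI.of_apply_eq_base φ i a.1)) with hf
  rw [injective_iff_map_eq_one]
  intro x hx
  obtain ⟨d⟩ := PushoutI.NormalWord.transversal_nonempty _ hψinj
  have hxprod : (PushoutI.NormalWord.equiv (d := d) x).prod = x :=
    PushoutI.NormalWord.equiv.symm_apply_apply x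
  set w := PushoutI.NormalWord.equiv (d := d) x with hw
  -- letters of w are not in the range of ψ
  have hred : ∀ l ∈ w.toList, (l.2 : G' l.1) ∉ (ψ l.1).range := by
    intro l hl hmem
    have h1 : (l.2 : G' l.1) ∈ d.set l.1 := w.normalized _ _ hl
    have hne : (l.2 : G' l.1) ≠ 1 := w.toWord.ne_one _ hl
    have := Subgroup.IsComplement.equiv_snd_eq_self_iff_mem (d.compl l.1)
      (Subgroup.one_mem _) (g := l.2)
    -- l.2 = 1 * l.2 and l.2 = l.2 * 1 both decompositions
    have huniq := (d.compl l.1).existsUnique (l.2 : G' l.1)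
    obtain ⟨p, hp, hup⟩ := huniq
    have h1d : ((⟨(1 : G' l.1), Subgroup.one_mem _⟩, ⟨(l.2 : G' l.1), h1⟩) :
        (ψ l.1).range × d.set l.1) = p := hup _ (by simp)
    have h2d : ((⟨(l.2 : G' l.1), hmem⟩, ⟨(1 : G' l.1), d.one_mem _⟩) :
        (ψ l.1).range × d.set l.1) = p := hup _ (by simp)
    rw [← h2d] at h1d
    have : (l.2 : G' l.1) = 1 := by
      have := congrArg (fun q => (q.1 : G' l.1)) h1d
      simpa using this.symm
    exact hne this
  -- build the word in the big coproduct
  set L : List (Σ i, G i) := w.toList.map (fun l => ⟨l.1, (l.2 : G l.1)⟩) with hL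
  have hLne : ∀ l ∈ L, l.2 ≠ (1 : G l.1) := by
    intro l hl
    simp only [hL, List.mem_map] at hl
    obtain ⟨l', hl', rfl⟩ := hl
    intro h
    exact w.toWord.ne_one _ hl' (Subtype.ext h)
  have hLchain : L.Chain' fun l l' => l.1 ≠ l'.1 := by
    have := w.toWord.chain_ne
    rw [hL]; refine (List.isChain_map _).2 ?_
    exact this
  set W : Monoid.CoprodI.Word G := ⟨L, hLne, hLchain⟩ with hW
  have hWred : PushoutI.Reduced φ W := by
    intro l hl
    simp only [hW, hL, List.mem_map] at hl
    obtain ⟨l', hl', rfl⟩ := hl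
    rintro ⟨a, ha⟩
    have haA : a ∈ A' := by
      rw [← hA' l'.1]
      exact Subgroup.mem_comap.2 (ha ▸ (l'.2 : G' l'.1).2)
    exact hred l' hl' ⟨⟨a, haA⟩, Subtype.ext ha⟩
  -- compute f x
  have hfbase : ∀ a : A', f (PushoutI.base ψ a) = PushoutI.base φ (a : A) :=
    fun a => PushoutI.lift_base _ _ _ a
  have hfof : ∀ i (g : G' i), f (PushoutI.of (φ := ψ) i g) = PushoutI.of (φ := φ) i (g : G i) :=
    by intro i g; rw [hf, PushoutI.lift_of]; rfl
  have hfx : f x = PushoutI.base φ (w.head : A) * PushoutI.ofCoprodI W.prod := by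
    rw [← hxprod]
    show f w.prod = _
    rw [PushoutI.NormalWord.prod, map_mul, hfbase]
    congr 1
    show (f.comp PushoutI.ofCoprodI) _ = PushoutI.ofCoprodI _
    rw [Monoid.CoprodI.Word.prod, Monoid.CoprodI.Word.prod, map_list_prod, map_list_prod, hW]
    simp only [hL, List.map_map]
    congr 1
  rw [hx] at hfx
  have hmem : PushoutI.ofCoprodI W.prod ∈ (PushoutI.base φ).range := by
    refine ⟨(w.head : A)⁻¹, ?_⟩
    rw [map_inv]
    exact (eq_inv_of_mul_eq_one_right hfx.symm).symm
  have hWempty := PushoutI.Reduced.eq_empty_of_mem_range hφ hWred hmem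
  have hLnil : L = [] := congrArg Monoid.CoprodI.Word.toList hWempty
  have hwnil : w.toList = [] := by
    rw [hL] at hLnil
    exact List.map_eq_nil_iff.1 hLnil
  have hWprod : W.prod = 1 := by rw [hWempty]; simp
  rw [hWprod, map_one, mul_one] at hfx
  have hhead : (w.head : A) = 1 := PushoutI.base_injective hφ (by rw [← hfx]; simp)
  have hhead' : w.head = 1 := Subtype.ext hhead
  rw [← hxprod]
  rw [PushoutI.NormalWord.prod, hhead', map_one, one_mul]
  have : w.toWord.prod = 1 := by
    rw [Monoid.CoprodI.Word.prod, hwnil]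
    simp
  rw [this, map_one]
end

section
/- Let Γ = G₁ *_A G₂ be an amalgamated product with G₁ ≠ A and G₂ ≠ A, and let Γ' ⊆ Γ be a subgroup such that Γ'·A = Γ. Then Γ' is the amalgamated product (G₁ ∩ Γ') *_{A ∩ Γ'} (G₂ ∩ Γ'), i.e. the natural map (G₁ ∩ Γ') *_{A ∩ Γ'} (G₂ ∩ Γ') → Γ' is an isomorphism. -/
open Monoid

section

variable {G : Bool → Type*} [∀ i, Group (G i)] {A : Type*} [Group A]
  (φ : ∀ i, A →* G i) (Γ' : Subgroup (PushoutI φ))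

/-- The subgroup `A ∩ Γ'` of `A`. -/
def amalgA' : Subgroup A := Γ'.comap (PushoutI.base φ)

/-- The subgroup `G i ∩ Γ'` of `G i`. -/
def amalgG' (i : Bool) : Subgroup (G i) := Γ'.comap (PushoutI.of i)

/-- The family of inclusions `A ∩ Γ' →* G i ∩ Γ'`. -/
def amalgφ' (i : Bool) : amalgA' φ Γ' →* amalgG' φ Γ' i :=
  ((φ i).comp (amalgA' φ Γ').subtype).codRestrict (amalgG' φ Γ' i)
    (fun a => by
      have h := a.2
      simp only [amalgA', Subgroup.mem_comap] at h
      simp only [amalgG', Subgroup.mem_comap, MonoidHom.comp_apply,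
        Subgroup.coe_subtype]
      rw [PushoutI.of_apply_eq_base]
      exact h)

/-- The natural homomorphism `(G₁ ∩ Γ') *_{A ∩ Γ'} (G₂ ∩ Γ') → G₁ *_A G₂`. -/
def amalgΨ : PushoutI (amalgφ' φ Γ') →* PushoutI φ :=
  PushoutI.lift
    (fun i => (PushoutI.of (φ := φ) i).comp (amalgG' φ Γ' i).subtype)
    ((PushoutI.base φ).comp (amalgA' φ Γ').subtype)
    (fun i => by
      ext a
      exact PushoutI.of_apply_eq_base φ i a.1)

private lemma amalg_not_mem_range_of_mem_set {ι : Type*} {G : ι → Type*} [∀ i, Group (G i)]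
    {H : Type*} [Group H] {φ : ∀ i, H →* G i} (d : Monoid.PushoutI.NormalWord.Transversal φ)
    {i : ι} {g : G i} (hset : g ∈ d.set i) (hne : g ≠ 1) : g ∉ (φ i).range := by
  intro hr
  apply hne
  have := (d.compl i).1
    (a₁ := (⟨⟨g, hr⟩, ⟨1, d.one_mem i⟩⟩ : ((φ i).range : Set (G i)) × d.set i))
    (a₂ := (⟨⟨1, one_mem _⟩, ⟨g, hset⟩⟩ : ((φ i).range : Set (G i)) × d.set i))
    (by simp)
  exact (congrArg (fun p => (p.2.1 : G i)) this).symm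

lemma amalg_mem_range_of (i : Bool) (g : G i) (h : PushoutI.of (φ := φ) i g ∈ Γ') :
    PushoutI.of (φ := φ) i g ∈ (amalgΨ φ Γ').range :=
  ⟨PushoutI.of (φ := amalgφ' φ Γ') i ⟨g, h⟩, by simp [amalgΨ]⟩

lemma amalg_mem_range_base (a : A) (h : PushoutI.base φ a ∈ Γ') :
    PushoutI.base φ a ∈ (amalgΨ φ Γ').range :=
  ⟨PushoutI.base (amalgφ' φ Γ') ⟨a, h⟩, by simp [amalgΨ]⟩

lemma amalg_range_le : (amalgΨ φ Γ').range ≤ Γ' := by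
  rintro x ⟨y, rfl⟩
  induction y using PushoutI.induction_on with
  | of i g =>
    have : amalgΨ φ Γ' (PushoutI.of i g) = PushoutI.of i (g : G i) := by simp [amalgΨ]
    rw [this]; exact g.2
  | base a =>
    have : amalgΨ φ Γ' (PushoutI.base (amalgφ' φ Γ') a) = PushoutI.base φ (a : A) := by
      simp [amalgΨ]
    rw [this]; exact a.2
  | mul x y hx hy => rw [map_mul]; exact mul_mem hx hy

lemma amalg_aux
    (hΓ' : ∀ γ : PushoutI φ, ∃ γ' ∈ Γ', ∃ a : A, γ = γ' * PushoutI.base φ a)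
    (x : PushoutI φ) :
    ∀ c a : A, PushoutI.base φ c * x * PushoutI.base φ a ∈ Γ' →
      PushoutI.base φ c * x * PushoutI.base φ a ∈ (amalgΨ φ Γ').range := by
  induction x using PushoutI.induction_on with
  | of i g =>
    intro c a h
    have heq : PushoutI.base φ c * PushoutI.of i g * PushoutI.base φ a
        = PushoutI.of i (φ i c * g * φ i a) := by
      rw [map_mul, map_mul, PushoutI.of_apply_eq_base, PushoutI.of_apply_eq_base]
    rw [heq] at h ⊢
    exact amalg_mem_range_of φ Γ' _ _ h
  | base b =>
    intro c a h
    have heq : PushoutI.base φ c * PushoutI.base φ b * PushoutI.base φ a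
        = PushoutI.base φ (c * b * a) := by simp [map_mul]
    rw [heq] at h ⊢
    exact amalg_mem_range_base φ Γ' _ h
  | mul x y ihx ihy =>
    intro c a h
    obtain ⟨ε, hε, b, hb⟩ := hΓ' (PushoutI.base φ c * x)
    have h1 : PushoutI.base φ c * x * PushoutI.base φ b⁻¹ = ε := by
      rw [hb, map_inv, mul_inv_cancel_right]
    have h1' : PushoutI.base φ c * x * PushoutI.base φ b⁻¹ ∈ Γ' := h1 ▸ hε
    have r1 := ihx c b⁻¹ h1'
    have h2 : PushoutI.base φ b * y * PushoutI.base φ a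
        = (PushoutI.base φ c * x * PushoutI.base φ b⁻¹)⁻¹
          * (PushoutI.base φ c * (x * y) * PushoutI.base φ a) := by
      rw [map_inv]; group
    have h2' : PushoutI.base φ b * y * PushoutI.base φ a ∈ Γ' := by
      rw [h2]; exact mul_mem (inv_mem h1') h
    have r2 := ihy b a h2'
    have hfin : PushoutI.base φ c * (x * y) * PushoutI.base φ a
        = (PushoutI.base φ c * x * PushoutI.base φ b⁻¹)
          * (PushoutI.base φ b * y * PushoutI.base φ a) := by
      rw [map_inv]; group
    rw [hfin]
    exact mul_mem r1 r2

lemma amalg_range_eq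
    (hΓ' : ∀ γ : PushoutI φ, ∃ γ' ∈ Γ', ∃ a : A, γ = γ' * PushoutI.base φ a) :
    (amalgΨ φ Γ').range = Γ' := by
  refine le_antisymm (amalg_range_le φ Γ') (fun γ hγ => ?_)
  have := amalg_aux φ Γ' hΓ' γ 1 1 (by simpa using hγ)
  simpa using this

lemma amalg_injective (hφ : ∀ i, Function.Injective (φ i)) :
    Function.Injective (amalgΨ φ Γ') := by
  classical
  have hinj' : ∀ i, Function.Injective (amalgφ' φ Γ' i) := by
    intro i x y hxy
    have hv : φ i (x : A) = φ i (y : A) := congrArg Subtype.val hxy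
    exact Subtype.ext (hφ i hv)
  obtain ⟨d⟩ := Monoid.PushoutI.NormalWord.transversal_nonempty (amalgφ' φ Γ') hinj'
  rw [injective_iff_map_eq_one]
  intro x hx
  set w : PushoutI.NormalWord d := x • PushoutI.NormalWord.empty with hwdef
  have hw : w.prod = x := by
    rw [hwdef, PushoutI.NormalWord.prod_smul, PushoutI.NormalWord.prod_empty, mul_one]
  -- the mapped word
  set f : (Σ i : Bool, amalgG' φ Γ' i) → (Σ i : Bool, G i) :=
    fun l => ⟨l.1, (l.2 : G l.1)⟩ with hfdef
  have hne_one : ∀ l ∈ w.toList.map f, Sigma.snd l ≠ 1 := by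
    intro l hl
    obtain ⟨l', hl', rfl⟩ := List.mem_map.mp hl
    have hne := w.toWord.ne_one l' hl'
    intro h
    exact hne (Subtype.ext h)
  have hchain : List.Chain' (fun l l' => Sigma.fst l ≠ Sigma.fst l') (w.toList.map f) :=
    (List.isChain_map f).mpr w.toWord.chain_ne
  set W : CoprodI.Word G := ⟨w.toList.map f, hne_one, hchain⟩ with hWdef
  have hred : PushoutI.Reduced φ W := by
    intro l hl
    obtain ⟨l', hl', rfl⟩ := List.mem_map.mp hl
    intro hr
    obtain ⟨a, ha⟩ := hr
    have hmem : PushoutI.of (φ := φ) l'.1 (l'.2 : G l'.1) ∈ Γ' := l'.2.2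
    have hbase : PushoutI.base φ a ∈ Γ' := by
      rw [← PushoutI.of_apply_eq_base φ l'.1 a, ha]
      exact hmem
    have hrange : l'.2 ∈ (amalgφ' φ Γ' l'.1).range := ⟨⟨a, hbase⟩, Subtype.ext ha⟩
    exact amalg_not_mem_range_of_mem_set d
      (w.normalized l'.1 l'.2 hl') (w.toWord.ne_one l' hl') hrange
  have key : ∀ (L : List (Σ i : Bool, amalgG' φ Γ' i)),
      amalgΨ φ Γ' (PushoutI.ofCoprodI (L.map fun l => CoprodI.of l.2).prod)
        = PushoutI.ofCoprodI ((L.map f).map fun l => CoprodI.of l.2).prod := by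
    intro L
    induction L with
    | nil => simp
    | cons hd tl ih =>
      simp only [List.map_cons, List.prod_cons, map_mul, PushoutI.ofCoprodI_of, ih]
      congr 1
  have key2 : amalgΨ φ Γ' (PushoutI.ofCoprodI w.toWord.prod)
      = PushoutI.ofCoprodI W.prod := key w.toList
  have hbasecalc : amalgΨ φ Γ' (PushoutI.base (amalgφ' φ Γ') w.head)
      = PushoutI.base φ (w.head : A) := by simp [amalgΨ]
  have hprod : amalgΨ φ Γ' x
      = PushoutI.base φ (w.head : A) * PushoutI.ofCoprodI W.prod := by
    conv_lhs => rw [← hw]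
    rw [show w.prod = PushoutI.base (amalgφ' φ Γ') w.head
        * PushoutI.ofCoprodI w.toWord.prod from rfl,
      map_mul, hbasecalc, key2]
  have h1 : PushoutI.base φ (w.head : A) * PushoutI.ofCoprodI W.prod = 1 := by
    rw [← hprod]; exact hx
  have hmem : PushoutI.ofCoprodI W.prod ∈ (PushoutI.base φ).range :=
    ⟨(w.head : A)⁻¹, by rw [map_inv]; exact inv_eq_iff_mul_eq_one.mpr h1⟩
  have hW : W = CoprodI.Word.empty := hred.eq_empty_of_mem_range hφ hmem
  have hlist : w.toList = [] := by
    have h := congrArg CoprodI.Word.toList hW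
    rw [hWdef] at h
    simpa [CoprodI.Word.empty] using h
  have hx0 : x = PushoutI.base (amalgφ' φ Γ') w.head := by
    rw [← hw, PushoutI.NormalWord.prod]
    have hp : w.toWord.prod = 1 := by
      rw [show w.toWord.prod = (w.toList.map fun l => CoprodI.of l.2).prod from rfl, hlist]
      simp
    rw [hp, map_one, mul_one]
  have hWprod : PushoutI.ofCoprodI (φ := φ) W.prod = 1 := by
    rw [hW, CoprodI.Word.prod_empty, map_one]
  have hheadbase : PushoutI.base φ (w.head : A) = 1 := by
    rw [hWprod, mul_one] at h1; exact h1
  have hhead : (w.head : A) = 1 := by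
    apply PushoutI.base_injective hφ
    rw [hheadbase, map_one]
  rw [hx0, show w.head = 1 from Subtype.ext hhead, map_one]

/-- Let `Γ = G₁ *_A G₂` be an amalgamated product with `G i ≠ A`, and
`Γ' ≤ Γ` a subgroup with `Γ'·A = Γ`.  Then the natural map
`(G₁ ∩ Γ') *_{A ∩ Γ'} (G₂ ∩ Γ') → Γ` is injective with range `Γ'`, i.e. `Γ'` is the
amalgamated product of the intersections. -/
theorem subgroup_of_amalgam_is_amalgam
    (hφ : ∀ i, Function.Injective (φ i))
    (hnd : ∀ i, ¬ Function.Surjective (φ i))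
    (hΓ' : ∀ γ : PushoutI φ, ∃ γ' ∈ Γ', ∃ a : A, γ = γ' * PushoutI.base φ a) :
    Function.Injective (amalgΨ φ Γ') ∧ (amalgΨ φ Γ').range = Γ' := by
  exact ⟨amalg_injective φ Γ' hφ, amalg_range_eq φ Γ' hΓ'⟩

end
end

section
/- Let Γ = G₁ *_A G₂ be a nondegenerate, nondihedral amalgamated product such that the core of A in Γ is trivial. Then for every element g ≠ 1 of Γ, there exist γ₁, γ₂ ∈ Γ such that γ₁ g γ₁⁻¹ has a reduced expression beginning and ending with letters from G₁ \ A, and γ₂ g γ₂⁻¹ has a reduced expression beginning and ending with letters from G₂ \ A. -/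
open Monoid

section

variable {G : Bool → Type*} [∀ i, Group (G i)] {A : Type*} [Group A]
  (φ : ∀ i, A →* G i)

/-- `γ` has a reduced expression `g₁ ⋯ gₙ` (n ≥ 1, letters in the factors `G (ε j)`,
consecutive indices distinct, no letter in the image of `A`) beginning and ending with a
letter from `G i \ A`. -/
def BeginsEndsWith (i : Bool) (γ : PushoutI φ) : Prop :=
  ∃ (n : ℕ) (hn : 0 < n) (ε : Fin n → Bool) (g : ∀ j, G (ε j)),
    ε ⟨0, hn⟩ = i ∧ ε ⟨n - 1, by omega⟩ = i ∧
    (∀ (j : ℕ) (h : j + 1 < n), ε ⟨j, by omega⟩ ≠ ε ⟨j + 1, h⟩) ∧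
    (∀ j, g j ∉ (φ (ε j)).range) ∧
    γ = (List.ofFn (fun j => PushoutI.of (φ := φ) (ε j) (g j))).prod

/-- The product in the pushout of a list of letters. -/
private def prodL (L : List (Σ i : Bool, G i)) : PushoutI φ :=
  (L.map fun p => PushoutI.of (φ := φ) p.1 p.2).prod

/-- A list of letters is reduced. -/
private def RedL (L : List (Σ i : Bool, G i)) : Prop :=
  (L.map Sigma.fst).Chain' (· ≠ ·) ∧ ∀ p ∈ L, p.2 ∉ (φ (p.1)).range

/-! ### small list helpers -/

private theorem getLast?_concat' {α : Type*} (l : List α) (a : α) :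
    (l ++ [a]).getLast? = some a := by
  rw [List.getLast?_append_of_ne_nil _ (by simp)]; rfl

private theorem getLast_of_getLast? {α : Type*} {l : List α} {a : α} (h : l ≠ [])
    (h2 : l.getLast? = some a) : l.getLast h = a := by
  rw [List.getLast?_eq_getLast h] at h2; exact Option.some_inj.1 h2

private theorem lastFst {l : List (Σ i : Bool, G i)} {a : Σ i : Bool, G i} (h : l ≠ [])
    (h2 : l.getLast? = some a) : (l.getLast h).1 = a.1 := by
  rw [getLast_of_getLast? h h2]

private theorem chainB {x a c : Bool} {l : List Bool}
    (h : List.Chain' (· ≠ ·) (x :: (l ++ [a]))) (hac : a ≠ c) :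
    List.Chain' (· ≠ ·) (x :: (l ++ [a, c]))  := by
  have := h.append (List.isChain_singleton c) ?_
  · simpa [List.Chain'] using this
  · intro u hu v hv
    simp only [List.head?_cons, Option.mem_def, Option.some.injEq] at hv
    subst hv
    rw [show (x :: (l ++ [a])).getLast? = some a by
      rw [← List.cons_append]; exact getLast?_concat' _ _] at hu
    simp only [Option.mem_def, Option.some.injEq] at hu
    subst hu; exact hac

/-! ### existence of reduced expressions -/

private theorem exists_redL (hφ : ∀ i, Function.Injective (φ i))
    {g : PushoutI φ} (hg : g ∉ (PushoutI.base φ).range) :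
    ∃ L : List (Σ i : Bool, G i), L ≠ [] ∧ RedL φ L ∧ prodL φ L = g := by
  classical
  obtain ⟨d⟩ := PushoutI.NormalWord.transversal_nonempty φ hφ
  set w : PushoutI.NormalWord d := PushoutI.NormalWord.equiv g with hw
  have hprod : w.prod = g := by
    rw [hw]
    show (g • PushoutI.NormalWord.empty).prod = g
    simp [PushoutI.NormalWord.prod_smul]
  have hsplit : g = PushoutI.base φ w.head * prodL φ w.toList := by
    rw [← hprod]
    show PushoutI.base φ w.head * PushoutI.ofCoprodI w.toWord.prod = _
    congr 1
    rw [CoprodI.Word.prod, MonoidHom.map_list_prod, List.map_map, prodL]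
    congr 1
  have hnr : ∀ p ∈ w.toList, p.2 ∉ (φ p.1).range := by
    intro p hp hpr
    have hset : p.2 ∈ d.set p.1 := w.normalized p.1 p.2 hp
    have hone : p.2 = 1 := by
      have hinj := (d.compl p.1).1
      have := hinj (a₁ := (⟨p.2, hpr⟩, ⟨1, d.one_mem p.1⟩))
        (a₂ := (⟨1, Subgroup.one_mem _⟩, ⟨p.2, hset⟩)) (by simp)
      exact congrArg (fun q => (q.1 : G p.1)) this
    exact w.toWord.ne_one p hp hone
  have hchain := w.toWord.chain_ne
  obtain (hnil | ⟨p, rest, hcons⟩) : w.toList = [] ∨ ∃ p rest, w.toList = p :: rest := by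
    cases h : w.toList with
    | nil => exact Or.inl rfl
    | cons p rest => exact Or.inr ⟨p, rest, rfl⟩
  · exfalso
    apply hg
    rw [hsplit, hnil]
    simp [prodL]
  · refine ⟨⟨p.1, φ p.1 w.head * p.2⟩ :: rest, by simp, ⟨?_, ?_⟩, ?_⟩
    · have : ((⟨p.1, φ p.1 w.head * p.2⟩ :: rest).map Sigma.fst : List Bool)
          = w.toList.map Sigma.fst := by rw [hcons]; rfl
      rw [this]
      exact (List.isChain_map Sigma.fst).2 hchain
    · intro q hq
      rcases List.mem_cons.1 hq with rfl | hq
      · intro ⟨a, ha⟩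
        exact hnr p (hcons ▸ List.mem_cons_self)
          ⟨w.head⁻¹ * a, by simp only [map_mul, map_inv]; rw [ha]; group⟩
      · exact hnr q (hcons ▸ List.mem_cons_of_mem _ hq)
    · rw [hsplit, hcons]
      show prodL φ (⟨p.1, _⟩ :: rest) = _
      rw [prodL, prodL, List.map_cons, List.map_cons, List.prod_cons, List.prod_cons, ← mul_assoc]
      congr 1
      show PushoutI.of (φ := φ) p.1 (φ p.1 w.head * p.2) = _
      rw [map_mul, PushoutI.of_apply_eq_base]

/-! ### the dihedral obstruction -/

private theorem not_both_two (hφ : ∀ i, Function.Injective (φ i))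
    (hnd : ∀ i, ¬ Function.Surjective (φ i))
    (hnondihedral : ¬ ((∀ i, Nat.card (G i) = 2) ∧ Subsingleton A))
    (hcore : ((PushoutI.base φ).range).normalCore = ⊥) :
    ¬ (∀ b : Bool, ∀ x y : G b, x ∉ (φ b).range → y ∉ (φ b).range →
        x * y⁻¹ ∈ (φ b).range) := by
  intro h2
  have hnorm : ∀ (b : Bool) (x : G b) (a : A), x * φ b a * x⁻¹ ∈ (φ b).range := by
    intro b x a
    by_cases hx : x ∈ (φ b).range
    · obtain ⟨u, rfl⟩ := hx
      exact ⟨u * a * u⁻¹, by simp [map_mul]⟩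
    · have hxa : x * φ b a ∉ (φ b).range := by
        intro ⟨u, hu⟩
        exact hx ⟨u * a⁻¹, by rw [map_mul, hu, map_inv]; group⟩
      simpa [mul_assoc] using h2 b (x * φ b a) x hxa hx
  have hN : ((PushoutI.base φ).range).Normal := by
    constructor
    intro n hn u
    revert n
    induction u using PushoutI.induction_on with
    | of i x =>
      rintro n ⟨a, rfl⟩
      obtain ⟨a', ha'⟩ := hnorm i x a
      refine ⟨a', ?_⟩
      rw [← PushoutI.of_apply_eq_base φ i, ha', map_mul, map_mul, map_inv,
        PushoutI.of_apply_eq_base φ i]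
    | base h =>
      rintro n ⟨a, rfl⟩
      exact ⟨h * a * h⁻¹, by simp [map_mul]⟩
    | mul x y hx hy =>
      intro n hn
      have := hx _ (hy n hn)
      simpa [mul_assoc] using this
  have hbot : ((PushoutI.base φ).range) = ⊥ := by
    rw [← hcore, Subgroup.normalCore_eq_self]
  have hsub : Subsingleton A := by
    constructor
    intro a b
    apply PushoutI.base_injective hφ
    have ha : PushoutI.base φ a ∈ ((PushoutI.base φ).range) := ⟨a, rfl⟩
    have hb : PushoutI.base φ b ∈ ((PushoutI.base φ).range) := ⟨b, rfl⟩
    rw [hbot, Subgroup.mem_bot] at ha hb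
    rw [ha, hb]
  have hrange : ∀ (b : Bool) (x : G b), x ∈ (φ b).range ↔ x = 1 := by
    intro b x
    constructor
    · rintro ⟨a, rfl⟩
      rw [Subsingleton.elim a 1, map_one]
    · rintro rfl; exact Subgroup.one_mem _
  apply hnondihedral
  refine ⟨fun b => ?_, hsub⟩
  obtain ⟨x, hx⟩ : ∃ x : G b, x ∉ (φ b).range := by
    by_contra hc
    push_neg at hc
    exact hnd b fun y => ⟨1, by rw [map_one, (hrange b y).1 (hc y)]⟩
  rw [Nat.card_eq_two_iff' 1]
  refine ⟨x, fun hx1 => hx ((hrange b x).2 hx1), ?_⟩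
  · intro y hy
    have hyr : y ∉ (φ b).range := fun hr => hy ((hrange b y).1 hr)
    have h3 := (hrange b _).1 (h2 b y x hyr hx)
    have : y * x⁻¹ * x = 1 * x := by rw [h3]
    simpa using this

private theorem exists_not_range (hnd : ∀ i, ¬ Function.Surjective (φ i)) (i : Bool) :
    ∃ t : G i, t ∉ (φ i).range := by
  by_contra h
  push_neg at h
  exact hnd i (fun y => h y)

/-! ### the corner construction for cyclically reduced words of length ≥ 2 -/

private theorem corner
    (hnd : ∀ i, ¬ Function.Surjective (φ i))
    (h2 : ¬ (∀ b : Bool, ∀ x y : G b, x ∉ (φ b).range → y ∉ (φ b).range →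
      x * y⁻¹ ∈ (φ b).range))
    (i : Bool) (g₁ : G (!i)) (gn : G i) (M : List (Σ i : Bool, G i))
    (hr : RedL φ (⟨!i, g₁⟩ :: M ++ [⟨i, gn⟩])) :
    ∃ (γ : PushoutI φ) (L' : List (Σ i : Bool, G i)) (hne' : L' ≠ []),
      RedL φ L' ∧ (L'.head hne').1 = i ∧ (L'.getLast hne').1 = i ∧
      γ * prodL φ (⟨!i, g₁⟩ :: M ++ [⟨i, gn⟩]) * γ⁻¹ = prodL φ L' := by
  classical
  obtain ⟨hchain, hmem⟩ := hr
  have hg₁ : g₁ ∉ (φ (!i)).range := hmem ⟨!i, g₁⟩ (by simp)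
  have hgn : gn ∉ (φ i).range := hmem ⟨i, gn⟩ (by simp)
  have hchain' : List.Chain' (· ≠ ·) ((!i) :: (M.map Sigma.fst ++ [i])) := by
    simpa using hchain
  by_cases hY : ∃ y : G (!i), y ∉ (φ (!i)).range ∧ y * g₁ ∉ (φ (!i)).range
  · obtain ⟨y, hy, hyg⟩ := hY
    obtain ⟨t, ht⟩ := exists_not_range φ hnd i
    refine ⟨PushoutI.of (φ := φ) i t * PushoutI.of (φ := φ) (!i) y,
      ⟨i, t⟩ :: (⟨!i, y * g₁⟩ :: M ++ [⟨i, gn⟩, ⟨!i, y⁻¹⟩, ⟨i, t⁻¹⟩]),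
      by simp, ⟨?_, ?_⟩, rfl, ?_, ?_⟩
    · -- chain condition
      have c1 : List.Chain' (· ≠ ·) ((!i) :: (M.map Sigma.fst ++ [i, !i])) :=
        chainB hchain' (by simp)
      have c1' : List.Chain' (· ≠ ·) ((!i) :: ((M.map Sigma.fst ++ [i]) ++ [!i])) := by
        simpa using c1
      have c2 : List.Chain' (· ≠ ·) ((!i) :: ((M.map Sigma.fst ++ [i]) ++ [!i, i])) :=
        chainB c1' (by simp)
      show List.Chain' _ _
      have hmap : ((⟨i, t⟩ :: (⟨!i, y * g₁⟩ :: M ++ [⟨i, gn⟩, ⟨!i, y⁻¹⟩, ⟨i, t⁻¹⟩])).map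
          Sigma.fst : List Bool) = i :: (!i) :: (M.map Sigma.fst ++ [i, !i, i]) := by simp
      rw [hmap]
      exact List.isChain_cons_cons.2 ⟨by simp, by simpa [List.Chain'] using c2⟩
    · -- membership condition
      intro p hp
      simp only [List.cons_append, List.mem_cons, List.mem_append, List.mem_singleton, List.not_mem_nil, or_false, false_or] at hp
      rcases hp with rfl | rfl | hp | rfl | rfl | rfl
      · exact ht
      · exact hyg
      · exact hmem p (by simp [hp])
      · exact hgn
      · intro h; exact hy ((Subgroup.inv_mem_iff _).1 h)
      · intro h; exact ht ((Subgroup.inv_mem_iff _).1 h)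
    · -- getLast
      have h? : (⟨i, t⟩ :: (⟨!i, y * g₁⟩ :: M ++ [⟨i, gn⟩, ⟨!i, y⁻¹⟩, ⟨i, t⁻¹⟩])
            : List (Σ i : Bool, G i)).getLast? = some ⟨i, t⁻¹⟩ := by
        rw [show (⟨i, t⟩ :: (⟨!i, y * g₁⟩ :: M ++ [⟨i, gn⟩, ⟨!i, y⁻¹⟩, ⟨i, t⁻¹⟩])
              : List (Σ i : Bool, G i))
            = (⟨i, t⟩ :: ⟨!i, y * g₁⟩ :: M ++ [⟨i, gn⟩, ⟨!i, y⁻¹⟩]) ++ [⟨i, t⁻¹⟩] by simp]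
        exact getLast?_concat' _ _
      exact lastFst _ h?
    · -- the product identity
      simp [prodL, map_mul, map_inv, mul_assoc]
  · push_neg at hY
    by_cases hX : ∃ x : G i, x ∉ (φ i).range ∧ gn * x⁻¹ ∉ (φ i).range
    · obtain ⟨x, hx, hgx⟩ := hX
      refine ⟨PushoutI.of (φ := φ) i x,
        ⟨i, x⟩ :: (⟨!i, g₁⟩ :: M ++ [⟨i, gn * x⁻¹⟩]),
        by simp, ⟨?_, ?_⟩, rfl, ?_, ?_⟩
      · show List.Chain' _ _
        have hmap : ((⟨i, x⟩ :: (⟨!i, g₁⟩ :: M ++ [⟨i, gn * x⁻¹⟩])).map Sigma.fst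
            : List Bool) = i :: (!i) :: (M.map Sigma.fst ++ [i]) := by simp
        rw [hmap]
        exact List.isChain_cons_cons.2 ⟨by simp, hchain'⟩
      · intro p hp
        simp only [List.cons_append, List.mem_cons, List.mem_append, List.mem_singleton, List.not_mem_nil, or_false, false_or] at hp
        rcases hp with rfl | rfl | hp | rfl
        · exact hx
        · exact hg₁
        · exact hmem p (by simp [hp])
        · exact hgx
      · have h? : (⟨i, x⟩ :: (⟨!i, g₁⟩ :: M ++ [⟨i, gn * x⁻¹⟩])
            : List (Σ i : Bool, G i)).getLast? = some ⟨i, gn * x⁻¹⟩ := by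
          rw [show (⟨i, x⟩ :: (⟨!i, g₁⟩ :: M ++ [⟨i, gn * x⁻¹⟩]) : List (Σ i : Bool, G i))
              = (⟨i, x⟩ :: ⟨!i, g₁⟩ :: M) ++ [⟨i, gn * x⁻¹⟩] by simp]
          exact getLast?_concat' _ _
        exact lastFst _ h?
      · simp [prodL, map_mul, map_inv, mul_assoc]
    · exfalso
      apply h2
      push_neg at hX
      have twoN : ∀ u v : G (!i), u ∉ (φ (!i)).range → v ∉ (φ (!i)).range →
          u * v⁻¹ ∈ (φ (!i)).range := by
        intro u v hu hv
        have h1 := hY u hu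
        have h2' := hY v hv
        have := mul_mem h1 (inv_mem h2')
        simpa [mul_inv_rev, mul_assoc] using this
      have twoI : ∀ u v : G i, u ∉ (φ i).range → v ∉ (φ i).range →
          u * v⁻¹ ∈ (φ i).range := by
        intro u v hu hv
        have h1 := hX u hu
        have h2' := hX v hv
        have := mul_mem (inv_mem h1) h2'
        simpa [mul_inv_rev, mul_assoc] using this
      intro b
      have hb : b = i ∨ b = !i := by
        by_cases hbi : b = i
        · exact Or.inl hbi
        · exact Or.inr (Bool.eq_not_iff.2 hbi)
      rcases hb with rfl | rfl
      · exact twoI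
      · exact twoN

/-! ### the main induction -/

private theorem main_ind
    (hnd : ∀ i, ¬ Function.Surjective (φ i))
    (h2 : ¬ (∀ b : Bool, ∀ x y : G b, x ∉ (φ b).range → y ∉ (φ b).range →
      x * y⁻¹ ∈ (φ b).range)) :
    ∀ (n : ℕ) (L : List (Σ i : Bool, G i)) (hne : L ≠ []), RedL φ L → L.length ≤ n →
      ∀ i : Bool, ∃ (γ : PushoutI φ) (L' : List (Σ i : Bool, G i)) (hne' : L' ≠ []),
        RedL φ L' ∧ (L'.head hne').1 = i ∧ (L'.getLast hne').1 = i ∧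
        γ * prodL φ L * γ⁻¹ = prodL φ L' := by
  intro n
  induction n with
  | zero =>
    intro L hne hr hlen i
    exact absurd (List.length_pos_iff.2 hne) (by omega)
  | succ n ih =>
    rintro L hne hr hlen i
    rcases L with _ | ⟨⟨a1, a2⟩, T⟩
    · exact absurd rfl hne
    rcases T with _ | ⟨q, rest⟩
    · -- singleton case
      by_cases hai : a1 = i
      · subst hai
        exact ⟨1, [⟨a1, a2⟩], by simp, hr, rfl, rfl, by simp⟩
      · have hai' : a1 = !i := Bool.eq_not_iff.2 hai
        subst hai'
        obtain ⟨t, ht⟩ := exists_not_range φ hnd i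
        refine ⟨PushoutI.of (φ := φ) i t, [⟨i, t⟩, ⟨!i, a2⟩, ⟨i, t⁻¹⟩],
          by simp, ⟨?_, ?_⟩, rfl, ?_, ?_⟩
        · show List.Chain' _ _
          simp [List.Chain', List.isChain_cons_cons]
        · intro p hp
          simp only [List.mem_cons, List.mem_singleton, List.not_mem_nil, or_false, false_or] at hp
          rcases hp with rfl | rfl | rfl
          · exact ht
          · exact hr.2 ⟨!i, a2⟩ (by simp)
          · intro h; exact ht ((Subgroup.inv_mem_iff _).1 h)
        · rfl
        · simp [prodL, map_inv, mul_assoc]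
    · -- length at least two
      have hTne : (q :: rest) ≠ [] := by simp
      obtain ⟨M, b, hT⟩ : ∃ M bb, q :: rest = M ++ [bb] :=
        ⟨(q :: rest).dropLast, (q :: rest).getLast hTne,
          (List.dropLast_append_getLast hTne).symm⟩
      rw [hT] at hr hlen ⊢
      obtain ⟨b1, b2⟩ := b
      have hchainB : List.Chain' (· ≠ ·) (a1 :: (M.map Sigma.fst ++ [b1])) := by
        simpa using hr.1
      by_cases hab : a1 = b1
      · -- not cyclically reduced : cyclic reduction, then induction
        subst hab
        have hMne : M ≠ [] := by
          rintro rfl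
          simp [List.Chain', List.isChain_cons_cons] at hchainB
        by_cases hzx : b2 * a2 ∈ (φ a1).range
        · obtain ⟨h, hh⟩ := hzx
          obtain ⟨N, c, hM⟩ : ∃ N c, M = N ++ [c] :=
            ⟨M.dropLast, M.getLast hMne, (List.dropLast_append_getLast hMne).symm⟩
          subst hM
          have hne₂ : (N ++ [⟨c.1, c.2 * φ c.1 h⟩] : List (Σ i : Bool, G i)) ≠ [] := by simp
          have hred₂ : RedL φ (N ++ [⟨c.1, c.2 * φ c.1 h⟩]) := by
            constructor
            · have h3 := (List.isChain_append.1 hchainB.tail).1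
              simpa [List.Chain'] using h3
            · intro p hp
              simp only [List.mem_append, List.mem_singleton, List.mem_cons, List.not_mem_nil, or_false, false_or] at hp
              rcases hp with hp | rfl
              · exact hr.2 p (by simp [hp])
              · rintro ⟨v, hv⟩
                refine hr.2 c (by simp) ⟨v * h⁻¹, ?_⟩
                rw [map_mul, map_inv, hv]
                group
          have hlen₂ : (N ++ [⟨c.1, c.2 * φ c.1 h⟩] : List (Σ i : Bool, G i)).length ≤ n := by
            simp only [List.length_append, List.length_cons, List.length_nil] at hlen ⊢
            omega
          obtain ⟨γ', L', hne', hred', hh', hl', hp'⟩ := ih _ hne₂ hred₂ hlen₂ i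
          refine ⟨γ' * (PushoutI.of (φ := φ) a1 a2)⁻¹, L', hne', hred', hh', hl', ?_⟩
          have e1 : PushoutI.of (φ := φ) a1 b2 * PushoutI.of (φ := φ) a1 a2
              = PushoutI.base φ h := by
            rw [← map_mul, ← hh, PushoutI.of_apply_eq_base]
          have e2 : PushoutI.of (φ := φ) c.1 (c.2 * φ c.1 h)
              = PushoutI.of (φ := φ) c.1 c.2 * PushoutI.base φ h := by
            rw [map_mul, PushoutI.of_apply_eq_base]
          have hconj : (PushoutI.of (φ := φ) a1 a2)⁻¹ *
              prodL φ (⟨a1, a2⟩ :: ((N ++ [c]) ++ [⟨a1, b2⟩])) * PushoutI.of (φ := φ) a1 a2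
              = prodL φ (N ++ [⟨c.1, c.2 * φ c.1 h⟩]) := by
            calc (PushoutI.of (φ := φ) a1 a2)⁻¹ *
                prodL φ (⟨a1, a2⟩ :: ((N ++ [c]) ++ [⟨a1, b2⟩])) * PushoutI.of (φ := φ) a1 a2
                = prodL φ N * (PushoutI.of (φ := φ) c.1 c.2 *
                    (PushoutI.of (φ := φ) a1 b2 * PushoutI.of (φ := φ) a1 a2)) := by
                  simp [prodL, mul_assoc]
              _ = prodL φ N * (PushoutI.of (φ := φ) c.1 (c.2 * φ c.1 h)) := by
                  rw [e1, ← e2]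
              _ = prodL φ (N ++ [⟨c.1, c.2 * φ c.1 h⟩]) := by simp [prodL]
          calc γ' * (PushoutI.of (φ := φ) a1 a2)⁻¹ *
              prodL φ (⟨a1, a2⟩ :: ((N ++ [c]) ++ [⟨a1, b2⟩])) *
              (γ' * (PushoutI.of (φ := φ) a1 a2)⁻¹)⁻¹
              = γ' * ((PushoutI.of (φ := φ) a1 a2)⁻¹ *
                prodL φ (⟨a1, a2⟩ :: ((N ++ [c]) ++ [⟨a1, b2⟩])) *
                PushoutI.of (φ := φ) a1 a2) * γ'⁻¹ := by group
            _ = γ' * prodL φ (N ++ [⟨c.1, c.2 * φ c.1 h⟩]) * γ'⁻¹ := by rw [hconj]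
            _ = prodL φ L' := hp'
        · -- the merged letter is not in the base : length drops by one
          have hne₂ : (M ++ [⟨a1, b2 * a2⟩] : List (Σ i : Bool, G i)) ≠ [] := by simp
          have hred₂ : RedL φ (M ++ [⟨a1, b2 * a2⟩]) := by
            constructor
            · have h3 := hchainB.tail
              simpa [List.Chain'] using h3
            · intro p hp
              simp only [List.mem_append, List.mem_singleton, List.mem_cons, List.not_mem_nil, or_false, false_or] at hp
              rcases hp with hp | rfl
              · exact hr.2 p (by simp [hp])
              · exact hzx
          have hlen₂ : (M ++ [⟨a1, b2 * a2⟩] : List (Σ i : Bool, G i)).length ≤ n := by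
            simp only [List.length_append, List.length_cons, List.length_nil] at hlen ⊢
            omega
          obtain ⟨γ', L', hne', hred', hh', hl', hp'⟩ := ih _ hne₂ hred₂ hlen₂ i
          refine ⟨γ' * (PushoutI.of (φ := φ) a1 a2)⁻¹, L', hne', hred', hh', hl', ?_⟩
          have hconj : (PushoutI.of (φ := φ) a1 a2)⁻¹ *
              prodL φ (⟨a1, a2⟩ :: (M ++ [⟨a1, b2⟩])) * PushoutI.of (φ := φ) a1 a2
              = prodL φ (M ++ [⟨a1, b2 * a2⟩]) := by
            calc (PushoutI.of (φ := φ) a1 a2)⁻¹ *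
                prodL φ (⟨a1, a2⟩ :: (M ++ [⟨a1, b2⟩])) * PushoutI.of (φ := φ) a1 a2
                = prodL φ M * (PushoutI.of (φ := φ) a1 b2 * PushoutI.of (φ := φ) a1 a2) := by
                  simp [prodL, mul_assoc]
              _ = prodL φ M * PushoutI.of (φ := φ) a1 (b2 * a2) := by rw [← map_mul]
              _ = prodL φ (M ++ [⟨a1, b2 * a2⟩]) := by simp [prodL]
          calc γ' * (PushoutI.of (φ := φ) a1 a2)⁻¹ *
              prodL φ (⟨a1, a2⟩ :: (M ++ [⟨a1, b2⟩])) *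
              (γ' * (PushoutI.of (φ := φ) a1 a2)⁻¹)⁻¹
              = γ' * ((PushoutI.of (φ := φ) a1 a2)⁻¹ *
                prodL φ (⟨a1, a2⟩ :: (M ++ [⟨a1, b2⟩])) *
                PushoutI.of (φ := φ) a1 a2) * γ'⁻¹ := by group
            _ = γ' * prodL φ (M ++ [⟨a1, b2 * a2⟩]) * γ'⁻¹ := by rw [hconj]
            _ = prodL φ L' := hp'
      · -- cyclically reduced, length ≥ 2
        by_cases hai : a1 = !i
        · -- correct orientation already
          subst hai
          have hb1i : b1 = i := not_not.1 (fun h => (Ne.symm hab) (Bool.eq_not_iff.2 h))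
          have hb1i' : i = b1 := hb1i.symm
          subst hb1i'
          exact corner φ hnd h2 i a2 b2 M hr
        · -- rotate first
          have hai2 : a1 = i := not_not.1 (fun h => hai (Bool.eq_not_iff.2 h))
          subst hai2
          have hb1 : b1 = !a1 := Bool.eq_not_iff.2 (Ne.symm hab)
          subst hb1
          rcases M with _ | ⟨⟨m1, m2⟩, M₂⟩
          · -- M empty : rotation of a two letter word
            have hr₁ : RedL φ (⟨!a1, b2⟩ :: ([] : List (Σ i : Bool, G i)) ++ [⟨a1, a2⟩]) := by
              constructor
              · show List.Chain' _ _
                have hmap : (((⟨!a1, b2⟩ : Σ i : Bool, G i) ::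
                    ([] : List (Σ i : Bool, G i)) ++ [(⟨a1, a2⟩ : Σ i : Bool, G i)]).map
                    Sigma.fst) = [!a1, a1] := rfl
                rw [hmap]
                exact List.isChain_cons_cons.2 ⟨by simp, List.isChain_singleton _⟩
              · intro p hp
                simp at hp
                rcases hp with rfl | rfl
                · exact hr.2 ⟨!a1, b2⟩ (by simp)
                · exact hr.2 ⟨a1, a2⟩ (by simp)
            obtain ⟨γc, L', hne', hred', hh', hl', hpc⟩ := corner φ hnd h2 a1 b2 a2 [] hr₁
            refine ⟨γc * (PushoutI.of (φ := φ) a1 a2)⁻¹, L', hne', hred', hh', hl', ?_⟩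
            have hrot : (PushoutI.of (φ := φ) a1 a2)⁻¹ *
                prodL φ (⟨a1, a2⟩ :: ([] : List (Σ i : Bool, G i)) ++ [⟨!a1, b2⟩]) *
                PushoutI.of (φ := φ) a1 a2
                = prodL φ (⟨!a1, b2⟩ :: ([] : List (Σ i : Bool, G i)) ++ [⟨a1, a2⟩]) := by
              simp [prodL, mul_assoc]
            calc γc * (PushoutI.of (φ := φ) a1 a2)⁻¹ *
                prodL φ (⟨a1, a2⟩ :: ([] : List (Σ i : Bool, G i)) ++ [⟨!a1, b2⟩]) *
                (γc * (PushoutI.of (φ := φ) a1 a2)⁻¹)⁻¹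
                = γc * ((PushoutI.of (φ := φ) a1 a2)⁻¹ *
                  prodL φ (⟨a1, a2⟩ :: ([] : List (Σ i : Bool, G i)) ++ [⟨!a1, b2⟩]) *
                  PushoutI.of (φ := φ) a1 a2) * γc⁻¹ := by group
              _ = γc * prodL φ (⟨!a1, b2⟩ :: ([] : List (Σ i : Bool, G i)) ++ [⟨a1, a2⟩]) * γc⁻¹ := by
                  rw [hrot]
              _ = prodL φ L' := hpc
          · -- M = ⟨m1, m2⟩ :: M₂
            have hm1 : m1 = !a1 := by
              have h3 := hr.1
              simp only [List.map_cons, List.map_append, List.map_nil, List.cons_append,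
                List.Chain', List.isChain_cons_cons] at h3
              exact Bool.eq_not_iff.2 (Ne.symm h3.1)
            subst hm1
            have hr₁ : RedL φ (⟨!a1, m2⟩ :: (M₂ ++ [⟨!a1, b2⟩]) ++ [⟨a1, a2⟩]) := by
              constructor
              · show List.Chain' _ _
                have hch : List.Chain' (· ≠ ·)
                    ((!a1) :: (M₂.map Sigma.fst ++ [!a1])) := by
                  have := hchainB.tail
                  simpa [List.Chain'] using this
                have h4 := chainB hch (show (!a1) ≠ a1 by simp)
                simpa using h4
              · intro p hp
                simp only [List.cons_append, List.append_assoc, List.mem_cons,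
                  List.mem_append, List.mem_singleton, List.not_mem_nil, or_false, false_or] at hp
                rcases hp with rfl | hp | rfl | rfl
                · exact hr.2 ⟨!a1, m2⟩ (by simp)
                · exact hr.2 p (by simp [hp])
                · exact hr.2 ⟨!a1, b2⟩ (by simp)
                · exact hr.2 ⟨a1, a2⟩ (by simp)
            obtain ⟨γc, L', hne', hred', hh', hl', hpc⟩ :=
              corner φ hnd h2 a1 m2 a2 (M₂ ++ [⟨!a1, b2⟩]) hr₁
            refine ⟨γc * (PushoutI.of (φ := φ) a1 a2)⁻¹, L', hne', hred', hh', hl', ?_⟩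
            have hrot : (PushoutI.of (φ := φ) a1 a2)⁻¹ *
                prodL φ (⟨a1, a2⟩ :: ((⟨!a1, m2⟩ :: M₂) ++ [⟨!a1, b2⟩])) *
                PushoutI.of (φ := φ) a1 a2
                = prodL φ (⟨!a1, m2⟩ :: (M₂ ++ [⟨!a1, b2⟩]) ++ [⟨a1, a2⟩]) := by
              simp [prodL, mul_assoc]
            calc γc * (PushoutI.of (φ := φ) a1 a2)⁻¹ *
                prodL φ (⟨a1, a2⟩ :: ((⟨!a1, m2⟩ :: M₂) ++ [⟨!a1, b2⟩])) *
                (γc * (PushoutI.of (φ := φ) a1 a2)⁻¹)⁻¹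
                = γc * ((PushoutI.of (φ := φ) a1 a2)⁻¹ *
                  prodL φ (⟨a1, a2⟩ :: ((⟨!a1, m2⟩ :: M₂) ++ [⟨!a1, b2⟩])) *
                  PushoutI.of (φ := φ) a1 a2) * γc⁻¹ := by group
              _ = γc * prodL φ (⟨!a1, m2⟩ :: (M₂ ++ [⟨!a1, b2⟩]) ++ [⟨a1, a2⟩]) * γc⁻¹ := by
                  rw [hrot]
              _ = prodL φ L' := hpc

/-! ### from lists to `BeginsEndsWith` -/

private theorem beginsEndsWith_of_list (i : Bool) (L : List (Σ i : Bool, G i)) (hne : L ≠ [])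
    (hr : RedL φ L) (hh : (L.head hne).1 = i) (hl : (L.getLast hne).1 = i) :
    BeginsEndsWith φ i (prodL φ L) := by
  refine ⟨L.length, List.length_pos_iff.2 hne, fun j => (L.get j).1, fun j => (L.get j).2,
    ?_, ?_, ?_, ?_, ?_⟩
  · rw [← hh]
    simp [List.head_eq_getElem_zero hne, List.get_eq_getElem]
  · rw [← hl]
    simp [List.getLast_eq_getElem, List.get_eq_getElem]
  · intro j h
    have hch := (List.isChain_map Sigma.fst).1 hr.1
    have := List.isChain_iff_getElem.1 hch j (by omega)
    exact this
  · intro j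
    exact hr.2 _ (L.get_mem _)
  · show prodL φ L = _
    rw [prodL]
    conv_lhs => rw [← List.ofFn_get L]
    rw [List.map_ofFn]
    rfl

/-- In a nondegenerate, nondihedral amalgamated product `Γ = G₁ *_A G₂`
with trivial core of `A`, every nontrivial element is conjugate both to an element with
reduced expression beginning and ending in `G₁ \ A`, and to one beginning and ending in
`G₂ \ A`. -/
theorem conjugate_into_both_corners
    (hφ : ∀ i, Function.Injective (φ i))
    (hnd : ∀ i, ¬ Function.Surjective (φ i))
    (hnondihedral : ¬ ((∀ i, Nat.card (G i) = 2) ∧ Subsingleton A))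
    (hcore : ((PushoutI.base φ).range).normalCore = ⊥) :
    ∀ g : PushoutI φ, g ≠ 1 → ∀ i : Bool,
      ∃ γ : PushoutI φ, BeginsEndsWith φ i (γ * g * γ⁻¹) := by
  intro g hg i
  have hcg : g ∉ ((PushoutI.base φ).range).normalCore := by
    rw [hcore]
    simpa using hg
  have hδ : ∃ δ : PushoutI φ, δ * g * δ⁻¹ ∉ (PushoutI.base φ).range := by
    by_contra h
    push_neg at h
    exact hcg (fun b => h b)
  obtain ⟨δ, hδ⟩ := hδ
  obtain ⟨L, hne, hr, hLp⟩ := exists_redL φ hφ hδ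
  have h2 := not_both_two φ hφ hnd hnondihedral hcore
  obtain ⟨γ', L', hne', hred', hh', hl', hp'⟩ :=
    main_ind φ hnd h2 L.length L hne hr le_rfl i
  refine ⟨γ' * δ, ?_⟩
  have key : (γ' * δ) * g * (γ' * δ)⁻¹ = prodL φ L' := by
    rw [mul_inv_rev]
    calc γ' * δ * g * (δ⁻¹ * γ'⁻¹) = γ' * (δ * g * δ⁻¹) * γ'⁻¹ := by group
      _ = γ' * prodL φ L * γ'⁻¹ := by rw [hLp]
      _ = prodL φ L' := hp'
  rw [key]
  exact beginsEndsWith_of_list φ i L' hne' hred' hh' hl'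

end
end

section
/- Let Γ = G₁ *_A G₂ be a nondegenerate, nondihedral amalgamated product with trivial core of A in Γ. Then Γ has the trivial normal centralizers property: if H₁ and H₂ are commuting normal subgroups of Γ, then one of them is trivial. -/
open Monoid

namespace AmalgamTNC

open Monoid.CoprodI Function

variable {G : Bool → Type*} [∀ i, Group (G i)] {A : Type*} [Group A]

/-- The image in the pushout of (the product of) a nonempty word. -/
def wprod (φ : ∀ i, A →* G i) {i j : Bool} (w : NeWord G i j) : PushoutI φ :=
  PushoutI.ofCoprodI w.prod

/-- A nonempty word is good if none of its letters lies in the image of the base group. -/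
def Gd (φ : ∀ i, A →* G i) {i j : Bool} (w : NeWord G i j) : Prop :=
  ∀ l ∈ w.toList, Sigma.snd l ∉ (φ l.1).range

variable {φ : ∀ i, A →* G i}

theorem not_mem_range_ne_one {i : Bool} {x : G i} (h : x ∉ (φ i).range) : x ≠ 1 :=
  fun h1 => h (h1 ▸ one_mem _)

theorem gd_singleton {i : Bool} {x : G i} (h : x ≠ 1) (hx : x ∉ (φ i).range) :
    Gd φ (NeWord.singleton x h) := by
  intro l hl
  simp only [NeWord.toList, List.mem_singleton] at hl
  subst hl
  exact hx

theorem gd_append_iff {i j k l : Bool} {w₁ : NeWord G i j} {hne : j ≠ k} {w₂ : NeWord G k l} :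
    Gd φ (NeWord.append w₁ hne w₂) ↔ Gd φ w₁ ∧ Gd φ w₂ := by
  simp only [Gd, NeWord.toList, List.mem_append]
  constructor
  · exact fun h => ⟨fun x hx => h x (Or.inl hx), fun x hx => h x (Or.inr hx)⟩
  · rintro ⟨h₁, h₂⟩ x (hx | hx)
    · exact h₁ x hx
    · exact h₂ x hx

theorem gd_head {i j : Bool} {w : NeWord G i j} (hw : Gd φ w) : w.head ∉ (φ i).range := by
  have hmem : (⟨i, w.head⟩ : Σ i, G i) ∈ w.toList := by
    have := w.toList_head?
    exact List.mem_of_mem_head? (by rw [this]; rfl)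
  exact hw _ hmem

theorem gd_last {i j : Bool} {w : NeWord G i j} (hw : Gd φ w) : w.last ∉ (φ j).range := by
  have hmem : (⟨j, w.last⟩ : Σ i, G i) ∈ w.toList := by
    have := w.toList_getLast?
    exact List.mem_of_mem_getLast? (by rw [this]; rfl)
  exact hw _ hmem

theorem gd_inv {i j : Bool} {w : NeWord G i j} (hw : Gd φ w) : Gd φ w.inv := by
  induction w with
  | singleton x h =>
    refine gd_singleton _ ?_
    have hx : x ∉ (φ _).range := by
      intro hc; exact (gd_head hw) hc
    simpa using hx
  | append w₁ hne w₂ ih₁ ih₂ =>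
    rw [gd_append_iff] at hw
    exact gd_append_iff.2 ⟨ih₂ hw.2, ih₁ hw.1⟩

/-- Multiply the last letter of a word on the right. -/
def mulLast : ∀ {i j : Bool} (w : NeWord G i j) (x : G j), w.last * x ≠ 1 → NeWord G i j
  | _, _, NeWord.singleton g _, x, hx => NeWord.singleton (g * x) hx
  | _, _, NeWord.append w₁ hne w₂, x, hx => NeWord.append w₁ hne (mulLast w₂ x hx)

@[simp] theorem mulLast_last {i j : Bool} (w : NeWord G i j) (x : G j) (h : w.last * x ≠ 1) :
    (mulLast w x h).last = w.last * x := by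
  induction w with
  | singleton g hg => rfl
  | append w₁ hne w₂ ih₁ ih₂ => exact ih₂ _ _

@[simp] theorem mulLast_prod {i j : Bool} (w : NeWord G i j) (x : G j) (h : w.last * x ≠ 1) :
    (mulLast w x h).prod = w.prod * CoprodI.of x := by
  induction w with
  | singleton g hg => simp [mulLast, NeWord.prod_singleton (g * x) h]
  | append w₁ hne w₂ ih₁ ih₂ => simp [mulLast, ih₂ x h, mul_assoc]

theorem gd_mulLast {i j : Bool} {w : NeWord G i j} {x : G j} (h : w.last * x ≠ 1)
    (hw : Gd φ w) (hx : w.last * x ∉ (φ j).range) : Gd φ (mulLast w x h) := by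
  induction w with
  | singleton g hg => exact gd_singleton _ hx
  | append w₁ hne w₂ ih₁ ih₂ =>
    rw [gd_append_iff] at hw
    exact gd_append_iff.2 ⟨hw.1, ih₂ _ hw.2 hx⟩

theorem gd_replaceHead {i j : Bool} {w : NeWord G i j} {x : G i} (h : x ≠ 1)
    (hw : Gd φ w) (hx : x ∉ (φ i).range) : Gd φ (NeWord.replaceHead x h w) := by
  induction w with
  | singleton g hg => exact gd_singleton _ hx
  | append w₁ hne w₂ ih₁ ih₂ =>
    rw [gd_append_iff] at hw
    exact gd_append_iff.2 ⟨ih₁ _ hw.1 hx, hw.2⟩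

theorem gd_mulHead {i j : Bool} {w : NeWord G i j} {x : G i} (h : x * w.head ≠ 1)
    (hw : Gd φ w) (hx : x * w.head ∉ (φ i).range) : Gd φ (NeWord.mulHead w x h) :=
  gd_replaceHead _ hw hx

@[simp] theorem wprod_append {i j k l : Bool} (w₁ : NeWord G i j) (hne : j ≠ k)
    (w₂ : NeWord G k l) :
    wprod φ (NeWord.append w₁ hne w₂) = wprod φ w₁ * wprod φ w₂ := by
  simp [wprod, map_mul]

@[simp] theorem wprod_singleton {i : Bool} (x : G i) (h : x ≠ 1) :
    wprod φ (NeWord.singleton x h) = PushoutI.of i x := by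
  simp [wprod]

@[simp] theorem wprod_inv {i j : Bool} (w : NeWord G i j) :
    wprod φ w.inv = (wprod φ w)⁻¹ := by
  simp [wprod, ← map_inv]

@[simp] theorem wprod_mulLast {i j : Bool} (w : NeWord G i j) (x : G j) (h : w.last * x ≠ 1) :
    wprod φ (mulLast w x h) = wprod φ w * PushoutI.of j x := by
  simp [wprod, map_mul]

@[simp] theorem wprod_mulHead {i j : Bool} (w : NeWord G i j) (x : G i) (h : x * w.head ≠ 1) :
    wprod φ (NeWord.mulHead w x h) = PushoutI.of i x * wprod φ w := by
  simp [wprod, map_mul]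

/-- Key consequence of the normal form theorem : the product of a good word is not in the
image of the base group. -/
theorem wprod_not_mem_base (hφ : ∀ i, Injective (φ i)) {i j : Bool} {w : NeWord G i j}
    (hw : Gd φ w) : wprod φ w ∉ (PushoutI.base φ).range := by
  intro hmem
  have hred : PushoutI.Reduced φ w.toWord := fun g hg => hw g hg
  have := hred.eq_empty_of_mem_range hφ hmem
  have hnil : w.toList = [] := by
    have h2 := congrArg CoprodI.Word.toList this
    exact (by simpa [CoprodI.Word.empty] using h2 : w.toWord.toList = [])
  exact w.toList_ne_nil hnil

theorem wprod_ne_one (hφ : ∀ i, Injective (φ i)) {i j : Bool} {w : NeWord G i j}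
    (hw : Gd φ w) : wprod φ w ≠ 1 := by
  intro h
  exact wprod_not_mem_base hφ hw (h ▸ one_mem _)

/-- Head decomposition of a nonempty word. -/
theorem decomp {i j : Bool} (w : NeWord G i j) :
    (i = j ∧ wprod φ w = PushoutI.of i w.head) ∨
    ∃ (k : Bool) (_ : i ≠ k) (v : NeWord G k j),
      wprod φ w = PushoutI.of i w.head * wprod φ v ∧ v.last = w.last ∧
        (Gd φ w → Gd φ v) := by
  induction w with
  | singleton x h => exact Or.inl ⟨rfl, by simp⟩
  | append w₁ hne w₂ ih₁ ih₂ =>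
    right
    rcases ih₁ with ⟨heq, hP⟩ | ⟨k, hik, v, hPv, hlast, hgd⟩
    · subst heq
      refine ⟨_, hne, w₂, ?_, rfl, fun h => (gd_append_iff.1 h).2⟩
      simp [hP]
    · refine ⟨k, hik, NeWord.append v hne w₂, ?_, rfl, ?_⟩
      · simp [hPv, mul_assoc]
      · intro h
        rw [gd_append_iff] at h ⊢
        exact ⟨hgd h.1, h.2⟩

variable (φ) in
/-- `Lmem H s t ζ` : `H` contains the product of a good word from `s` to `t` with last
letter `ζ`. -/
def Lmem (H : Subgroup (PushoutI φ)) (s t : Bool) (ζ : G t) : Prop :=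
  ∃ w : NeWord G s t, Gd φ w ∧ wprod φ w ∈ H ∧ w.last = ζ

theorem Lmem.not_mem_range {H : Subgroup (PushoutI φ)} {s t : Bool} {ζ : G t}
    (h : Lmem φ H s t ζ) : ζ ∉ (φ t).range := by
  obtain ⟨w, hw, _, rfl⟩ := h
  exact gd_last hw

section Main

theorem exists_not_mem_range (hnd : ∀ i, ¬ Surjective (φ i)) (i : Bool) : ∃ y : G i, y ∉ (φ i).range := by
  by_contra hc
  push_neg at hc
  refine hnd i fun y => ?_
  obtain ⟨a, ha⟩ := hc y
  exact ⟨a, ha⟩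

/-- From a transversal-normal-form we extract a good word representing any element
outside the base range. -/
theorem exists_gd_word (hφ : ∀ i, Injective (φ i)) {h : PushoutI φ} (hh : h ∉ (PushoutI.base φ).range) :
    ∃ (i j : Bool) (w : NeWord G i j), Gd φ w ∧ wprod φ w = h := by
  classical
  obtain ⟨d⟩ := PushoutI.NormalWord.transversal_nonempty φ hφ
  set nw : PushoutI.NormalWord d := PushoutI.NormalWord.equiv h with hnw
  have hprod : nw.prod = h := by
    show (PushoutI.NormalWord.equiv).symm (PushoutI.NormalWord.equiv h) = h
    exact Equiv.symm_apply_apply _ _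
  have hnotrange : ∀ l ∈ nw.toList, Sigma.snd l ∉ (φ l.1).range := by
    intro l hl hrange
    obtain ⟨a, ha⟩ := hrange
    have hset : l.2 ∈ d.set l.1 := nw.normalized _ _ (by exact hl)
    have hne1 : l.2 ≠ 1 := nw.ne_one _ hl
    have hinj := (d.compl l.1).1
    have heq : ((⟨⟨l.2, ⟨a, ha⟩⟩, ⟨1, d.one_mem l.1⟩⟩ :
        ((φ l.1).range : Set (G l.1)) × (d.set l.1)) )
        = ⟨⟨1, Subgroup.one_mem _⟩, ⟨l.2, hset⟩⟩ := by
      apply hinj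
      simp
    have := congrArg (fun p => (p.2 : G l.1)) heq
    simp at this
    exact hne1 this.symm
  by_cases hnil : nw.toWord.toList = []
  · exfalso
    have hwprod : nw.toWord.prod = 1 := by
      simp [CoprodI.Word.prod, hnil]
    have : h = PushoutI.base φ nw.head := by
      rw [← hprod]
      simp [PushoutI.NormalWord.prod, hwprod]
    exact hh (this ▸ ⟨nw.head, rfl⟩)
  · have hnemp : nw.toWord ≠ CoprodI.Word.empty := by
      intro he
      rw [he] at hnil
      exact hnil rfl
    obtain ⟨i, j, w', hw'⟩ := CoprodI.NeWord.of_word nw.toWord hnemp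
    have hgd : Gd φ w' := by
      intro l hl
      apply hnotrange
      have : w'.toList = nw.toWord.toList := congrArg CoprodI.Word.toList hw'
      rw [← this]
      exact hl
    have hw'prod : wprod φ w' = PushoutI.ofCoprodI nw.toWord.prod := by
      unfold wprod
      rw [show w'.prod = w'.toWord.prod from rfl, hw']
    have hhead_notr : (φ i nw.head) * w'.head ∉ (φ i).range := by
      intro ⟨b, hb⟩
      exact gd_head hgd ⟨(nw.head)⁻¹ * b, by rw [map_mul, map_inv, hb]; group⟩
    have hne1 : (φ i nw.head) * w'.head ≠ 1 := not_mem_range_ne_one hhead_notr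
    refine ⟨i, j, NeWord.mulHead w' (φ i nw.head) hne1, gd_mulHead _ hgd hhead_notr, ?_⟩
    rw [wprod_mulHead, hw'prod, PushoutI.of_apply_eq_base, ← hprod]
    rfl

/-- Every normal subgroup with an element outside the base range hits `Lmem` for all `s ≠ t`. -/
theorem Lmem_exists (hφ : ∀ i, Injective (φ i)) (hnd : ∀ i, ¬ Surjective (φ i)) {H : Subgroup (PushoutI φ)} (hH : H.Normal) {h : PushoutI φ}
    (hh : h ∈ H) (hhR : h ∉ (PushoutI.base φ).range) {s t : Bool} (hst : s ≠ t) :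
    ∃ ζ, Lmem φ H s t ζ := by
  obtain ⟨i, j, w, hgd, hwp⟩ := exists_gd_word hφ hhR
  -- first build a word with distinct endpoints
  have key : ∃ (p q : Bool) (_ : p ≠ q) (u : NeWord G p q), Gd φ u ∧ wprod φ u ∈ H := by
    by_cases hij : i = j
    · subst hij
      have hii : i ≠ !i := by cases i <;> decide
      obtain ⟨y, hy⟩ := exists_not_mem_range hnd (!i)
      have hy1 : y ≠ 1 := not_mem_range_ne_one hy
      have hyi1 : y⁻¹ ≠ 1 := by simpa using hy1
      refine ⟨i, !i, hii,
        NeWord.append (NeWord.append (NeWord.append w hii (NeWord.singleton y hy1))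
          hii.symm w) hii (NeWord.singleton y⁻¹ hyi1), ?_, ?_⟩
      · refine gd_append_iff.2 ⟨gd_append_iff.2 ⟨gd_append_iff.2 ⟨hgd, gd_singleton _ hy⟩, hgd⟩,
          gd_singleton _ (by simpa using hy)⟩
      · have : wprod φ w * PushoutI.of (!i) y * wprod φ w * PushoutI.of (!i) y⁻¹
            = h * (PushoutI.of (!i) y * h * (PushoutI.of (!i) y)⁻¹) := by
          rw [hwp, map_inv]; group
        simp only [wprod_append, wprod_singleton]
        rw [this]
        exact mul_mem hh (hH.conj_mem _ hh _)
    · exact ⟨i, j, hij, w, hgd, hwp ▸ hh⟩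
  obtain ⟨p, q, hpq, u, hu, huH⟩ := key
  have hcase : (p = s ∧ q = t) ∨ (p = t ∧ q = s) := by
    cases p <;> cases q <;> cases s <;> cases t <;> simp_all
  rcases hcase with ⟨rfl, rfl⟩ | ⟨rfl, rfl⟩
  · exact ⟨u.last, u, hu, huH, rfl⟩
  · exact ⟨u.inv.last, u.inv, gd_inv hu, by rw [wprod_inv]; exact inv_mem huH, rfl⟩

/-- Closure of `Lmem` under inversion of the last letter. -/
theorem Lmem_inv {H : Subgroup (PushoutI φ)} (hH : H.Normal) {s t : Bool} (hst : s ≠ t)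
    {ζ : G t} (hζ : Lmem φ H s t ζ) : Lmem φ H s t ζ⁻¹ := by
  obtain ⟨w, hw, hwH, rfl⟩ := hζ
  rcases decomp (φ := φ) w.inv with ⟨heq, _⟩ | ⟨k, htk, v, hPv, hlast, hgd⟩
  · exact absurd heq.symm hst
  have hks : k = s := by cases k <;> cases s <;> cases t <;> simp_all
  subst hks
  have hgl : w.last ∉ (φ t).range := gd_last hw
  have hgli : (w.last)⁻¹ ∉ (φ t).range := by simpa using hgl
  have hne1 : (w.last)⁻¹ ≠ 1 := not_mem_range_ne_one hgli
  refine ⟨NeWord.append v hst (NeWord.singleton (w.last)⁻¹ hne1), ?_, ?_, by simp⟩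
  · exact gd_append_iff.2 ⟨hgd (gd_inv hw), gd_singleton _ hgli⟩
  · have hhd : w.inv.head = (w.last)⁻¹ := NeWord.inv_head w
    have hv : wprod φ v = (PushoutI.of t (w.last)⁻¹)⁻¹ * (wprod φ w)⁻¹ := by
      rw [← wprod_inv, hPv, hhd]
      group
    have : wprod φ (NeWord.append v hst (NeWord.singleton (w.last)⁻¹ hne1))
        = (PushoutI.of t (w.last)⁻¹)⁻¹ * (wprod φ w)⁻¹ *
            ((PushoutI.of t (w.last)⁻¹)⁻¹)⁻¹ := by
      simp only [wprod_append, wprod_singleton, hv]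
      group
    rw [this]
    exact hH.conj_mem _ (inv_mem hwH) _

/-- Closure of `Lmem` under right multiplication of the last letter. -/
theorem Lmem_mul {H : Subgroup (PushoutI φ)} (hH : H.Normal) {s t : Bool} (hst : s ≠ t)
    {ζ : G t} (hζ : Lmem φ H s t ζ) (y : G t) (h1 : ζ * y ∉ (φ t).range)
    (h2 : ζ * y⁻¹ ∉ (φ t).range) : Lmem φ H s t (ζ * y) := by
  obtain ⟨w, hw, hwH, rfl⟩ := hζ
  have hne1 : w.last * y ≠ 1 := not_mem_range_ne_one h1
  have hne2 : w.last * y⁻¹ ≠ 1 := not_mem_range_ne_one h2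
  refine ⟨NeWord.append (mulLast w y⁻¹ hne2) hst.symm (mulLast w y hne1), ?_, ?_, by simp⟩
  · exact gd_append_iff.2 ⟨gd_mulLast _ hw h2, gd_mulLast _ hw h1⟩
  · have : wprod φ (NeWord.append (mulLast w y⁻¹ hne2) hst.symm (mulLast w y hne1))
        = wprod φ w * ((PushoutI.of t y)⁻¹ * wprod φ w * ((PushoutI.of t y)⁻¹)⁻¹) := by
      simp only [wprod_append, wprod_mulLast, map_inv]
      group
    rw [this]
    exact mul_mem hwH (hH.conj_mem _ hwH _)

/-- The commutator trick: if last letters do not match up to the base group, we get a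
nontrivial commutator, contradicting commutation. -/
theorem stepC (hφ : ∀ i, Injective (φ i)) {H₁ H₂ : Subgroup (PushoutI φ)} {s t : Bool} (hst : s ≠ t)
    {ω τ : G t} (h₁ : Lmem φ H₁ s t ω) (h₂ : Lmem φ H₂ s t τ)
    (hcomm : ∀ a ∈ H₁, ∀ b ∈ H₂, Commute a b)
    (hnr : τ * ω⁻¹ ∉ (φ t).range) : False := by
  obtain ⟨wa, hga, haH, rfl⟩ := h₁
  obtain ⟨wb, hgb, hbH, rfl⟩ := h₂
  rcases decomp (φ := φ) wa.inv with ⟨heq, _⟩ | ⟨k, htk, v, hPv, hlast, hgd⟩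
  · exact hst heq.symm
  have hne : wb.last * (wa.last)⁻¹ ≠ 1 := not_mem_range_ne_one hnr
  set a := wprod φ wa with hadef
  set b := wprod φ wb with hbdef
  have hhd : wa.inv.head = (wa.last)⁻¹ := NeWord.inv_head wa
  have hainv : PushoutI.of t (wa.last)⁻¹ * wprod φ v = a⁻¹ := by
    rw [← wprod_inv, hPv, hhd]
  set Q : NeWord G s s :=
    NeWord.append (NeWord.append wa hst.symm
      (NeWord.append (mulLast wb (wa.last)⁻¹ hne) htk v)) hst wb.inv with hQ
  have hgdQ : Gd φ Q := by
    refine gd_append_iff.2 ⟨gd_append_iff.2 ⟨hga, gd_append_iff.2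
      ⟨gd_mulLast _ hgb hnr, hgd (gd_inv hga)⟩⟩, gd_inv hgb⟩
  have hQprod : wprod φ Q = a * b * a⁻¹ * b⁻¹ := by
    simp only [hQ, wprod_append, wprod_mulLast, wprod_inv]
    rw [mul_assoc b, hainv]
    rw [← hadef, ← hbdef]
    group
  have hQ1 : wprod φ Q = 1 := by
    rw [hQprod]
    have hc := hcomm a haH b hbH
    rw [Commute, SemiconjBy] at hc
    rw [hc]
    group
  exact wprod_ne_one hφ hgdQ hQ1

/-- If the commutator trick always fails, each `(φ t).range` is normal of index two. -/
theorem stepD (hφ : ∀ i, Injective (φ i)) (hnd : ∀ i, ¬ Surjective (φ i)) {H₁ H₂ : Subgroup (PushoutI φ)} (hH₁ : H₁.Normal) (hH₂ : H₂.Normal)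
    {h₁ h₂ : PushoutI φ} (hh₁ : h₁ ∈ H₁) (hh₁R : h₁ ∉ (PushoutI.base φ).range)
    (hh₂ : h₂ ∈ H₂) (hh₂R : h₂ ∉ (PushoutI.base φ).range)
    (hF : ∀ (s t : Bool), s ≠ t → ∀ (ω τ : G t),
      Lmem φ H₁ s t ω → Lmem φ H₂ s t τ → τ * ω⁻¹ ∈ (φ t).range)
    (t : Bool) :
    ((φ t).range).Normal ∧
      ∃ ω₀, ω₀ ∉ (φ t).range ∧ ∀ y : G t, y ∈ (φ t).range ∨
        ∃ c ∈ (φ t).range, y = c * ω₀ := by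
  have hst : (!t) ≠ t := by cases t <;> decide
  obtain ⟨ω₀, hL₁⟩ := Lmem_exists hφ hnd hH₁ hh₁ hh₁R hst
  obtain ⟨τ₀, hL₂⟩ := Lmem_exists hφ hnd hH₂ hh₂ hh₂R hst
  have hω₀ : ω₀ ∉ (φ t).range := hL₁.not_mem_range
  have e1 : τ₀ * ω₀⁻¹ ∈ (φ t).range := hF _ _ hst _ _ hL₁ hL₂
  have e2 : τ₀ * ω₀ ∈ (φ t).range := by
    have := hF _ _ hst _ _ (Lmem_inv hH₁ hst hL₁) hL₂
    simpa using this
  have e3 : ω₀ * ω₀ ∈ (φ t).range := by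
    have h := mul_mem (inv_mem e2) e1
    have heq : (τ₀ * ω₀)⁻¹ * (τ₀ * ω₀⁻¹) = (ω₀ * ω₀)⁻¹ := by group
    rw [heq] at h
    exact (inv_mem_iff).1 h
  have e4 : ∀ y : G t, ω₀ * y ∈ (φ t).range ∨ ω₀ * y⁻¹ ∈ (φ t).range ∨
      ω₀ * y⁻¹ * ω₀⁻¹ ∈ (φ t).range := by
    intro y
    by_cases c1 : ω₀ * y ∈ (φ t).range
    · exact Or.inl c1
    by_cases c2 : ω₀ * y⁻¹ ∈ (φ t).range
    · exact Or.inr (Or.inl c2)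
    refine Or.inr (Or.inr ?_)
    have hL' : Lmem φ H₁ (!t) t (ω₀ * y) := Lmem_mul hH₁ hst hL₁ y c1 c2
    have h := hF _ _ hst _ _ hL' hL₂
    have h' := mul_mem (inv_mem e1) h
    have heq : (τ₀ * ω₀⁻¹)⁻¹ * (τ₀ * (ω₀ * y)⁻¹) = ω₀ * (y⁻¹ * ω₀⁻¹) := by group
    rw [heq] at h'
    rw [mul_assoc]
    exact h'
  have n1 : ∀ a ∈ (φ t).range, ω₀ * a * ω₀⁻¹ ∈ (φ t).range := by
    intro a ha
    rcases e4 a⁻¹ with hc | hc | hc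
    · exact absurd (by simpa using mul_mem hc ha) hω₀
    · rw [inv_inv] at hc
      exact absurd (by simpa using mul_mem hc (inv_mem ha)) hω₀
    · rw [inv_inv] at hc
      exact hc
  have n2 : ∀ a ∈ (φ t).range, ω₀⁻¹ * a * ω₀ ∈ (φ t).range := by
    intro a ha
    have h := mul_mem (mul_mem (inv_mem e3) (n1 a ha)) e3
    have heq : (ω₀ * ω₀)⁻¹ * (ω₀ * a * ω₀⁻¹) * (ω₀ * ω₀) = ω₀⁻¹ * a * ω₀ := by group
    rw [heq] at h
    exact h
  have cover : ∀ y : G t, y ∈ (φ t).range ∨ ∃ c ∈ (φ t).range, y = c * ω₀ := by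
    intro y
    rcases e4 y with hc | hc | hc
    · right
      have h := n2 _ hc
      have heq : ω₀⁻¹ * (ω₀ * y) * ω₀ = y * ω₀ := by group
      rw [heq] at h
      refine ⟨y * ω₀ * (ω₀ * ω₀)⁻¹, mul_mem h (inv_mem e3), by group⟩
    · right
      exact ⟨(ω₀ * y⁻¹)⁻¹, inv_mem hc, by group⟩
    · left
      have h := n2 _ hc
      have heq : ω₀⁻¹ * (ω₀ * y⁻¹ * ω₀⁻¹) * ω₀ = y⁻¹ := by group
      rw [heq] at h
      exact (inv_mem_iff).1 h
  refine ⟨⟨?_⟩, ω₀, hω₀, cover⟩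
  intro n hn g
  rcases cover g with hg | ⟨c, hc, rfl⟩
  · exact mul_mem (mul_mem hg hn) (inv_mem hg)
  · have heq : c * ω₀ * n * (c * ω₀)⁻¹ = c * (ω₀ * n * ω₀⁻¹) * c⁻¹ := by group
    rw [heq]
    exact mul_mem (mul_mem hc (n1 n hn)) (inv_mem hc)

end Main

end AmalgamTNC

open AmalgamTNC in
/-- A nondegenerate, nondihedral amalgamated product `Γ = G₁ *_A G₂` with
trivial core of `A` in `Γ` has the trivial normal centralizers property: of any two
elementwise-commuting normal subgroups, one is trivial. -/
theorem amalgam_trivial_normal_centralizers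
    {G : Bool → Type*} [∀ i, Group (G i)] {A : Type*} [Group A]
    (φ : ∀ i, A →* G i)
    (hφ : ∀ i, Function.Injective (φ i))
    (hnd : ∀ i, ¬ Function.Surjective (φ i))
    (hnondihedral : ¬ ((∀ i, Nat.card (G i) = 2) ∧ Subsingleton A))
    (hcore : ((PushoutI.base φ).range).normalCore = ⊥) :
    ∀ H₁ H₂ : Subgroup (PushoutI φ), H₁.Normal → H₂.Normal →
      (∀ a ∈ H₁, ∀ b ∈ H₂, Commute a b) → H₁ = ⊥ ∨ H₂ = ⊥ := by
  intro H₁ H₂ hN₁ hN₂ hcomm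
  by_contra hcon
  push_neg at hcon
  have hnontriv : ∀ (H : Subgroup (PushoutI φ)), H.Normal → H ≠ ⊥ →
      ∃ h ∈ H, h ∉ (PushoutI.base φ).range := by
    intro H hH hne
    by_contra hc
    push_neg at hc
    have hle : H ≤ (PushoutI.base φ).range := fun x hx => hc x hx
    haveI := hH
    have hcore' : H ≤ ((PushoutI.base φ).range).normalCore :=
      Subgroup.normal_le_normalCore.mpr hle
    rw [hcore] at hcore'
    exact hne (le_bot_iff.mp hcore')
  obtain ⟨h₁, hh₁, hh₁R⟩ := hnontriv H₁ hN₁ hcon.1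
  obtain ⟨h₂, hh₂, hh₂R⟩ := hnontriv H₂ hN₂ hcon.2
  by_cases hF : ∃ (s t : Bool) (_ : s ≠ t) (ω τ : G t),
      Lmem φ H₁ s t ω ∧ Lmem φ H₂ s t τ ∧ τ * ω⁻¹ ∉ (φ t).range
  · obtain ⟨s, t, hst, ω, τ, hL₁, hL₂, hnr⟩ := hF
    exact stepC hφ hst hL₁ hL₂ hcomm hnr
  · push_neg at hF
    have hD := fun t => stepD hφ hnd hN₁ hN₂ hh₁ hh₁R hh₂ hh₂R hF t
    -- the base range is normal in the pushout
    have hRnormal : ((PushoutI.base φ).range).Normal := by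
      constructor
      intro n hn g
      have main : ∀ g : PushoutI φ, ∀ n ∈ (PushoutI.base φ).range,
          g * n * g⁻¹ ∈ (PushoutI.base φ).range := by
        intro g
        induction g using PushoutI.induction_on with
        | of i x =>
          rintro n ⟨a, rfl⟩
          have hconj : x * (φ i a) * x⁻¹ ∈ (φ i).range :=
            (hD i).1.conj_mem _ ⟨a, rfl⟩ x
          obtain ⟨a', ha'⟩ := hconj
          refine ⟨a', ?_⟩
          rw [← PushoutI.of_apply_eq_base φ i a, ← PushoutI.of_apply_eq_base φ i a', ha']
          simp [map_mul]
        | base a' =>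
          rintro n ⟨a, rfl⟩
          refine ⟨a' * a * a'⁻¹, ?_⟩
          simp [map_mul]
        | mul x y ihx ihy =>
          intro n hn
          have h := ihx _ (ihy n hn)
          have heq : x * (y * n * y⁻¹) * x⁻¹ = (x * y) * n * (x * y)⁻¹ := by group
          rw [heq] at h
          exact h
      exact main g n hn
    have hRbot : (PushoutI.base φ).range = ⊥ := by
      haveI := hRnormal
      have := Subgroup.normal_le_normalCore.mpr (le_refl ((PushoutI.base φ).range))
      rw [hcore] at this
      exact le_bot_iff.mp this
    have hA : ∀ a : A, a = 1 := by
      intro a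
      have hmem : PushoutI.base φ a ∈ (⊥ : Subgroup (PushoutI φ)) := hRbot ▸ ⟨a, rfl⟩
      have h1 : PushoutI.base φ a = 1 := Subgroup.mem_bot.mp hmem
      apply PushoutI.base_injective hφ
      rw [h1, map_one]
    have hrange_triv : ∀ (i : Bool) (x : G i), x ∈ (φ i).range → x = 1 := by
      rintro i x ⟨a, rfl⟩
      rw [hA a, map_one]
    have hcard : ∀ i, Nat.card (G i) = 2 := by
      intro i
      obtain ⟨_, ω₀, hω₀, hcover⟩ := hD i
      rw [Nat.card_eq_two_iff]
      refine ⟨1, ω₀, fun h => hω₀ (h ▸ one_mem _), ?_⟩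
      ext y
      simp only [Set.mem_insert_iff, Set.mem_singleton_iff, Set.mem_univ, iff_true]
      rcases hcover y with hy | ⟨c, hc, rfl⟩
      · exact Or.inl (hrange_triv _ _ hy)
      · right
        rw [hrange_triv _ _ hc, one_mul]
    exact hnondihedral ⟨hcard, ⟨fun a b => by rw [hA a, hA b]⟩⟩
end

section
/- Let S be a group acting transitively on a set P, fix q ∈ P with stabilizer S_q, and let E_q be an S_q-group. Then the mixed product S ⋉ (*_{p∈P} E_p), where E_p for p = s·q is a conjugated copy of E_q, is isomorphic to the amalgamated product S *_{S_q} (S_q ⋉ E_q). -/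
open Monoid

section

variable {Γ : Type*} [Group Γ] (S : Subgroup Γ) {P : Type*} [MulAction S P]
  (E : P → Subgroup Γ) (q : P)

/-- The stabilizer `S_q`, viewed as a subgroup of the ambient group `Γ`. -/
def stabq : Subgroup Γ := (MulAction.stabilizer S q).map S.subtype

/-- The two factors of the amalgamated product 'S *_{S_q} (S_q ⋉ E_q)`:
`S` itself, and the (internal) semidirect product `S_q ⋉ E_q = ⟨S_q, E_q⟩`. -/
def mixFactor (i : Bool) : Subgroup Γ := cond i S (stabq S q ⊔ E q)

theorem stabq_le_mixFactor : ∀ i, stabq S q ≤ mixFactor S E q i := by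
  intro i
  cases i
  · exact le_sup_left
  · simpa [mixFactor, stabq] using Subgroup.map_subtype_le _

/-- The two inclusions of the common subgroup `S_q`. -/
def mixIncl (i : Bool) : stabq S q →* mixFactor S E q i :=
  Subgroup.inclusion (stabq_le_mixFactor S E q i)

/-- The natural homomorphism `S *_{S_q} (S_q ⋉ E_q) → Γ`. -/
def mixPsi : PushoutI (fun i => mixIncl S E q i) →* Γ :=
  PushoutI.lift (fun i => (mixFactor S E q i).subtype) (stabq S q).subtype
    (fun i => by ext x; rfl)

namespace MixAux

/-- The free product of the `E p`. -/
abbrev L := CoprodI (fun p => ↥(E p))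

/-- The natural map from the free product to `Γ`. -/
def base' : L E →* Γ := CoprodI.lift fun p => (E p).subtype

@[simp] lemma base'_of {p : P} (x : E p) : base' E (CoprodI.of x) = (x : Γ) := by
  simp [base']

lemma of_cast {p p' : P} (h : p = p') (x : E p) (x' : E p') (hx : (x : Γ) = (x' : Γ)) :
    (CoprodI.of (M := fun p => ↥(E p)) x) = CoprodI.of (M := fun p => ↥(E p)) x' := by
  subst h
  cases Subtype.ext hx
  rfl

variable (hconj : ∀ (s : S) (p : P),
  (E p).map (MulAut.conj (s : Γ)).toMonoidHom = E (s • p))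

/-- Conjugation `E p → E (s • p)`. -/
def conjE (s : S) (p : P) : E p →* E (s • p) where
  toFun x := ⟨(s : Γ) * x * (s : Γ)⁻¹, by
    rw [← hconj s p]; exact ⟨x, x.2, rfl⟩⟩
  map_one' := by ext; simp
  map_mul' x y := by ext; simp [mul_assoc]

@[simp] lemma conjE_coe (s : S) (p : P) (x : E p) :
    (conjE S E hconj s p x : Γ) = (s : Γ) * x * (s : Γ)⁻¹ := rfl

/-- Conjugation as an endomorphism of the free product. -/
def autL (s : S) : L E →* L E :=
  CoprodI.lift fun p => (CoprodI.of (M := fun p => ↥(E p))).comp (conjE S E hconj s p)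

@[simp] lemma autL_of (s : S) {p : P} (x : E p) :
    autL S E hconj s (CoprodI.of (M := fun p => ↥(E p)) x) = CoprodI.of (M := fun p => ↥(E p)) (conjE S E hconj s p x) := by
  simp [autL]

lemma autL_mul (s t : S) :
    autL S E hconj (s * t) = (autL S E hconj s).comp (autL S E hconj t) := by
  apply CoprodI.ext_hom
  intro p
  ext x
  simp only [MonoidHom.comp_apply, autL_of]
  refine of_cast E (mul_smul s t p) _ _ ?_
  simp [mul_assoc]

lemma autL_one : autL S E hconj 1 = MonoidHom.id _ := by
  apply CoprodI.ext_hom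
  intro p
  ext x
  simp only [MonoidHom.comp_apply, autL_of, MonoidHom.id_apply]
  refine of_cast E (one_smul S p) _ _ ?_
  simp

/-- Conjugation as `S →* MulAut (L E)`. -/
def phiS : S →* MulAut (L E) where
  toFun s :=
    { toFun := autL S E hconj s
      invFun := autL S E hconj s⁻¹
      left_inv := fun x => by
        rw [← MonoidHom.comp_apply, ← autL_mul, inv_mul_cancel, autL_one]; rfl
      right_inv := fun x => by
        rw [← MonoidHom.comp_apply, ← autL_mul, mul_inv_cancel, autL_one]; rfl
      map_mul' := map_mul _ }
  map_one' := by
    apply MulEquiv.ext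
    intro x
    simp [autL_one]
  map_mul' s t := by
    apply MulEquiv.ext
    intro x
    simp [autL_mul]

@[simp] lemma phiS_apply (s : S) (x : L E) :
    phiS S E hconj s x = autL S E hconj s x := rfl

lemma base'_compat (s : S) :
    (base' E).comp ((phiS S E hconj s).toMonoidHom) =
      (MulAut.conj ((S.subtype) s)).toMonoidHom.comp (base' E) := by
  apply CoprodI.ext_hom
  intro p
  ext x
  simp

/-- The external semidirect product `L ⋊ S`. -/
abbrev SD := SemidirectProduct (L E) S (phiS S E hconj)

/-- The multiplication map `L ⋊ S →* Γ`. -/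
def isoHom : SD S E hconj →* Γ :=
  SemidirectProduct.lift (base' E) S.subtype (base'_compat S E hconj)

@[simp] lemma isoHom_inl (l : L E) : isoHom S E hconj (SemidirectProduct.inl l) = base' E l :=
  SemidirectProduct.lift_inl _ _ _ _

@[simp] lemma isoHom_inr (s : S) : isoHom S E hconj (SemidirectProduct.inr s) = (s : Γ) :=
  SemidirectProduct.lift_inr _ _ _ _


section Iso

lemma base'_range_le : (base' E).range ≤ ⨆ p, E p := by
  apply CoprodI.lift_range_le
  intro p
  rw [Subgroup.range_subtype]
  exact le_iSup E p

lemma isoHom_injective (hfree : Function.Injective (CoprodI.lift (fun p => (E p).subtype)))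
    (hdisj : (⨆ p, E p) ⊓ S = ⊥) : Function.Injective (isoHom S E hconj) := by
  rw [injective_iff_map_eq_one]
  rintro ⟨l, s⟩ h
  rw [SemidirectProduct.mk_eq_inl_mul_inr, map_mul, isoHom_inl, isoHom_inr] at h
  have hb : base' E l = (s : Γ)⁻¹ := by
    rw [eq_inv_iff_mul_eq_one]; exact h
  have hmem : base' E l ∈ (⨆ p, E p) ⊓ S := by
    refine ⟨base'_range_le E ⟨l, rfl⟩, ?_⟩
    rw [hb]; exact S.inv_mem s.2
  rw [hdisj, Subgroup.mem_bot] at hmem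
  have hs : (s : Γ) = 1 := by
    have := hb.symm.trans hmem
    simpa using congrArg (·⁻¹) this
  have hl : l = 1 := hfree (by rw [show CoprodI.lift (fun p => (E p).subtype) = base' E from rfl,
    hmem, map_one])
  have hs' : s = 1 := Subtype.ext (by simpa using hs)
  ext <;> simp [hl, hs']

lemma isoHom_surjective (hgen : S ⊔ (⨆ p, E p) = ⊤) : Function.Surjective (isoHom S E hconj) := by
  intro γ
  have : γ ∈ (isoHom S E hconj).range := by
    have htop : (⊤ : Subgroup Γ) ≤ (isoHom S E hconj).range := by
      rw [← hgen]
      refine sup_le ?_ (iSup_le fun p => ?_)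
      · intro x hx
        exact ⟨SemidirectProduct.inr ⟨x, hx⟩, by simp⟩
      · intro x hx
        exact ⟨SemidirectProduct.inl (CoprodI.of (M := fun p => ↥(E p)) (⟨x, hx⟩ : E p)),
          by simp⟩
    exact htop (Subgroup.mem_top γ)
  exact this.imp fun _ h => h

/-- The isomorphism `L ⋊ S ≃* Γ`. -/
noncomputable def isoE (hfree : Function.Injective (CoprodI.lift (fun p => (E p).subtype)))
    (hdisj : (⨆ p, E p) ⊓ S = ⊥) (hgen : S ⊔ (⨆ p, E p) = ⊤) : SD S E hconj ≃* Γ :=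
  MulEquiv.ofBijective (isoHom S E hconj)
    ⟨isoHom_injective S E hconj hfree hdisj, isoHom_surjective S E hconj hgen⟩

end Iso


section Push

/-- The amalgamated product. -/
abbrev PO := PushoutI (fun i => mixIncl S E q i)

/-- The inclusion of `S` into the amalgam (as the `true` factor). -/
def fS : S →* PO S E q := PushoutI.of (φ := fun i => mixIncl S E q i) true

/-- The inclusion of `E q` into the amalgam (via the `false` factor). -/
def inclE : ↥(E q) →* PO S E q :=
  (PushoutI.of (φ := fun i => mixIncl S E q i) false).comp
    (Subgroup.inclusion le_sup_right)

@[simp] lemma mixIncl_coe (i : Bool) (x : stabq S q) :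
    ((mixIncl S E q i x : mixFactor S E q i) : Γ) = (x : Γ) := rfl

lemma inclE_def (y : E q) :
    inclE S E q y = PushoutI.of (φ := fun i => mixIncl S E q i) false
      (Subgroup.inclusion (show E q ≤ mixFactor S E q false from le_sup_right) y) := rfl

lemma of_true_eq_of_false (x : stabq S q) :
    PushoutI.of (φ := fun i => mixIncl S E q i) true (mixIncl S E q true x)
      = PushoutI.of (φ := fun i => mixIncl S E q i) false (mixIncl S E q false x) :=
  (PushoutI.of_apply_eq_base (fun i => mixIncl S E q i) true x).trans
    (PushoutI.of_apply_eq_base (fun i => mixIncl S E q i) false x).symm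

variable (htrans : ∀ p p' : P, ∃ s : S, s • p = p')

open scoped Classical in
/-- A choice of `s` with `s • q = p`, normalized so that `sig q = 1`. -/
noncomputable def sig (p : P) : S :=
  if h : p = q then 1 else (htrans q p).choose

lemma sig_smul (p : P) : sig S q htrans p • q = p := by
  rw [sig]
  split
  · next h => rw [h]; exact one_smul _ _
  · exact (htrans q p).choose_spec

lemma sig_q : sig S q htrans q = 1 := by simp [sig]

lemma inv_sig_smul (p : P) : (sig S q htrans p)⁻¹ • p = q := by
  rw [inv_smul_eq_iff, sig_smul]

/-- Conjugation `E p → E q` by the chosen `sig p`. -/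
noncomputable def conjEq (p : P) : E p →* E q :=
  (Subgroup.inclusion (le_of_eq (congrArg E (inv_sig_smul S q htrans p)))).comp
    (conjE S E hconj (sig S q htrans p)⁻¹ p)

@[simp] lemma conjEq_coe (p : P) (x : E p) :
    ((conjEq S E q hconj htrans p x : E q) : Γ)
      = ((sig S q htrans p : Γ))⁻¹ * x * (sig S q htrans p : Γ) := by
  simp [conjEq, Subgroup.coe_inclusion]

/-- Conjugation `E q → E q` by an element of the stabilizer. -/
noncomputable def conjStab (t : MulAction.stabilizer S q) : E q →* E q :=
  (Subgroup.inclusion (le_of_eq (congrArg E t.2))).comp (conjE S E hconj (t : S) q)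

@[simp] lemma conjStab_coe (t : MulAction.stabilizer S q) (y : E q) :
    ((conjStab S E q hconj t y : E q) : Γ) = ((t : S) : Γ) * y * ((t : S) : Γ)⁻¹ := by
  simp [conjStab, Subgroup.coe_inclusion]

/-- The map `E p → PO`. -/
noncomputable def gP (p : P) : E p →* PO S E q :=
  (MulAut.conj (fS S E q (sig S q htrans p))).toMonoidHom.comp
    ((inclE S E q).comp (conjEq S E q hconj htrans p))

lemma gP_apply (p : P) (x : E p) :
    gP S E q hconj htrans p x
      = fS S E q (sig S q htrans p) * inclE S E q (conjEq S E q hconj htrans p x)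
        * (fS S E q (sig S q htrans p))⁻¹ := rfl

/-- The map from the free product to the amalgam. -/
noncomputable def fN : L E →* PO S E q :=
  CoprodI.lift fun p => gP S E q hconj htrans p

@[simp] lemma fN_of {p : P} (x : E p) :
    fN S E q hconj htrans (CoprodI.of (M := fun p => ↥(E p)) x)
      = gP S E q hconj htrans p x := by
  simp [fN]

set_option maxHeartbeats 1000000 in
lemma conj_inclE (t : MulAction.stabilizer S q) (y : E q) :
    fS S E q (t : S) * inclE S E q y * (fS S E q (t : S))⁻¹
      = inclE S E q (conjStab S E q hconj t y) := by
  set xq : stabq S q := ⟨((t : S) : Γ), ⟨(t : S), t.2, rfl⟩⟩ with hxq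
  have h1 : fS S E q (t : S) = PushoutI.of (φ := fun i => mixIncl S E q i) true
      (mixIncl S E q true xq) := by
    exact congrArg (PushoutI.of (φ := fun i => mixIncl S E q i) true) (Subtype.ext rfl)
  rw [h1, of_true_eq_of_false, inclE_def, inclE_def, ← map_inv, ← map_mul, ← map_mul]
  exact congrArg (PushoutI.of (φ := fun i => mixIncl S E q i) false)
    (Subtype.ext (by simp [Subgroup.coe_inclusion, mixIncl_coe, hxq]))

set_option maxHeartbeats 1000000 in
lemma fN_compat (s : S) :
    (fN S E q hconj htrans).comp ((phiS S E hconj s).toMonoidHom)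
      = (MulAut.conj (fS S E q s)).toMonoidHom.comp (fN S E q hconj htrans) := by
  apply CoprodI.ext_hom
  intro p
  ext x
  have ht : ((sig S q htrans (s • p))⁻¹ * (s * sig S q htrans p)) • q = q := by
    rw [mul_smul, mul_smul, sig_smul, inv_sig_smul]
  set tst : MulAction.stabilizer S q := ⟨(sig S q htrans (s • p))⁻¹ * (s * sig S q htrans p), ht⟩
    with htst
  have hmul : s * sig S q htrans p = sig S q htrans (s • p) * (tst : S) := by
    rw [htst]; group
  simp only [MonoidHom.comp_apply, MulEquiv.coe_toMonoidHom, phiS_apply, autL_of, fN_of,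
    gP_apply, MulAut.conj_apply]
  rw [eq_comm]
  calc fS S E q s * (fS S E q (sig S q htrans p)
          * inclE S E q (conjEq S E q hconj htrans p x) * (fS S E q (sig S q htrans p))⁻¹)
        * (fS S E q s)⁻¹
      = fS S E q (s * sig S q htrans p) * inclE S E q (conjEq S E q hconj htrans p x)
          * (fS S E q (s * sig S q htrans p))⁻¹ := by
        rw [map_mul]; group
    _ = fS S E q (sig S q htrans (s • p))
          * (fS S E q (tst : S) * inclE S E q (conjEq S E q hconj htrans p x)
              * (fS S E q (tst : S))⁻¹)
          * (fS S E q (sig S q htrans (s • p)))⁻¹ := by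
        rw [hmul, map_mul]; group
    _ = fS S E q (sig S q htrans (s • p))
          * inclE S E q (conjStab S E q hconj tst (conjEq S E q hconj htrans p x))
          * (fS S E q (sig S q htrans (s • p)))⁻¹ := by
        rw [conj_inclE]
    _ = fS S E q (sig S q htrans (s • p))
          * inclE S E q (conjEq S E q hconj htrans (s • p) (conjE S E hconj s p x))
          * (fS S E q (sig S q htrans (s • p)))⁻¹ := by
        refine congrArg₂ _ (congrArg₂ _ rfl (congrArg _ (Subtype.ext ?_))) rfl
        push_cast [conjStab_coe, conjEq_coe, conjE_coe, htst]
        group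

/-- The map from the semidirect product to the amalgam. -/
noncomputable def theta' : SD S E hconj →* PO S E q :=
  SemidirectProduct.lift (fN S E q hconj htrans) (fS S E q) (fN_compat S E q hconj htrans)

@[simp] lemma theta'_inl (l : L E) :
    theta' S E q hconj htrans (SemidirectProduct.inl l) = fN S E q hconj htrans l :=
  SemidirectProduct.lift_inl _ _ _ _

@[simp] lemma theta'_inr (s : S) :
    theta' S E q hconj htrans (SemidirectProduct.inr s) = fS S E q s :=
  SemidirectProduct.lift_inr _ _ _ _

variable (hfree : Function.Injective (CoprodI.lift (fun p => (E p).subtype)))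
  (hdisj : (⨆ p, E p) ⊓ S = ⊥)
  (hgen : S ⊔ (⨆ p, E p) = ⊤)

/-- The inverse of `mixPsi`. -/
noncomputable def theta : Γ →* PO S E q :=
  (theta' S E q hconj htrans).comp (isoE S E hconj hfree hdisj hgen).symm.toMonoidHom

lemma isoE_apply (x : SD S E hconj) :
    isoE S E hconj hfree hdisj hgen x = isoHom S E hconj x := rfl

lemma theta_coe_S (s : S) :
    theta S E q hconj htrans hfree hdisj hgen (s : Γ) = fS S E q s := by
  have h : (isoE S E hconj hfree hdisj hgen).symm (s : Γ) = SemidirectProduct.inr s :=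
    (MulEquiv.symm_apply_eq _).2 (isoHom_inr S E hconj s).symm
  simp only [theta, MonoidHom.comp_apply, MulEquiv.coe_toMonoidHom, h, theta'_inr]

lemma theta_base' (l : L E) :
    theta S E q hconj htrans hfree hdisj hgen (base' E l) = fN S E q hconj htrans l := by
  have h : (isoE S E hconj hfree hdisj hgen).symm (base' E l) = SemidirectProduct.inl l :=
    (MulEquiv.symm_apply_eq _).2 (isoHom_inl S E hconj l).symm
  simp only [theta, MonoidHom.comp_apply, MulEquiv.coe_toMonoidHom, h, theta'_inl]

lemma mixPsi_of (i : Bool) (g : mixFactor S E q i) :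
    mixPsi S E q (PushoutI.of (φ := fun i => mixIncl S E q i) i g) = (g : Γ) := by
  simp only [mixPsi, PushoutI.lift_of]
  rfl

lemma mixPsi_fS (s : S) : mixPsi S E q (fS S E q s) = (s : Γ) :=
  mixPsi_of S E q true s

lemma mixPsi_inclE (y : E q) : mixPsi S E q (inclE S E q y) = (y : Γ) := by
  rw [inclE_def, mixPsi_of]
  simp [Subgroup.coe_inclusion]

lemma psi_comp_theta' :
    (mixPsi S E q).comp (theta' S E q hconj htrans) = isoHom S E hconj := by
  apply SemidirectProduct.hom_ext
  · apply CoprodI.ext_hom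
    intro p
    ext x
    simp only [MonoidHom.comp_apply, theta'_inl, fN_of, gP_apply, map_mul, map_inv,
      mixPsi_fS, mixPsi_inclE, conjEq_coe, isoHom_inl, base'_of]
    group
  · ext s
    simp only [MonoidHom.comp_apply, theta'_inr, mixPsi_fS, isoHom_inr]

lemma theta_stab (x : Γ) (hx : x ∈ stabq S q) (hx' : x ∈ stabq S q ⊔ E q) :
    theta S E q hconj htrans hfree hdisj hgen x
      = PushoutI.of (φ := fun i => mixIncl S E q i) false ⟨x, hx'⟩ := by
  obtain ⟨u, hu, rfl⟩ := hx
  have h1 : theta S E q hconj htrans hfree hdisj hgen (S.subtype u) = fS S E q u :=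
    theta_coe_S S E q hconj htrans hfree hdisj hgen u
  rw [h1]
  set xq : stabq S q := ⟨(u : Γ), ⟨u, hu, rfl⟩⟩ with hxq
  have h2 : fS S E q u = PushoutI.of (φ := fun i => mixIncl S E q i) true
      (mixIncl S E q true xq) :=
    congrArg (PushoutI.of (φ := fun i => mixIncl S E q i) true) (Subtype.ext rfl)
  rw [h2, of_true_eq_of_false]
  exact congrArg (PushoutI.of (φ := fun i => mixIncl S E q i) false) (Subtype.ext rfl)

lemma theta_Eq (e : Γ) (he : e ∈ E q) (hx' : e ∈ stabq S q ⊔ E q) :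
    theta S E q hconj htrans hfree hdisj hgen e
      = PushoutI.of (φ := fun i => mixIncl S E q i) false ⟨e, hx'⟩ := by
  have h0 : theta S E q hconj htrans hfree hdisj hgen e
      = theta S E q hconj htrans hfree hdisj hgen
          (base' E (CoprodI.of (M := fun p => ↥(E p)) (⟨e, he⟩ : E q))) := by
    rw [base'_of]
  rw [h0, theta_base', fN_of, gP_apply, sig_q, map_one, inclE_def]
  simp only [one_mul, inv_one, mul_one]
  refine congrArg (PushoutI.of (φ := fun i => mixIncl S E q i) false) (Subtype.ext ?_)
  rw [Subgroup.coe_inclusion, conjEq_coe, sig_q]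
  simp

lemma theta_false (x : Γ) (hx : x ∈ stabq S q ⊔ E q) :
    theta S E q hconj htrans hfree hdisj hgen x
      = PushoutI.of (φ := fun i => mixIncl S E q i) false ⟨x, hx⟩ := by
  let T : Subgroup Γ :=
    { carrier := {x | ∃ hx : x ∈ stabq S q ⊔ E q,
        theta S E q hconj htrans hfree hdisj hgen x
          = PushoutI.of (φ := fun i => mixIncl S E q i) false ⟨x, hx⟩}
      one_mem' := ⟨one_mem _, by
        rw [map_one]
        exact (map_one (PushoutI.of (φ := fun i => mixIncl S E q i) false)).symm⟩
      mul_mem' := by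
        rintro a b ⟨ha, ea⟩ ⟨hb, eb⟩
        refine ⟨mul_mem ha hb, ?_⟩
        rw [map_mul, ea, eb, ← map_mul]
        rfl
      inv_mem' := by
        rintro a ⟨ha, ea⟩
        refine ⟨inv_mem ha, ?_⟩
        rw [map_inv, ea, ← map_inv]
        rfl }
  have hT : stabq S q ⊔ E q ≤ T := by
    refine sup_le ?_ ?_
    · intro y hy
      exact ⟨Subgroup.mem_sup_left hy, theta_stab S E q hconj htrans hfree hdisj hgen y hy _⟩
    · intro y hy
      exact ⟨Subgroup.mem_sup_right hy, theta_Eq S E q hconj htrans hfree hdisj hgen y hy _⟩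
  obtain ⟨hx', h⟩ := hT hx
  exact h

lemma theta_comp_psi :
    (theta S E q hconj htrans hfree hdisj hgen).comp (mixPsi S E q)
      = MonoidHom.id (PO S E q) := by
  refine PushoutI.hom_ext_nonempty ?_
  intro i
  cases i
  · ext g
    simp only [MonoidHom.comp_apply, MonoidHom.id_apply, mixPsi_of]
    rw [theta_false S E q hconj htrans hfree hdisj hgen (g : Γ) g.2]
  · ext g
    simp only [MonoidHom.comp_apply, MonoidHom.id_apply, mixPsi_of]
    exact theta_coe_S S E q hconj htrans hfree hdisj hgen g

lemma psi_theta (gamma : Γ) :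
    mixPsi S E q (theta S E q hconj htrans hfree hdisj hgen gamma) = gamma := by
  show mixPsi S E q (theta' S E q hconj htrans
    ((isoE S E hconj hfree hdisj hgen).symm gamma)) = gamma
  rw [← MonoidHom.comp_apply, psi_comp_theta']
  exact (isoE S E hconj hfree hdisj hgen).apply_symm_apply gamma

end Push


end MixAux

/-- If `S` acts transitively on `P`, the mixed product
`Γ = S ⋉ (*_{p ∈ P} E p)` (encoded internally) is isomorphic, via the natural map, to
the amalgamated product `S *_{S_q} (S_q ⋉ E_q)` for any chosen `q ∈ P`. -/
theorem mixed_product_transitive_eq_amalgam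
    (hconj : ∀ (s : S) (p : P),
      (E p).map (MulAut.conj (s : Γ)).toMonoidHom = E (s • p))
    (hfree : Function.Injective (CoprodI.lift (fun p => (E p).subtype)))
    (hN : (⨆ p, E p).Normal)
    (hdisj : (⨆ p, E p) ⊓ S = ⊥)
    (hgen : S ⊔ (⨆ p, E p) = ⊤)
    (htrans : ∀ p p' : P, ∃ s : S, s • p = p') :
    Function.Bijective (mixPsi S E q) := by
  constructor
  · exact Function.LeftInverse.injective
      (g := MixAux.theta S E q hconj htrans hfree hdisj hgen)
      (fun x => DFunLike.congr_fun
        (MixAux.theta_comp_psi S E q hconj htrans hfree hdisj hgen) x)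
  · intro gamma
    exact ⟨MixAux.theta S E q hconj htrans hfree hdisj hgen gamma,
      MixAux.psi_theta S E q hconj htrans hfree hdisj hgen gamma⟩

end
end

section
/- Let V be a finite-dimensional vector space over an algebraically closed field K, and let h, u ∈ GL(V) with u of infinite order and h u h⁻¹ = u². Then u is quasi-unipotent of odd quasi-order m, the field K has characteristic zero, and setting e := log(uᵐ), one has h e h⁻¹ = 2e. -/
open Polynomial Finset in
private lemma aux_poly_dvd (K : Type*) [Field K] [CharZero K] (n : ℕ) :
    (X : K[X]) ^ (n + 1) ∣
      (∑ k ∈ Finset.Icc 1 n, C ((k : K)⁻¹) * (2 * X - X ^ 2) ^ k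
        - 2 * ∑ k ∈ Finset.Icc 1 n, C ((k : K)⁻¹) * X ^ k) := by
  set Y : K[X] := 2 * X - X ^ 2 with hY
  set A : K[X] := ∑ k ∈ Finset.Icc 1 n, C ((k : K)⁻¹) * Y ^ k with hA
  set B : K[X] := ∑ k ∈ Finset.Icc 1 n, C ((k : K)⁻¹) * X ^ k with hB
  have hdY : derivative Y = 2 - 2 * X := by
    rw [hY]
    simp only [derivative_sub, derivative_mul, derivative_ofNat, derivative_X, derivative_pow,
      derivative_one, map_ofNat, Polynomial.C_eq_natCast, Nat.cast_ofNat]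
    ring
  have hgeomY : (1 - Y) * ∑ k ∈ Finset.Icc 1 n, Y ^ (k - 1) = 1 - Y ^ n := by
    have h1 : ∑ k ∈ Finset.Icc 1 n, Y ^ (k - 1) = ∑ i ∈ Finset.range n, Y ^ i := by
      rw [← Finset.Ico_add_one_right_eq_Icc, Finset.sum_Ico_eq_sum_range]
      simp
    rw [h1]
    have := geom_sum_mul Y n
    linear_combination -this
  have hgeomX : (1 - X) * ∑ k ∈ Finset.Icc 1 n, (X:K[X]) ^ (k - 1) = 1 - X ^ n := by
    have h1 : ∑ k ∈ Finset.Icc 1 n, (X:K[X]) ^ (k - 1) = ∑ i ∈ Finset.range n, (X:K[X]) ^ i := by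
      rw [← Finset.Ico_add_one_right_eq_Icc, Finset.sum_Ico_eq_sum_range]
      simp
    rw [h1]
    have := geom_sum_mul (X : K[X]) n
    linear_combination -this
  have hdA : derivative A = (2 - 2*X) * ∑ k ∈ Finset.Icc 1 n, Y ^ (k - 1) := by
    rw [hA, derivative_sum, Finset.mul_sum]
    refine Finset.sum_congr rfl fun k hk => ?_
    have hk1 : (1:ℕ) ≤ k := (Finset.mem_Icc.mp hk).1
    have hkne : ((k : K)) ≠ 0 := Nat.cast_ne_zero.mpr (by omega)
    rw [derivative_C_mul, derivative_pow, hdY]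
    rw [← mul_assoc, ← mul_assoc, ← C_mul, inv_mul_cancel₀ hkne, map_one, one_mul]
    ring
  have hdB : derivative B = ∑ k ∈ Finset.Icc 1 n, (X:K[X]) ^ (k - 1) := by
    rw [hB, derivative_sum]
    refine Finset.sum_congr rfl fun k hk => ?_
    have hk1 : (1:ℕ) ≤ k := (Finset.mem_Icc.mp hk).1
    have hkne : ((k : K)) ≠ 0 := Nat.cast_ne_zero.mpr (by omega)
    rw [derivative_C_mul, derivative_pow, derivative_X, mul_one, ← mul_assoc, ← C_mul,
      inv_mul_cancel₀ hkne, map_one, one_mul]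
  have hkeyA : (1 - X) * derivative A = 2 * (1 - Y ^ n) := by
    have hx2 : ((1:K[X]) - X) * (2 - 2*X) = 2 * (1 - Y) := by rw [hY]; ring
    calc (1 - X) * derivative A = ((1-X) * (2 - 2*X)) * ∑ k ∈ Finset.Icc 1 n, Y ^ (k - 1) := by
          rw [hdA]; ring
    _ = 2 * ((1 - Y) * ∑ k ∈ Finset.Icc 1 n, Y ^ (k - 1)) := by rw [hx2]; ring
    _ = 2 * (1 - Y ^ n) := by rw [hgeomY]
  have hkeyB : (1 - X) * derivative B = 1 - X ^ n := by rw [hdB, hgeomX]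
  set P : K[X] := A - 2 * B with hP
  have hg : (1 - X) * derivative P = 2 * X^n * (1 - (2 - X)^n) := by
    have hYX : Y ^ n = X ^ n * (2 - X) ^ n := by rw [← mul_pow]; congr 1; rw [hY]; ring
    rw [hP, derivative_sub, derivative_mul]
    simp only [derivative_ofNat]
    calc (1-X) * (derivative A - (0 * B + 2 * derivative B))
        = (1-X) * derivative A - 2 * ((1-X) * derivative B) := by ring
    _ = 2 * (1 - Y^n) - 2 * (1 - X^n) := by rw [hkeyA, hkeyB]
    _ = 2 * X^n * (1 - (2 - X)^n) := by rw [hYX]; ring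
  have hdvdg : (X:K[X])^n ∣ derivative P := by
    have hco : IsCoprime ((X:K[X])^n) (1 - X) := by
      refine IsCoprime.pow_left ⟨1, 1, by ring⟩
    refine hco.dvd_of_dvd_mul_left ?_
    rw [hg]
    exact ⟨2 * (1 - (2-X)^n), by ring⟩
  rw [Polynomial.X_pow_dvd_iff]
  intro d hd
  match d with
  | 0 =>
    rw [coeff_zero_eq_eval_zero]
    rw [hP, hA, hB]
    simp only [eval_sub, eval_mul, eval_finset_sum, eval_mul, eval_C, eval_pow, eval_X,
      eval_ofNat, eval_sub]
    rw [Finset.sum_eq_zero, Finset.sum_eq_zero]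
    · ring
    · intro k hk
      have hk0 : k ≠ 0 := by have := (Finset.mem_Icc.mp hk).1; omega
      rw [zero_pow hk0, mul_zero]
    · intro k hk
      have hk0 : k ≠ 0 := by have := (Finset.mem_Icc.mp hk).1; omega
      have hY0 : eval 0 Y = 0 := by simp [hY]
      rw [hY0, zero_pow hk0, mul_zero]
  | (j+1) =>
    have hcd := Polynomial.coeff_derivative P j
    have h0 : (derivative P).coeff j = 0 := by
      rw [Polynomial.X_pow_dvd_iff] at hdvdg
      exact hdvdg j (by omega)
    rw [h0] at hcd
    have hne : ((j:K) + 1) ≠ 0 := Nat.cast_add_one_ne_zero j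
    have := (mul_eq_zero.mp hcd.symm).resolve_right hne
    exact this


open Polynomial in
private lemma nilpotent_of_spectrum_subset_zero {K V : Type*} [Field K] [IsAlgClosed K]
    [AddCommGroup V] [Module K V] [FiniteDimensional K V] {f : Module.End K V}
    (hf : spectrum K f ⊆ {0}) : IsNilpotent f := by
  have hint : IsIntegral K f := Algebra.IsIntegral.isIntegral f
  have hmon : (minpoly K f).Monic := minpoly.monic hint
  have hsp : Splits (minpoly K f) := IsAlgClosed.splits _
  have hroots : ∀ r ∈ (minpoly K f).roots, r = 0 := by
    intro r hr
    have : (minpoly K f).IsRoot r := isRoot_of_mem_roots hr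
    have hev : f.HasEigenvalue r := Module.End.hasEigenvalue_of_isRoot this
    have : r ∈ spectrum K f := Module.End.hasEigenvalue_iff_mem_spectrum.mp hev
    exact hf this
  have hprod := hsp.eq_prod_roots_of_monic hmon
  have hrepl : (minpoly K f).roots = Multiset.replicate (minpoly K f).roots.card 0 :=
    Multiset.eq_replicate_card.mpr hroots
  have hXpow : minpoly K f = X ^ (minpoly K f).roots.card := by
    rw [hprod, hrepl]
    simp [Multiset.map_replicate, Multiset.prod_replicate]
  refine ⟨(minpoly K f).roots.card, ?_⟩
  have := minpoly.aeval K f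
  rw [hXpow] at this
  simpa using this

private lemma spectrum_subset_zero_of_nilpotent {K V : Type*} [Field K]
    [AddCommGroup V] [Module K V] [FiniteDimensional K V] {f : Module.End K V}
    (hf : IsNilpotent f) : spectrum K f ⊆ {0} := by
  intro μ hμ
  obtain ⟨r, hr⟩ := hf
  have hev : f.HasEigenvalue μ := Module.End.hasEigenvalue_iff_mem_spectrum.mpr hμ
  obtain ⟨v, hv⟩ := hev.exists_hasEigenvector
  have hpow := hv.pow_apply r
  rw [hr] at hpow
  have : μ ^ r • v = 0 := by simpa using hpow.symm
  rcases smul_eq_zero.mp this with h | h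
  · have : μ = 0 := (pow_eq_zero_iff'.mp h).1
    simpa using this
  · exact absurd h hv.2

open Polynomial in
private lemma log_double {K V : Type*} [Field K] [CharZero K] [AddCommGroup V] [Module K V]
    (n : ℕ) (w : Module.End K V) (hw : (1 - w) ^ n = 0) :
    ∑ k ∈ Finset.Icc 1 n, ((k : K)⁻¹) • (1 - w * w) ^ k
      = (2 : K) • ∑ k ∈ Finset.Icc 1 n, ((k : K)⁻¹) • (1 - w) ^ k := by
  set N : Module.End K V := 1 - w with hN
  obtain ⟨Q, hQ⟩ := aux_poly_dvd K n
  have hAv : aeval N (∑ k ∈ Finset.Icc 1 n, C ((k : K)⁻¹) * (2 * X - X ^ 2) ^ k)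
      = ∑ k ∈ Finset.Icc 1 n, ((k:K)⁻¹) • (1 - w*w)^k := by
    rw [map_sum]
    refine Finset.sum_congr rfl fun k hk => ?_
    rw [map_mul, map_pow, aeval_C]
    have h1 : aeval N (2 * X - X^2 : K[X]) = 1 - w * w := by
      rw [map_sub, map_mul, map_pow, aeval_X]
      have h2 : aeval N (2:K[X]) = 2 := map_ofNat _ 2
      rw [h2, hN]; noncomm_ring
    rw [h1, ← Algebra.smul_def]
  have hBv : aeval N (∑ k ∈ Finset.Icc 1 n, C ((k : K)⁻¹) * X ^ k)
      = ∑ k ∈ Finset.Icc 1 n, ((k:K)⁻¹) • (1 - w)^k := by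
    rw [map_sum]
    refine Finset.sum_congr rfl fun k hk => ?_
    rw [map_mul, map_pow, aeval_C, aeval_X, ← Algebra.smul_def, hN]
  have h0 : aeval N ((X:K[X])^(n+1) * Q) = 0 := by
    rw [map_mul, map_pow, aeval_X, pow_succ]
    rw [hw, zero_mul, zero_mul]
  have heq := congrArg (aeval N) hQ
  rw [map_sub, hAv, map_mul, hBv, h0] at heq
  have h2 : aeval N (2:K[X]) = 2 := map_ofNat _ 2
  rw [h2] at heq
  have hfin : (2:K) • (∑ k ∈ Finset.Icc 1 n, ((k:K)⁻¹) • (1 - w)^k)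
      = 2 * (∑ k ∈ Finset.Icc 1 n, ((k:K)⁻¹) • (1 - w)^k) := by
    rw [Algebra.smul_def, map_ofNat]
  rw [hfin]
  exact sub_eq_zero.mp heq

open Polynomial in
/-- If `V` is finite-dimensional over an algebraically closed field `K` and
`h, u ∈ GL(V)` with `u` of infinite order and `h u h⁻¹ = u²`, then `u` is quasi-unipotent
of odd quasi-order `m`, `K` has characteristic zero, and with `e := log (uᵐ)`
(a finite sum, as `1 - uᵐ` is nilpotent) one has `h e h⁻¹ = 2 e`. -/
theorem quasi_unipotent_doubling
    {K : Type*} [Field K] [IsAlgClosed K] {V : Type*} [AddCommGroup V] [Module K V]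
    [FiniteDimensional K V]
    (h u : (Module.End K V)ˣ)
    (hu : ¬ IsOfFinOrder u)
    (hrel : h * u * h⁻¹ = u ^ 2) :
    CharZero K ∧
    ∃ m : ℕ, 0 < m ∧ Odd m ∧
      IsNilpotent ((u : Module.End K V) ^ m - 1) ∧
      (∀ k : ℕ, 0 < k → IsNilpotent ((u : Module.End K V) ^ k - 1) → m ≤ k) ∧
      (∀ e : Module.End K V,
        e = -∑ k ∈ Finset.Icc 1 (Module.finrank K V),
              ((k : K)⁻¹) • ((1 - (u : Module.End K V) ^ m) ^ k) →
        (h : Module.End K V) * e * (↑h⁻¹ : Module.End K V) = (2 : K) • e) := by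
  classical
  have hVnt : Nontrivial V := by
    by_contra hns
    rw [not_nontrivial_iff_subsingleton] at hns
    refine hu ?_
    have h1 : u = 1 := Units.ext (Subsingleton.elim _ _)
    rw [h1]; exact IsOfFinOrder.one
  set a : Module.End K V := (u : Module.End K V) with ha
  -- End-level conjugation relation
  have hvrel : (h : Module.End K V) * a * (↑h⁻¹ : Module.End K V) = a ^ 2 := by
    have := congrArg (Units.val) hrel
    simpa [Units.val_mul, Units.val_pow_eq_pow_val] using this
  have hSeq : (fun x : K => x ^ 2) '' spectrum K a = spectrum K a := by
    calc (fun x : K => x ^ 2) '' spectrum K a = spectrum K (a ^ 2) :=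
          (spectrum.map_pow_of_pos a (by norm_num)).symm
    _ = spectrum K ((h : Module.End K V) * a * (↑h⁻¹ : Module.End K V)) := by rw [hvrel]
    _ = spectrum K a := spectrum.units_conjugate
  have hfin : (spectrum K a).Finite := Module.End.finite_spectrum a
  have hmaps : Set.MapsTo (fun x : K => x ^ 2) (spectrum K a) (spectrum K a) :=
    fun x hx => hSeq ▸ Set.mem_image_of_mem _ hx
  have hsurj : Set.SurjOn (fun x : K => x ^ 2) (spectrum K a) (spectrum K a) :=
    hSeq.symm.subset
  have hinj : Set.InjOn (fun x : K => x ^ 2) (spectrum K a) :=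
    ((hfin.surjOn_iff_bijOn_of_mapsTo hmaps).mp hsurj).injOn
  have hlam0 : (0 : K) ∉ spectrum K a := (spectrum.zero_notMem_iff K).mpr u.isUnit
  -- all eigenvalues are roots of unity of odd order
  have horder : ∀ lam ∈ spectrum K a, Odd (orderOf lam) ∧ 0 < orderOf lam := by
    intro lam hlam
    have hiter : ∀ i : ℕ, lam ^ 2 ^ i ∈ spectrum K a := by
      intro i
      induction i with
      | zero => simpa using hlam
      | succ i ih =>
        rw [pow_succ, pow_mul]
        exact hmaps ih
    obtain ⟨i, -, j, -, hij, hije⟩ :=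
      Set.infinite_univ.exists_ne_map_eq_of_mapsTo
        (f := fun i : ℕ => lam ^ 2 ^ i) (fun i _ => hiter i) hfin
    have hcancel : ∀ i c : ℕ, lam ^ 2 ^ (i + c) = lam ^ 2 ^ i → lam ^ 2 ^ c = lam := by
      intro i
      induction i with
      | zero => intro c hc; simpa using hc
      | succ i ih =>
        intro c hc
        refine ih c ?_
        refine hinj (hiter (i + c)) (hiter i) ?_
        show (lam ^ 2 ^ (i + c)) ^ 2 = (lam ^ 2 ^ i) ^ 2
        rw [← pow_mul, ← pow_mul, ← pow_succ, ← pow_succ]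
        have : i + c + 1 = i + 1 + c := by omega
        rw [this]
        exact hc
    obtain ⟨i', c, hcpos, heq⟩ : ∃ i' c : ℕ, 0 < c ∧ lam ^ 2 ^ (i' + c) = lam ^ 2 ^ i' := by
      rcases hij.lt_or_gt with hlt | hlt
      · exact ⟨i, j - i, by omega, by rw [Nat.add_sub_cancel' hlt.le]; exact hije.symm⟩
      · exact ⟨j, i - j, by omega, by rw [Nat.add_sub_cancel' hlt.le]; exact hije⟩
    have hpow : lam ^ 2 ^ c = lam := hcancel i' c heq
    have hlamne : lam ≠ 0 := fun hc => hlam0 (hc ▸ hlam)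
    have hone : lam ^ (2 ^ c - 1) = 1 := by
      have h2c : 1 ≤ 2 ^ c := Nat.one_le_two_pow
      have : lam ^ (2 ^ c - 1) * lam = 1 * lam := by
        rw [one_mul, ← pow_succ]
        rw [Nat.sub_add_cancel h2c]
        exact hpow
      exact mul_right_cancel₀ hlamne this
    have hcne : 2 ^ c - 1 ≠ 0 := by
      have : 2 ≤ 2 ^ c := by
        calc 2 = 2 ^ 1 := (pow_one 2).symm
        _ ≤ 2 ^ c := Nat.pow_le_pow_right (by norm_num) hcpos
      omega
    have hfo : IsOfFinOrder lam := isOfFinOrder_iff_pow_eq_one.mpr ⟨2 ^ c - 1, by omega, hone⟩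
    refine ⟨?_, hfo.orderOf_pos⟩
    have hdvd : orderOf lam ∣ 2 ^ c - 1 := orderOf_dvd_of_pow_eq_one hone
    have hOdd : Odd (2 ^ c - 1) := by
      have heven : Even (2 ^ c) := by
        rw [Nat.even_pow]
        exact ⟨even_two, by omega⟩
      exact Nat.Even.sub_odd Nat.one_le_two_pow heven odd_one
    rw [← Nat.not_even_iff_odd] at hOdd ⊢
    intro hev
    exact hOdd ((even_iff_two_dvd.mp hev).trans hdvd |> even_iff_two_dvd.mpr)
  set S : Finset K := hfin.toFinset with hS
  set m₀ : ℕ := S.lcm orderOf with hm₀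
  have hm₀odd : Odd m₀ := by
    have hdvd : m₀ ∣ ∏ lam ∈ S, orderOf lam :=
      Finset.lcm_dvd fun b hb => Finset.dvd_prod_of_mem _ hb
    have hprod : Odd (∏ lam ∈ S, orderOf lam) := by
      refine Finset.prod_induction _ Odd (fun x y => Odd.mul) odd_one ?_
      intro lam hlam
      exact (horder lam (hfin.mem_toFinset.mp hlam)).1
    rw [← Nat.not_even_iff_odd] at hprod ⊢
    intro hev
    exact hprod (even_iff_two_dvd.mpr ((even_iff_two_dvd.mp hev).trans hdvd))
  have hm₀pos : 0 < m₀ := hm₀odd.pos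
  -- nilpotency criterion via roots of unity
  have hunip : ∀ k : ℕ, 0 < k → (∀ lam ∈ spectrum K a, lam ^ k = 1) →
      IsNilpotent (a ^ k - 1) := by
    intro k hk hroot
    apply nilpotent_of_spectrum_subset_zero
    have hdeg : 0 < (X ^ k - Polynomial.C (1:K)).degree := by
      rw [Polynomial.degree_X_pow_sub_C hk]
      exact_mod_cast hk
    have hmap := spectrum.map_polynomial_aeval_of_degree_pos a (X ^ k - Polynomial.C (1:K)) hdeg
    have haev : Polynomial.aeval a (X ^ k - Polynomial.C (1:K)) = a ^ k - 1 := by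
      simp
    rw [haev] at hmap
    rw [hmap]
    rintro x ⟨lam, hlam, rfl⟩
    simp [hroot lam hlam]
  have hm₀nil : IsNilpotent (a ^ m₀ - 1) := by
    refine hunip m₀ hm₀pos fun lam hlam => ?_
    have : orderOf lam ∣ m₀ := Finset.dvd_lcm (hfin.mem_toFinset.mpr hlam)
    exact orderOf_dvd_iff_pow_eq_one.mp this
  have hroots : ∀ k : ℕ, IsNilpotent (a ^ k - 1) → ∀ lam ∈ spectrum K a, lam ^ k = 1 := by
    intro k hnil lam hlam
    have hsub := spectrum.subset_polynomial_aeval a (X ^ k - Polynomial.C (1:K))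
    have hmem : lam ^ k - 1 ∈ spectrum K (Polynomial.aeval a (X ^ k - Polynomial.C (1:K))) := by
      refine hsub ⟨lam, hlam, by simp⟩
    have haev : Polynomial.aeval a (X ^ k - Polynomial.C (1:K)) = a ^ k - 1 := by simp
    rw [haev] at hmem
    have := spectrum_subset_zero_of_nilpotent hnil hmem
    have h0 : lam ^ k - 1 = 0 := this
    exact sub_eq_zero.mp h0
  -- characteristic zero
  have hchar : CharZero K := by
    rcases CharP.char_is_prime_or_zero K (ringChar K) with hp | h0
    · exfalso
      set p := ringChar K with hpdef
      haveI : Fact p.Prime := ⟨hp⟩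
      haveI hntE : Nontrivial (Module.End K V) := by
        obtain ⟨v, hv⟩ := exists_ne (0 : V)
        exact ⟨1, 0, fun hc => hv (by simpa using LinearMap.ext_iff.mp hc v)⟩
      haveI : CharP (Module.End K V) p :=
        charP_of_injective_algebraMap (algebraMap K (Module.End K V)).injective p
      obtain ⟨r, hr⟩ := hm₀nil
      have hle : r ≤ p ^ r := (Nat.lt_pow_self (n := r) hp.one_lt).le
      have hNpr : (a ^ m₀ - 1) ^ p ^ r = 0 := by
        rw [← Nat.sub_add_cancel hle, pow_add, hr, mul_zero]
      have hpow : (a ^ m₀) ^ p ^ r = 1 := by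
        have hsplit : a ^ m₀ = 1 + (a ^ m₀ - 1) := by abel
        rw [hsplit, add_pow_char_pow_of_commute p r (Commute.one_left (a ^ m₀ - 1)), one_pow, hNpr,
          add_zero]
      refine hu (isOfFinOrder_iff_pow_eq_one.mpr ⟨m₀ * p ^ r, Nat.mul_pos hm₀pos (pow_pos hp.pos r), ?_⟩)
      refine Units.ext ?_
      rw [Units.val_pow_eq_pow_val, Units.val_one, ← ha, pow_mul]
      exact hpow
    · haveI : CharP K 0 := h0 ▸ ringChar.charP K
      exact CharP.charP_to_charZero K
  haveI := hchar
  -- minimal m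
  have hexists : ∃ k, 0 < k ∧ IsNilpotent (a ^ k - 1) := ⟨m₀, hm₀pos, hm₀nil⟩
  set m : ℕ := Nat.find hexists with hm
  obtain ⟨hmpos, hmnil⟩ := Nat.find_spec hexists
  have hmin : ∀ k, 0 < k → IsNilpotent (a ^ k - 1) → m ≤ k := fun k hk hnk =>
    Nat.find_le ⟨hk, hnk⟩
  have hm₀dvd : m₀ ∣ m :=
    Finset.lcm_dvd fun lam hlam =>
      orderOf_dvd_of_pow_eq_one (hroots m hmnil lam (hfin.mem_toFinset.mp hlam))
  have hmeq : m = m₀ := le_antisymm (hmin m₀ hm₀pos hm₀nil) (Nat.le_of_dvd hmpos hm₀dvd)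
  have hmodd : Odd m := hmeq ▸ hm₀odd
  refine ⟨hchar, m, hmpos, hmodd, hmnil, hmin, ?_⟩
  intro e he
  set n := Module.finrank K V with hn
  set w : Module.End K V := a ^ m with hwdef
  have hNnil : IsNilpotent (1 - w) := by
    have : (1 : Module.End K V) - w = -(w - 1) := by rw [neg_sub]
    rw [this]
    exact (hwdef ▸ hmnil).neg
  have hNpow : (1 - w) ^ n = 0 := by
    have hcp := (LinearMap.isNilpotent_iff_charpoly (1 - w)).mp hNnil
    have hch := LinearMap.aeval_self_charpoly (1 - w)
    rw [hcp] at hch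
    simpa using hch
  have hkey := log_double (K := K) n w hNpow
  -- conjugation identity at units level
  have hcw : (h : Module.End K V) * w * (↑h⁻¹ : Module.End K V) = w * w := by
    have hU : h * u ^ m * h⁻¹ = u ^ m * u ^ m := by
      calc h * u ^ m * h⁻¹ = (h * u * h⁻¹) ^ m := by rw [conj_pow]
      _ = (u ^ 2) ^ m := by rw [hrel]
      _ = u ^ m * u ^ m := by rw [← pow_mul, two_mul, pow_add]
    have := congrArg Units.val hU
    simpa [Units.val_mul, Units.val_pow_eq_pow_val, ← ha, ← hwdef] using this
  have hconj1 : (h : Module.End K V) * (1 - w) * (↑h⁻¹ : Module.End K V) = 1 - w * w := by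
    have hexp : (h : Module.End K V) * (1 - w) * (↑h⁻¹ : Module.End K V)
        = (h : Module.End K V) * (↑h⁻¹ : Module.End K V)
          - (h : Module.End K V) * w * (↑h⁻¹ : Module.End K V) := by
      noncomm_ring
    rw [hexp, hcw, Units.mul_inv]
  have hconjk : ∀ k : ℕ, (h : Module.End K V) * (1 - w) ^ k * (↑h⁻¹ : Module.End K V)
      = (1 - w * w) ^ k := by
    intro k
    rw [← Units.conj_pow, hconj1]
  rw [he]
  calc (h : Module.End K V) *
        (-∑ k ∈ Finset.Icc 1 n, ((k : K)⁻¹) • (1 - w) ^ k) * (↑h⁻¹ : Module.End K V)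
      = -∑ k ∈ Finset.Icc 1 n, ((k : K)⁻¹) •
          ((h : Module.End K V) * (1 - w) ^ k * (↑h⁻¹ : Module.End K V)) := by
        rw [mul_neg, neg_mul, Finset.mul_sum, Finset.sum_mul]
        congr 1
        refine Finset.sum_congr rfl fun k _ => ?_
        rw [mul_smul_comm, smul_mul_assoc]
  _ = -∑ k ∈ Finset.Icc 1 n, ((k : K)⁻¹) • (1 - w * w) ^ k := by
        congr 1
        exact Finset.sum_congr rfl fun k _ => by rw [hconjk k]
  _ = (2 : K) • (-∑ k ∈ Finset.Icc 1 n, ((k : K)⁻¹) • (1 - w) ^ k) := by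
        rw [hkey, smul_neg]
end

section
/- The subgroup of polynomial automorphisms of the affine plane over ℚ generated by S(x,y) = (y, 2x) and T(x,y) = (x, y + x²) is isomorphic to the one-relator group ⟨σ, τ | σ²τσ⁻² = τ²⟩. -/
open MvPolynomial

/-- The single relation `σ² τ σ⁻² τ⁻²` defining `Γ = ⟨σ, τ ∣ σ²τσ⁻² = τ²⟩`. -/
def dsRels : Set (FreeGroup Bool) :=
  {(FreeGroup.of true) ^ 2 * FreeGroup.of false * (FreeGroup.of true)⁻¹ ^ 2 *
    ((FreeGroup.of false) ^ 2)⁻¹}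

-- Auxiliary development below.


set_option linter.unusedSectionVars false
namespace DSAux

abbrev PP := MvPolynomial (Fin 2) ℚ
abbrev AutPP := PP ≃ₐ[ℚ] PP

lemma aut_inv (e : AutPP) : e⁻¹ = e.symm := rfl

lemma mapC (e : AutPP) (a : ℚ) : e (C a) = C a := by
  have := e.commutes a
  simpa [MvPolynomial.algebraMap_eq] using this

lemma ext2 {α β : AutPP} (h0 : α (X 0) = β (X 0)) (h1 : α (X 1) = β (X 1)) : α = β := by
  have hX : ∀ i : Fin 2, α (X i) = β (X i) := by
    intro i; fin_cases i <;> assumption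
  apply AlgEquiv.ext
  intro p
  induction p using MvPolynomial.induction_on with
  | C a => rw [mapC, mapC]
  | add p q hp hq => rw [map_add, map_add, hp, hq]
  | mul_X p i hp => rw [map_mul, map_mul, hp, hX]

section ST
variable (S T : AutPP)
  (hS0 : S (X 0) = X 1) (hS1 : S (X 1) = 2 * X 0)
  (hT0 : T (X 0) = X 0) (hT1 : T (X 1) = X 1 + (X 0) ^ 2)

lemma two_eq_C : (2 : PP) = C (2:ℚ) := (map_ofNat C 2).symm

include hS0 hS1 in
lemma hSi0 : S⁻¹ (X 0) = C (1/2 : ℚ) * X 1 := by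
  rw [aut_inv]
  apply (AlgEquiv.symm_apply_eq S).mpr
  rw [map_mul, hS1, mapC, two_eq_C, ← mul_assoc, ← C_mul]
  norm_num

include hS0 in
lemma hSi1 : S⁻¹ (X 1) = X 0 := by
  rw [aut_inv]; exact (AlgEquiv.symm_apply_eq S).mpr hS0.symm

include hT0 hT1 in
lemma Tpow (k : ℤ) : (T^k) (X 0) = X 0 ∧ (T^k) (X 1) = X 1 + C (k:ℚ) * (X 0)^2 := by
  have hTi0 : T⁻¹ (X 0) = X 0 := by
    rw [aut_inv]; exact (AlgEquiv.symm_apply_eq T).mpr hT0.symm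
  have hTi1 : T⁻¹ (X 1) = X 1 - (X 0)^2 := by
    rw [aut_inv]
    apply (AlgEquiv.symm_apply_eq T).mpr
    rw [map_sub, map_pow, hT0, hT1]; ring
  induction k using Int.induction_on with
  | zero => simp
  | succ i ih =>
    rw [zpow_add_one, AlgEquiv.mul_apply, AlgEquiv.mul_apply, hT0, hT1]
    refine ⟨ih.1, ?_⟩
    rw [map_add, map_pow, ih.1, ih.2]
    push_cast
    simp only [map_add, map_one, map_natCast]
    ring
  | pred i ih =>
    rw [zpow_sub_one, AlgEquiv.mul_apply, AlgEquiv.mul_apply, hTi0, hTi1]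
    refine ⟨ih.1, ?_⟩
    rw [map_sub, map_pow, ih.1, ih.2]
    push_cast
    simp only [map_sub, map_neg, map_one, map_natCast]
    ring

include hS0 hS1 hT0 hT1 in
lemma Bpow (k : ℤ) :
    ((S * T * S⁻¹)^k) (X 0) = X 0 + C ((k:ℚ)/2) * (X 1)^2 ∧
    ((S * T * S⁻¹)^k) (X 1) = X 1 := by
  rw [conj_zpow, AlgEquiv.mul_apply, AlgEquiv.mul_apply, AlgEquiv.mul_apply,
    AlgEquiv.mul_apply, hSi0 S hS0 hS1, hSi1 S hS0, map_mul, mapC,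
    (Tpow T hT0 hT1 k).1, (Tpow T hT0 hT1 k).2, map_mul, mapC, map_add, map_mul,
    map_pow, mapC, hS0, hS1]
  refine ⟨?_, ?_⟩
  · rw [two_eq_C, mul_add, ← mul_assoc, ← C_mul, ← mul_assoc, ← C_mul]
    norm_num
    rw [← map_intCast (C : ℚ →+* PP) k, ← C_mul, one_div, inv_mul_eq_div]
  · rfl

include hS0 hS1 in
lemma Ssq0 : (S^2) (X 0) = C (2:ℚ) * X 0 := by
  rw [pow_two, AlgEquiv.mul_apply, hS0, hS1, two_eq_C]

include hS0 hS1 in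
lemma Ssq (n : ℕ) : ((S^2)^n) (X 0) = C ((2:ℚ)^n) * X 0 := by
  induction n with
  | zero => simp
  | succ n ih =>
    rw [pow_succ, AlgEquiv.mul_apply, Ssq0 S hS0 hS1, map_mul, mapC, ih, ← mul_assoc,
      ← C_mul, pow_succ, mul_comm ((2:ℚ)^n) 2]

omit hS0 hS1 hT0 hT1

/-! ### Point action -/

def vec (q : ℚ × ℚ) : Fin 2 → ℚ := ![q.1, q.2]

noncomputable def pt (α : AutPP) (q : ℚ × ℚ) : ℚ × ℚ :=
  (aeval (vec q) (α⁻¹ (X 0)), aeval (vec q) (α⁻¹ (X 1)))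

lemma aeval_vec_X0 (q : ℚ × ℚ) : aeval (vec q) (X 0 : PP) = q.1 := by simp [vec]
lemma aeval_vec_X1 (q : ℚ × ℚ) : aeval (vec q) (X 1 : PP) = q.2 := by simp [vec]

lemma ev_comp (β : AutPP) (q : ℚ × ℚ) (f : PP) :
    aeval (vec q) (β⁻¹ f) = aeval (vec (pt β q)) f := by
  have h : (aeval (vec q)).comp (β⁻¹ : PP ≃ₐ[ℚ] PP).toAlgHom
      = aeval (vec (pt β q)) := by
    apply MvPolynomial.algHom_ext
    intro i
    fin_cases i
    · simp [pt, vec]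
    · simp [pt, vec]
  exact congrArg (fun g => g f) h ▸ rfl

lemma pt_mul (α β : AutPP) (q : ℚ × ℚ) : pt (α * β) q = pt α (pt β q) := by
  show (aeval (vec q) ((α * β)⁻¹ (X 0)), aeval (vec q) ((α * β)⁻¹ (X 1))) = _
  rw [mul_inv_rev, AlgEquiv.mul_apply, AlgEquiv.mul_apply,
    ev_comp β q (α⁻¹ (X 0)), ev_comp β q (α⁻¹ (X 1))]
  rfl

lemma pt_one (q : ℚ × ℚ) : pt 1 q = q := by
  show (aeval (vec q) ((1 : AutPP)⁻¹ (X 0)), aeval (vec q) ((1 : AutPP)⁻¹ (X 1))) = q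
  rw [inv_one]
  simp only [AlgEquiv.one_apply, aeval_vec_X0, aeval_vec_X1]

include hT0 hT1 in
lemma pt_T (k : ℤ) (q : ℚ × ℚ) : pt (T^k) q = (q.1, q.2 - (k:ℚ) * q.1^2) := by
  show (aeval (vec q) ((T^k)⁻¹ (X 0)), aeval (vec q) ((T^k)⁻¹ (X 1))) = _
  rw [← zpow_neg, (Tpow T hT0 hT1 (-k)).1, (Tpow T hT0 hT1 (-k)).2]
  simp only [map_add, map_mul, map_pow, aeval_C, aeval_vec_X0, aeval_vec_X1,
    Algebra.algebraMap_self_apply]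
  simp only [Prod.mk.injEq]
  refine ⟨trivial, by push_cast; ring⟩

include hS0 hS1 hT0 hT1 in
lemma pt_B (k : ℤ) (q : ℚ × ℚ) :
    pt ((S * T * S⁻¹)^k) q = (q.1 - (k:ℚ)/2 * q.2^2, q.2) := by
  show (aeval (vec q) (((S * T * S⁻¹)^k)⁻¹ (X 0)), aeval (vec q) (((S * T * S⁻¹)^k)⁻¹ (X 1))) = _
  rw [← zpow_neg, (Bpow S T hS0 hS1 hT0 hT1 (-k)).1, (Bpow S T hS0 hS1 hT0 hT1 (-k)).2]
  simp only [map_add, map_mul, map_pow, aeval_C, aeval_vec_X0, aeval_vec_X1,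
    Algebra.algebraMap_self_apply]
  simp only [Prod.mk.injEq]
  refine ⟨by push_cast; ring, trivial⟩

include hS0 hS1 in
lemma pt_S (q : ℚ × ℚ) : pt S q = (q.2/2, q.1) := by
  show (aeval (vec q) (S⁻¹ (X 0)), aeval (vec q) (S⁻¹ (X 1))) = _
  rw [hSi0 S hS0 hS1, hSi1 S hS0]
  simp only [map_mul, aeval_C, aeval_vec_X0, aeval_vec_X1, Prod.mk.injEq]
  refine ⟨?_, trivial⟩
  rw [show (algebraMap ℚ ℚ) (1/2 : ℚ) = (1/2 : ℚ) from rfl]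
  ring

include hS0 hS1 in
lemma pt_Sinv (q : ℚ × ℚ) : pt S⁻¹ q = (q.2, 2 * q.1) := by
  show (aeval (vec q) (S⁻¹⁻¹ (X 0)), aeval (vec q) (S⁻¹⁻¹ (X 1))) = _
  rw [inv_inv, hS0, hS1]
  simp only [map_mul, map_ofNat, aeval_vec_X0, aeval_vec_X1]

include hS0 hS1 in
lemma orbS (j : ℤ) : ∃ a : ℤ, pt (S^j) (16,16) = ((2:ℚ)^a, (2:ℚ)^a) ∨
    pt (S^j) (16,16) = ((2:ℚ)^a, (2:ℚ)^(a+1)) := by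
  induction j using Int.induction_on with
  | zero =>
    refine ⟨4, Or.inl ?_⟩
    rw [zpow_zero, pt_one]
    norm_num
  | succ i ih =>
    obtain ⟨a, h | h⟩ := ih
    · refine ⟨a - 1, Or.inr ?_⟩
      rw [show (i:ℤ) + 1 = 1 + i from by ring, zpow_one_add, pt_mul, h, pt_S S hS0 hS1]
      simp only [Prod.mk.injEq]
      refine ⟨?_, ?_⟩
      · rw [zpow_sub_one₀ (two_ne_zero), div_eq_mul_inv]
      · rw [sub_add_cancel]
    · refine ⟨a, Or.inl ?_⟩
      rw [show (i:ℤ) + 1 = 1 + i from by ring, zpow_one_add, pt_mul, h, pt_S S hS0 hS1]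
      simp only [Prod.mk.injEq]
      refine ⟨?_, trivial⟩
      rw [zpow_add_one₀ (two_ne_zero)]
      ring
  | pred i ih =>
    obtain ⟨a, h | h⟩ := ih
    · refine ⟨a, Or.inr ?_⟩
      rw [show -(i:ℤ) - 1 = (-1) + (-(i:ℤ)) from by ring, zpow_add, zpow_neg_one, pt_mul, h,
        pt_Sinv S hS0 hS1]
      simp only [Prod.mk.injEq]
      refine ⟨trivial, ?_⟩
      rw [zpow_add_one₀ (two_ne_zero)]
      ring
    · refine ⟨a + 1, Or.inl ?_⟩
      rw [show -(i:ℤ) - 1 = (-1) + (-(i:ℤ)) from by ring, zpow_add, zpow_neg_one, pt_mul, h,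
        pt_Sinv S hS0 hS1]
      simp only [Prod.mk.injEq]
      refine ⟨trivial, ?_⟩
      rw [zpow_add_one₀ (two_ne_zero)]
      ring

include hS0 hS1 in
lemma S_order {j : ℤ} (h : S^j = 1) : j = 0 := by
  by_contra hj
  have hn : S ^ (j.natAbs) = 1 := by
    rcases Int.natAbs_eq j with he | he
    · rw [← zpow_natCast, ← he, h]
    · have : S ^ (-(j.natAbs:ℤ)) = 1 := by rw [← he, h]
      rw [zpow_neg, inv_eq_one, zpow_natCast] at this
      exact this
  have h2 : ((S^2))^(j.natAbs) = 1 := by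
    rw [← pow_mul, mul_comm, pow_mul, hn, one_pow]
  have h3 := Ssq S hS0 hS1 (j.natAbs)
  rw [h2, AlgEquiv.one_apply] at h3
  have hc := congrArg (MvPolynomial.coeff (Finsupp.single 0 1)) h3
  rw [MvPolynomial.coeff_C_mul, MvPolynomial.coeff_X, if_pos rfl, mul_one] at hc
  have : (1:ℚ) < 2 ^ (j.natAbs) := one_lt_pow₀ one_lt_two (Int.natAbs_ne_zero.mpr hj)
  rw [← hc] at this
  exact lt_irrefl _ this

/-! ### Ping-pong sets -/

def domX (q : ℚ × ℚ) : Prop := 16 ≤ |q.1| ∧ 16 ≤ |q.2| ∧ 4*|q.1| ≤ q.2^2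

def domY (q : ℚ × ℚ) : Prop := 16 ≤ |q.1| ∧ 16 ≤ |q.2| ∧ 4*|q.2| ≤ q.1^2

lemma keyIneq {a b c : ℚ} (ha : 16 ≤ |a|) (hb : 16 ≤ |b|) (hba : 4*|b| ≤ a^2)
    (hc : 1/2 ≤ |c|) :
    16 ≤ |b - c*a^2| ∧ 4*|a| ≤ (b - c*a^2)^2 ∧ 2*|a| < |b - c*a^2| := by
  have h0 : |a|^2 = a^2 := sq_abs a
  have h1 : |c*a^2| = |c| * a^2 := by rw [abs_mul, abs_of_nonneg (sq_nonneg a)]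
  have h2 : |c*a^2| - |b| ≤ |b - c*a^2| := by
    rw [abs_sub_comm]; exact abs_sub_abs_le_abs_sub _ _
  have hc2 : (1/2) * a^2 ≤ |c| * a^2 :=
    mul_le_mul_of_nonneg_right hc (sq_nonneg a)
  have h3 : (1/4) * a^2 ≤ |b - c*a^2| := by nlinarith
  have ha2 : 16*|a| ≤ a^2 := by nlinarith [sq_nonneg (|a| - 16)]
  have hapos : (0:ℚ) < |a| := lt_of_lt_of_le (by norm_num) ha
  refine ⟨by nlinarith, ?_, by nlinarith⟩
  have h4 : ((1/4) * a^2) * ((1/4) * a^2) ≤ |b - c*a^2| * |b - c*a^2| :=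
    mul_self_le_mul_self (by positivity) h3
  have h5 : |b - c*a^2| * |b - c*a^2| = (b - c*a^2)^2 := by
    rw [abs_mul_abs_self]; ring
  nlinarith [mul_le_mul_of_nonneg_left ha2 (show (0:ℚ) ≤ a^2 from sq_nonneg a),
    mul_le_mul_of_nonneg_left ha2 (show (0:ℚ) ≤ 16*|a| from by positivity)]

end ST

/-! ### Syllable lists -/

section Lists
variable {G H : Type*} [Group G] [Group H]

abbrev Syl := Bool × ℤ

def evalL (ν : Bool → G) (L : List Syl) : G := (L.map fun p => ν p.1 ^ p.2).prod

def Ok (L : List Syl) : Prop := L.Chain' (fun p q => p.1 ≠ q.1) ∧ ∀ p ∈ L, p.2 ≠ 0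

lemma evalL_nil (ν : Bool → G) : evalL ν [] = 1 := rfl

lemma evalL_cons (ν : Bool → G) (c : Bool) (k : ℤ) (t : List Syl) :
    evalL ν ((c,k) :: t) = ν c ^ k * evalL ν t := by
  simp [evalL]

def push (c : Bool) (k : ℤ) (L : List Syl) : List Syl :=
  match L with
  | [] => if k = 0 then [] else [(c,k)]
  | (c',k') :: t => if c = c' then (if k + k' = 0 then t else (c, k+k') :: t)
      else (if k = 0 then (c',k')::t else (c,k) :: (c',k')::t)

lemma evalL_push (ν : Bool → G) (c : Bool) (k : ℤ) (L : List Syl) :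
    evalL ν (push c k L) = ν c ^ k * evalL ν L := by
  cases L with
  | nil =>
    by_cases hk : k = 0 <;> simp [push, hk, evalL_cons, evalL_nil]
  | cons p t =>
    obtain ⟨c', k'⟩ := p
    by_cases hc : c = c'
    · subst hc
      by_cases hk : k + k' = 0
      · rw [push, if_pos rfl, if_pos hk, evalL_cons, ← mul_assoc, ← zpow_add, hk, zpow_zero,
          one_mul]
      · rw [push, if_pos rfl, if_neg hk, evalL_cons, evalL_cons, ← mul_assoc, ← zpow_add]
    · by_cases hk : k = 0
      · rw [push, if_neg hc, if_pos hk, hk, zpow_zero, one_mul]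
      · rw [push, if_neg hc, if_neg hk, evalL_cons]

lemma Ok.push {L : List Syl} (h : Ok L) (c : Bool) (k : ℤ) : Ok (push c k L) := by
  obtain ⟨hch, hnz⟩ := h
  cases L with
  | nil =>
    by_cases hk : k = 0
    · simp [Ok, DSAux.push, hk, List.Chain']
    · simp [Ok, DSAux.push, hk, List.Chain']
  | cons p t =>
    obtain ⟨c', k'⟩ := p
    by_cases hc : c = c'
    · subst hc
      by_cases hk : k + k' = 0
      · rw [DSAux.push, if_pos rfl, if_pos hk]
        exact ⟨hch.tail, fun p hp => hnz p (List.mem_cons_of_mem _ hp)⟩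
      · rw [DSAux.push, if_pos rfl, if_neg hk]
        constructor
        · simp only [List.Chain'] at hch ⊢; rw [List.isChain_cons] at hch ⊢
          exact ⟨hch.1, hch.2⟩
        · intro p hp
          rcases List.mem_cons.mp hp with rfl | hp
          · exact hk
          · exact hnz p (List.mem_cons_of_mem _ hp)
    · by_cases hk : k = 0
      · rw [DSAux.push, if_neg hc, if_pos hk]
        exact ⟨hch, hnz⟩
      · rw [DSAux.push, if_neg hc, if_neg hk]
        constructor
        · simp only [List.Chain']; rw [List.isChain_cons_cons]
          exact ⟨hc, hch⟩
        · intro p hp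
          rcases List.mem_cons.mp hp with rfl | hp
          · exact hk
          · exact hnz p hp

def conjS (p : Syl) : Syl := if p.1 then (false, 2 * p.2) else (true, p.2)

def conjL (L : List Syl) : List Syl := L.map conjS

lemma Ok.conj {L : List Syl} (h : Ok L) : Ok (conjL L) := by
  obtain ⟨hch, hnz⟩ := h
  constructor
  · simp only [List.Chain'] at hch ⊢; rw [conjL, List.isChain_map]
    refine hch.imp ?_
    intro p q hpq
    obtain ⟨cp, kp⟩ := p
    obtain ⟨cq, kq⟩ := q
    cases cp <;> cases cq <;> simp [conjS] at hpq ⊢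
  · intro p hp
    rw [conjL, List.mem_map] at hp
    obtain ⟨q, hq, rfl⟩ := hp
    obtain ⟨cq, kq⟩ := q
    have := hnz _ hq
    cases cq <;> simp [conjS] at this ⊢ <;> exact this

lemma evalL_conj (ν : Bool → G) (s : G) (hf : s * ν false * s⁻¹ = ν true)
    (ht : s * ν true * s⁻¹ = ν false ^ 2) (L : List Syl) :
    evalL ν (conjL L) = s * evalL ν L * s⁻¹ := by
  induction L with
  | nil => simp [conjL, evalL_nil]
  | cons p t ih =>
    obtain ⟨c, k⟩ := p
    have hstep : conjL ((c,k) :: t) = conjS (c,k) :: conjL t := rfl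
    cases c
    · have : conjS (false, k) = (true, k) := rfl
      rw [hstep, this, evalL_cons, evalL_cons, ih, ← hf, conj_zpow]
      group
    · have : conjS (true, k) = (false, 2*k) := rfl
      rw [hstep, this, evalL_cons, evalL_cons, ih]
      have h2 : ν false ^ (2*k) = (s * ν true * s⁻¹)^k := by
        rw [ht, ← zpow_natCast (ν false) 2, ← zpow_mul]
        norm_num
      rw [h2, conj_zpow]
      group

lemma evalL_conj_iter (ν : Bool → G) (s : G) (hf : s * ν false * s⁻¹ = ν true)
    (ht : s * ν true * s⁻¹ = ν false ^ 2) (m : ℕ) (L : List Syl) :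
    evalL ν (conjL^[m] L) = s^m * evalL ν L * (s^m)⁻¹ := by
  induction m generalizing L with
  | zero => simp
  | succ m ih =>
    rw [Function.iterate_succ_apply', evalL_conj ν s hf ht, ih, pow_succ]
    group

lemma Ok.conj_iter {L : List Syl} (h : Ok L) (m : ℕ) : Ok (conjL^[m] L) := by
  induction m with
  | zero => simpa
  | succ m ih => rw [Function.iterate_succ_apply']; exact ih.conj

lemma conj_iter_single (m : ℕ) (e : ℤ) (he : e ≠ 0) :
    ∃ c k, conjL^[m] [(false, e)] = [(c,k)] ∧ k ≠ 0 := by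
  induction m with
  | zero => exact ⟨false, e, rfl, he⟩
  | succ m ih =>
    obtain ⟨c, k, hL, hk⟩ := ih
    rw [Function.iterate_succ_apply', hL]
    cases c
    · exact ⟨true, k, rfl, hk⟩
    · exact ⟨false, 2*k, rfl, by simpa using hk⟩

lemma evalL_hom (φ : G →* H) (ν : Bool → G) (L : List Syl) :
    φ (evalL ν L) = evalL (fun b => φ (ν b)) L := by
  induction L with
  | nil => simp [evalL_nil]
  | cons p t ih =>
    obtain ⟨c, k⟩ := p
    rw [evalL_cons, evalL_cons, map_mul, map_zpow, ih]

end Lists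
end DSAux

namespace DSAux

def OutP (c : Bool) (r : ℚ × ℚ) : Prop :=
  if c then domY r ∧ 2*|r.2| < |r.1| else domX r ∧ 2*|r.1| < |r.2|

section PingPong
variable (S T : AutPP)
  (hS0 : S (X 0) = X 1) (hS1 : S (X 1) = 2 * X 0)
  (hT0 : T (X 0) = X 0) (hT1 : T (X 1) = X 1 + (X 0) ^ 2)

noncomputable def τA : Bool → AutPP := fun b => if b then S*T*S⁻¹ else T

lemma kabs {k : ℤ} (hk : k ≠ 0) : (1:ℚ) ≤ |(k:ℚ)| := by
  exact_mod_cast Int.one_le_abs hk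

include hT0 hT1 in
lemma stepT {k : ℤ} (hk : k ≠ 0) {q : ℚ × ℚ} (h : domY q) : OutP false (pt (T^k) q) := by
  rw [OutP, if_neg (by simp), pt_T T hT0 hT1]
  obtain ⟨h1, h2, h3⟩ := h
  have hc : (1:ℚ)/2 ≤ |(k:ℚ)| := by linarith [kabs hk]
  obtain ⟨g1, g2, g3⟩ := keyIneq h1 h2 h3 hc
  exact ⟨⟨h1, g1, g2⟩, g3⟩

include hS0 hS1 hT0 hT1 in
lemma stepB {k : ℤ} (hk : k ≠ 0) {q : ℚ × ℚ} (h : domX q) :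
    OutP true (pt ((S*T*S⁻¹)^k) q) := by
  rw [OutP, if_pos rfl, pt_B S T hS0 hS1 hT0 hT1]
  obtain ⟨h1, h2, h3⟩ := h
  have hc : (1:ℚ)/2 ≤ |(k:ℚ)/2| := by
    rw [abs_div, abs_two]
    linarith [kabs hk]
  obtain ⟨g1, g2, g3⟩ := keyIneq h2 h1 h3 hc
  exact ⟨⟨g1, h2, g2⟩, g3⟩

lemma base_dom : domX (16,16) ∧ domY (16,16) := by
  constructor <;> constructor <;> norm_num [domX, domY]

include hS0 hS1 hT0 hT1 in
lemma chainA : ∀ (rest : List Syl) (c : Bool) (k : ℤ), Ok ((c,k)::rest) →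
    OutP c (pt (evalL (τA S T) ((c,k)::rest)) (16,16)) := by
  intro rest
  induction rest with
  | nil =>
    intro c k hok
    have hk : k ≠ 0 := hok.2 (c,k) (by simp)
    have he : evalL (τA S T) [(c,k)] = τA S T c ^ k := by
      rw [evalL_cons, evalL_nil, mul_one]
    rw [he]
    cases c
    · exact stepT T hT0 hT1 hk (base_dom).2
    · exact stepB S T hS0 hS1 hT0 hT1 hk (base_dom).1
  | cons p t ih =>
    intro c k hok
    obtain ⟨c', k'⟩ := p
    have hk : k ≠ 0 := hok.2 (c,k) (by simp)
    have hok' : Ok ((c',k')::t) :=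
      ⟨hok.1.tail, fun p hp => hok.2 p (List.mem_cons_of_mem _ hp)⟩
    have hcc : c ≠ c' := (List.isChain_cons_cons.mp hok.1).1
    have he : evalL (τA S T) ((c,k)::(c',k')::t)
        = τA S T c ^ k * evalL (τA S T) ((c',k')::t) := evalL_cons _ _ _ _
    rw [he, pt_mul]
    have ihx := ih c' k' hok'
    cases c
    · have hc' : c' = true := by
        cases c'
        · exact absurd rfl hcc
        · rfl
      subst hc'
      rw [OutP, if_pos rfl] at ihx
      exact stepT T hT0 hT1 hk ihx.1
    · have hc' : c' = false := by
        cases c'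
        · rfl
        · exact absurd rfl hcc
      subst hc'
      rw [OutP, if_neg (by simp)] at ihx
      exact stepB S T hS0 hS1 hT0 hT1 hk ihx.1

include hS0 hS1 hT0 hT1 in
lemma evalA_ne_Spow {L : List Syl} (hok : Ok L) (hne : L ≠ []) (j : ℤ) :
    evalL (τA S T) L ≠ S^j := by
  intro hEq
  cases L with
  | nil => exact absurd rfl hne
  | cons p t =>
  obtain ⟨c, k⟩ := p
  have hout := chainA S T hS0 hS1 hT0 hT1 t c k hok
  rw [hEq] at hout
  have h2 : ∀ a : ℤ, ((2:ℚ))^(a+1) = 2^a * 2 := fun a => zpow_add_one₀ two_ne_zero a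
  obtain ⟨a, h | h⟩ := orbS S hS0 hS1 j
  all_goals {
    have hp : (0:ℚ) < (2:ℚ)^a := by positivity
    have hp1 : (0:ℚ) < (2:ℚ)^(a+1) := by positivity
    have habs : |(2:ℚ)^a| = (2:ℚ)^a := abs_of_pos hp
    have habs1 : |(2:ℚ)^(a+1)| = (2:ℚ)^(a+1) := abs_of_pos hp1
    rw [h] at hout
    cases c
    · rw [OutP, if_neg (by simp)] at hout
      have hr := hout.2
      dsimp only at hr
      rw [habs] at hr
      first
      | linarith [hp]
      | (rw [habs1, h2 a] at hr; linarith [hp])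
    · rw [OutP, if_pos rfl] at hout
      have hr := hout.2
      dsimp only at hr
      rw [habs] at hr
      first
      | linarith [hp]
      | (rw [habs1, h2 a] at hr; linarith [hp])
  }

end PingPong
end DSAux

namespace DSAux
section Gamma

abbrev Γ := PresentedGroup dsRels

def σΓ : Γ := PresentedGroup.of true

def τΓ : Bool → Γ := fun b =>
  if b then σΓ * PresentedGroup.of false * σΓ⁻¹ else PresentedGroup.of false

lemma relΓ : σΓ^2 * PresentedGroup.of false * (σΓ^2)⁻¹ = (PresentedGroup.of false)^2 := by
  have hmem : ((FreeGroup.of true) ^ 2 * FreeGroup.of false * (FreeGroup.of true)⁻¹ ^ 2 *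
      ((FreeGroup.of false) ^ 2)⁻¹) ∈ Subgroup.normalClosure dsRels :=
    Subgroup.subset_normalClosure rfl
  have h : (QuotientGroup.mk' (Subgroup.normalClosure dsRels))
      ((FreeGroup.of true) ^ 2 * FreeGroup.of false * (FreeGroup.of true)⁻¹ ^ 2 *
      ((FreeGroup.of false) ^ 2)⁻¹) = 1 := (QuotientGroup.eq_one_iff _).mpr hmem
  simp only [map_mul, map_pow, map_inv] at h
  rw [inv_pow] at h
  exact mul_inv_eq_one.mp h

lemma conjΓ_false : σΓ * τΓ false * σΓ⁻¹ = τΓ true := rfl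

lemma conjΓ_true : σΓ * τΓ true * σΓ⁻¹ = τΓ false ^ 2 := by
  show σΓ * (σΓ * PresentedGroup.of false * σΓ⁻¹) * σΓ⁻¹ = (PresentedGroup.of false)^2
  rw [← relΓ]
  group
  rw [zpow_two]

lemma mem_closureΓ (g : Γ) :
    g ∈ Subgroup.closure ({PresentedGroup.of true, PresentedGroup.of false} : Set Γ) := by
  obtain ⟨w, rfl⟩ := QuotientGroup.mk'_surjective (Subgroup.normalClosure dsRels) g
  refine FreeGroup.induction_on w ?_ ?_ ?_ ?_
  · rw [map_one]; exact one_mem _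
  · intro b
    cases b
    · exact Subgroup.subset_closure (Set.mem_insert_of_mem _ rfl)
    · exact Subgroup.subset_closure (Set.mem_insert _ _)
  · intro b hb
    rw [map_inv]
    exact inv_mem hb
  · intro x y hx hy
    rw [map_mul]
    exact mul_mem hx hy

lemma gamma_form (g : Γ) : ∃ (m n : ℕ) (L : List Syl), Ok L ∧
    g = (σΓ^m)⁻¹ * evalL τΓ L * σΓ^n := by
  refine Subgroup.closure_induction_left
    (p := fun x _ => ∃ (m n : ℕ) (L : List Syl), Ok L ∧ x = (σΓ^m)⁻¹ * evalL τΓ L * σΓ^n)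
    ?_ ?_ ?_ (mem_closureΓ g)
  · exact ⟨0, 0, [], ⟨List.isChain_nil, by simp⟩, by rw [evalL_nil]; group⟩
  · rintro x hx y - ⟨m, n, L, hok, rfl⟩
    have hσ : (PresentedGroup.of true : Γ) = σΓ := rfl
    have hτ : (PresentedGroup.of false : Γ) = τΓ false := rfl
    rcases hx with rfl | rfl
    · cases m with
      | zero =>
        refine ⟨0, n+1, conjL L, hok.conj, ?_⟩
        rw [hσ, evalL_conj τΓ σΓ conjΓ_false conjΓ_true, pow_succ]
        group
      | succ m' =>
        refine ⟨m', n, L, hok, ?_⟩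
        rw [hσ, pow_succ]
        group
    · obtain ⟨c, k, hLs, hk⟩ := conj_iter_single m 1 one_ne_zero
      refine ⟨m, n, push c k L, hok.push c k, ?_⟩
      have hE : evalL τΓ (conjL^[m] [(false,(1:ℤ))]) = σΓ^m * τΓ false * (σΓ^m)⁻¹ := by
        rw [evalL_conj_iter τΓ σΓ conjΓ_false conjΓ_true, evalL_cons, evalL_nil, mul_one,
          zpow_one]
      have hE2 : τΓ c ^ k = σΓ^m * τΓ false * (σΓ^m)⁻¹ := by
        rw [← hE, hLs, evalL_cons, evalL_nil, mul_one]
      rw [hτ, evalL_push, hE2]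
      group
  · rintro x hx y - ⟨m, n, L, hok, rfl⟩
    have hσ : (PresentedGroup.of true : Γ) = σΓ := rfl
    have hτ : (PresentedGroup.of false : Γ) = τΓ false := rfl
    rcases hx with rfl | rfl
    · refine ⟨m+1, n, L, hok, ?_⟩
      rw [hσ, pow_succ]
      group
    · obtain ⟨c, k, hLs, hk⟩ := conj_iter_single m (-1) (by norm_num)
      refine ⟨m, n, push c k L, hok.push c k, ?_⟩
      have hE : evalL τΓ (conjL^[m] [(false,(-1:ℤ))]) = σΓ^m * (τΓ false)⁻¹ * (σΓ^m)⁻¹ := by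
        rw [evalL_conj_iter τΓ σΓ conjΓ_false conjΓ_true, evalL_cons, evalL_nil, mul_one,
          zpow_neg_one]
      have hE2 : τΓ c ^ k = σΓ^m * (τΓ false)⁻¹ * (σΓ^m)⁻¹ := by
        rw [← hE, hLs, evalL_cons, evalL_nil, mul_one]
      rw [hτ, evalL_push, hE2]
      group

end Gamma
end DSAux

open DSAux in
/-- The subgroup of the group of polynomial automorphisms of the affine
plane over `ℚ` (i.e. of `ℚ`-algebra automorphisms of `ℚ[x,y]`) generated by
`S : (x,y) ↦ (y, 2x)` and `T : (x,y) ↦ (x, y + x²)` is isomorphic to the one-relator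
group `⟨σ, τ ∣ σ²τσ⁻² = τ²⟩`. -/
theorem subgroup_generated_by_S_T_isomorphic_to_Gamma
    (S T : MvPolynomial (Fin 2) ℚ ≃ₐ[ℚ] MvPolynomial (Fin 2) ℚ)
    (hS0 : S (X 0) = X 1) (hS1 : S (X 1) = 2 * X 0)
    (hT0 : T (X 0) = X 0) (hT1 : T (X 1) = X 1 + (X 0) ^ 2) :
    Nonempty (↥(Subgroup.closure {S, T}) ≃* PresentedGroup dsRels) := by
  classical
  set fb : Bool → AutPP := fun b => if b then S else T with hfb
  have eq1 : S^2 * T = T^2 * S^2 := by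
    apply ext2
    · simp only [AlgEquiv.mul_apply, pow_two, hT0, hS0, hS1, map_mul, map_add, map_pow,
        map_ofNat, hT1]
    · simp only [AlgEquiv.mul_apply, pow_two, hT0, hS0, hS1, map_mul, map_add, map_pow,
        map_ofNat, hT1]
      ring
  have hrel : ∀ r ∈ dsRels, FreeGroup.lift fb r = 1 := by
    intro r hr
    have : r = (FreeGroup.of true) ^ 2 * FreeGroup.of false * (FreeGroup.of true)⁻¹ ^ 2 *
        ((FreeGroup.of false) ^ 2)⁻¹ := hr
    subst this
    simp only [map_mul, map_pow, map_inv, FreeGroup.lift_apply_of]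
    have h1 : fb true = S := rfl
    have h2 : fb false = T := rfl
    rw [h1, h2, inv_pow, eq1]
    group
  set φ : Γ →* AutPP := PresentedGroup.toGroup hrel with hφ
  have hφσ : φ σΓ = S := PresentedGroup.toGroup.of hrel
  have hφτf : φ (PresentedGroup.of false) = T := PresentedGroup.toGroup.of hrel
  have hν : (fun b => φ (τΓ b)) = τA S T := by
    funext b
    cases b
    · exact hφτf
    · show φ (σΓ * PresentedGroup.of false * σΓ⁻¹) = S * T * S⁻¹
      rw [map_mul, map_mul, map_inv, hφσ, hφτf]
  have hφeval : ∀ L : List Syl, φ (evalL τΓ L) = evalL (τA S T) L := by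
    intro L
    rw [evalL_hom φ τΓ L, hν]
  have hinj : Function.Injective φ := by
    rw [injective_iff_map_eq_one]
    intro g hg
    obtain ⟨m, n, L, hok, rfl⟩ := gamma_form g
    rw [map_mul, map_mul, map_inv, map_pow, map_pow, hφσ, hφeval] at hg
    have hE : evalL (τA S T) L = S^((m:ℤ) - (n:ℤ)) := by
      have h1 : evalL (τA S T) L
          = S^m * ((S^m)⁻¹ * evalL (τA S T) L * S^n) * (S^n)⁻¹ := by group
      rw [hg, mul_one] at h1
      rw [h1, zpow_sub, zpow_natCast, zpow_natCast]
    by_cases hL : L = []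
    · subst hL
      rw [evalL_nil] at hE
      have hj : (m:ℤ) - (n:ℤ) = 0 := S_order S hS0 hS1 hE.symm
      have hmn : m = n := by omega
      subst hmn
      rw [evalL_nil]
      group
    · exact absurd hE (evalA_ne_Spow S T hS0 hS1 hT0 hT1 hok hL _)
  have hrange : φ.range = Subgroup.closure {S, T} := by
    apply le_antisymm
    · rintro x ⟨g, rfl⟩
      refine Subgroup.closure_induction
        (p := fun y _ => φ y ∈ Subgroup.closure ({S, T} : Set AutPP))
        ?_ ?_ ?_ ?_ (mem_closureΓ g)
      · rintro y (rfl | rfl)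
        · have h : φ (PresentedGroup.of true) = S := hφσ
          show φ (PresentedGroup.of true) ∈ Subgroup.closure ({S, T} : Set AutPP)
          rw [h]
          exact Subgroup.subset_closure (Set.mem_insert _ _)
        · show φ (PresentedGroup.of false) ∈ Subgroup.closure ({S, T} : Set AutPP)
          rw [hφτf]
          exact Subgroup.subset_closure (Set.mem_insert_of_mem _ rfl)
      · show φ 1 ∈ Subgroup.closure ({S, T} : Set AutPP)
        rw [map_one]; exact one_mem _
      · intro a b _ _ ha hb
        show φ (a * b) ∈ Subgroup.closure ({S, T} : Set AutPP)
        rw [map_mul]; exact mul_mem ha hb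
      · intro a _ ha
        show φ a⁻¹ ∈ Subgroup.closure ({S, T} : Set AutPP)
        rw [map_inv]; exact inv_mem ha
    · rw [Subgroup.closure_le]
      rintro x (rfl | rfl)
      · exact ⟨σΓ, hφσ⟩
      · exact ⟨PresentedGroup.of false, hφτf⟩
  exact ⟨(MulEquiv.subgroupCongr hrange.symm).trans (MonoidHom.ofInjective hinj).symm⟩
end

section
/- Let Λ ⊆ K* be a subgroup of the multiplicative group of a field K, let 𝔽 be the prime field of K, and for n ≥ 1 let χₙ : Λ → K* be λ ↦ λⁿ with induced algebra map χ̂ₙ : 𝔽[Λ] → K and Iₙ(Λ) = Ker χ̂ₙ. Then a group homomorphism χ : Λ → L* into the multiplicative group of an algebraically closed field L is a semi-algebraic character of degree n if and only if Ker χ̂ = Iₙ(Λ), where χ̂ : 𝔽[Λ] → L is the induced algebra homomorphism. -/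
/-- Any two ring homomorphisms from the prime field (bottom subfield) agree. -/
theorem hom_bot_subsingleton' {K L : Type*} [Field K] [Field L]
    (f g : (⊥ : Subfield K) →+* L) : f = g := by
  have h : (⊥ : Subfield K) ≤ (RingHom.eqLocusField f g).map (⊥ : Subfield K).subtype := bot_le
  ext x
  obtain ⟨y, hy, hyx⟩ := Subfield.mem_map.1 (h x.2)
  have : y = x := Subtype.ext hyx
  rw [← this]; exact hy



section

variable {K : Type*} [Field K] (Λ : Subgroup Kˣ) (n : ℕ)
  {L : Type*} [Field L] [IsAlgClosed L]

/-- The subfield `Kₙ` of `K` generated by the `n`-th powers of elements of `Λ`. -/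
def Kn : Subfield K :=
  Subfield.closure {x : K | ∃ l : Λ, x = ((l : Kˣ) : K) ^ n}

/-- The homomorphism `χₙ : Λ →* K`, `λ ↦ λⁿ`. -/
def chiN : Λ →* K :=
  (Units.coeHom K).comp ((powMonoidHom n).comp Λ.subtype)

/-- A homomorphism `χ : Λ → L*` (`L` algebraically closed, containing a
copy `ι` of the prime field `𝔽` of `K`) is a semi-algebraic character of degree `n`
(i.e. `χ = μ ∘ χₙ` for some field embedding `μ : Kₙ → L`) if and only if the kernel of
the induced algebra map `χ̂ : 𝔽[Λ] → L` equals `Iₙ(Λ) = Ker χ̂ₙ`. -/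
theorem semi_algebraic_character_iff_ker_eq
    (hn : 1 ≤ n) (ι : (⊥ : Subfield K) →+* L) (χ : Λ →* Lˣ) :
    (∃ μ : Kn Λ n →+* L, ∀ l : Λ,
        ((χ l : Lˣ) : L) =
          μ ⟨((l : Kˣ) : K) ^ n, Subfield.subset_closure ⟨l, rfl⟩⟩) ↔
      RingHom.ker (MonoidAlgebra.liftNCRingHom ι ((Units.coeHom L).comp χ)
          (fun _ _ => Commute.all _ _)) =
        RingHom.ker (MonoidAlgebra.liftNCRingHom ((⊥ : Subfield K).subtype)
          (chiN Λ n) (fun _ _ => Commute.all _ _)) := by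
  classical
  set f : MonoidAlgebra (⊥ : Subfield K) Λ →+* L :=
    MonoidAlgebra.liftNCRingHom ι ((Units.coeHom L).comp χ) (fun _ _ => Commute.all _ _) with hfdef
  set g : MonoidAlgebra (⊥ : Subfield K) Λ →+* K :=
    MonoidAlgebra.liftNCRingHom ((⊥ : Subfield K).subtype) (chiN Λ n)
      (fun _ _ => Commute.all _ _) with hgdef
  have hfs : ∀ (a : Λ) (b : (⊥ : Subfield K)),
      f (MonoidAlgebra.single a b) = ι b * ((χ a : Lˣ) : L) := by
    intro a b
    simp [hfdef, MonoidAlgebra.liftNCRingHom, MonoidAlgebra.liftNC_single]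
  have hgs : ∀ (a : Λ) (b : (⊥ : Subfield K)),
      g (MonoidAlgebra.single a b) = (b : K) * ((a : Kˣ) : K) ^ n := by
    intro a b
    simp [hgdef, MonoidAlgebra.liftNCRingHom, MonoidAlgebra.liftNC_single, chiN]
  set s : Set K := {x : K | ∃ l : Λ, x = ((l : Kˣ) : K) ^ n} with hsdef
  have hmemKn : ∀ l : Λ, ((l : Kˣ) : K) ^ n ∈ Kn Λ n :=
    fun l => Subfield.subset_closure ⟨l, rfl⟩
  constructor
  · -- forward direction
    rintro ⟨μ, hμ⟩
    set ψ : MonoidAlgebra (⊥ : Subfield K) Λ →+* (Kn Λ n) :=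
      MonoidAlgebra.liftNCRingHom (Subfield.inclusion bot_le)
        ((chiN Λ n).codRestrict (Kn Λ n).toSubmonoid (fun l => by
          simpa [chiN] using hmemKn l)) (fun _ _ => Commute.all _ _) with hψdef
    have hg : g = ((Kn Λ n).subtype).comp ψ := by
      refine MonoidAlgebra.ringHom_ext (fun b => ?_) (fun a => ?_)
      · simp [hgs, hψdef, MonoidAlgebra.liftNCRingHom, MonoidAlgebra.liftNC_single, chiN,
          Subfield.inclusion, MonoidHom.codRestrict]
      · simp [hgs, hψdef, MonoidAlgebra.liftNCRingHom, MonoidAlgebra.liftNC_single, chiN,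
          Subfield.inclusion, MonoidHom.codRestrict]
    have hψval : ∀ p, ((ψ p : Kn Λ n) : K) = g p := fun p => by rw [hg]; rfl
    have hψs : ∀ (a : Λ) (b : (⊥ : Subfield K)),
        ψ (MonoidAlgebra.single a b) =
          Subfield.inclusion bot_le b * ⟨((a : Kˣ) : K) ^ n, hmemKn a⟩ := by
      intro a b
      apply Subtype.ext
      rw [hψval, hgs]
      rfl
    have hf : f = μ.comp ψ := by
      have hι : ι = μ.comp (Subfield.inclusion (bot_le : ⊥ ≤ Kn Λ n)) :=
        hom_bot_subsingleton' _ _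
      have hone : (⟨(((1 : Λ) : Kˣ) : K) ^ n, hmemKn 1⟩ : Kn Λ n) = 1 := by
        apply Subtype.ext; simp
      refine MonoidAlgebra.ringHom_ext (fun b => ?_) (fun a => ?_)
      · rw [hfs, RingHom.comp_apply, hψs, map_mul, hone]
        simp [hι]
      · rw [hfs, RingHom.comp_apply, hψs, map_mul, map_one, one_mul, ← hμ a]
        simp
    ext x
    rw [RingHom.mem_ker, RingHom.mem_ker, hf, hg]
    simp only [RingHom.coe_comp, Function.comp_apply]
    rw [map_eq_zero_iff μ μ.injective]
    exact ⟨fun h => by rw [h, map_zero], fun h => Subtype.ext (by simpa using h)⟩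
  · -- backward direction
    intro hker
    set C : Subring K := Subring.closure s with hCdef
    have hsub : ∀ x ∈ C, ∃ a, g a = x := by
      intro x hx
      have hle : C ≤ g.range := Subring.closure_le.2 (by
        rintro _ ⟨l, rfl⟩
        exact ⟨MonoidAlgebra.single l 1, by simp [hgs]⟩)
      exact hle hx
    set ν : K → L := fun x => if h : ∃ a, g a = x then f h.choose else 0 with hνdef
    have hν : ∀ a, ν (g a) = f a := by
      intro a
      have h : ∃ a', g a' = g a := ⟨a, rfl⟩
      have h1 : ν (g a) = f h.choose := dif_pos h
      have h2 : g h.choose = g a := h.choose_spec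
      have h3 : h.choose - a ∈ RingHom.ker g := by
        rw [RingHom.mem_ker, map_sub, h2, sub_self]
      rw [← hker, RingHom.mem_ker, map_sub, sub_eq_zero] at h3
      rw [h1, h3]
    have nu_zero : ν 0 = 0 := by rw [← map_zero g, hν, map_zero]
    have nu_one : ν 1 = 1 := by rw [← map_one g, hν, map_one]
    have nu_mul : ∀ x ∈ C, ∀ y ∈ C, ν (x * y) = ν x * ν y := by
      intro x hx y hy
      obtain ⟨a, rfl⟩ := hsub x hx
      obtain ⟨b, rfl⟩ := hsub y hy
      rw [← map_mul, hν, hν, hν, map_mul]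
    have nu_add : ∀ x ∈ C, ∀ y ∈ C, ν (x + y) = ν x + ν y := by
      intro x hx y hy
      obtain ⟨a, rfl⟩ := hsub x hx
      obtain ⟨b, rfl⟩ := hsub y hy
      rw [← map_add, hν, hν, hν, map_add]
    have nu_ne : ∀ x ∈ C, x ≠ 0 → ν x ≠ 0 := by
      intro x hx hx0
      obtain ⟨a, rfl⟩ := hsub x hx
      rw [hν]
      intro hfa
      have : a ∈ RingHom.ker f := hfa
      rw [hker, RingHom.mem_ker] at this
      exact hx0 this
    -- well-definedness
    have WD : ∀ y z y' z', y ∈ C → z ∈ C → y' ∈ C → z' ∈ C → z ≠ 0 → z' ≠ 0 →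
        y / z = y' / z' → ν y / ν z = ν y' / ν z' := by
      intro y z y' z' hy hz hy' hz' hz0 hz'0 h
      rw [div_eq_div_iff hz0 hz'0] at h
      have h2 : ν y * ν z' = ν y' * ν z := by
        rw [← nu_mul y hy z' hz', ← nu_mul y' hy' z hz, h]
      rw [div_eq_div_iff (nu_ne z hz hz0) (nu_ne z' hz' hz'0), h2]
    have hrep : ∀ x : Kn Λ n, ∃ y z : K, y ∈ C ∧ z ∈ C ∧ z ≠ 0 ∧ y / z = (x : K) := by
      intro x
      have hx : (x : K) ∈ Subfield.closure s := x.2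
      obtain ⟨y, hy, z, hz, hyz⟩ := Subfield.mem_closure_iff.1 hx
      by_cases h0 : z = 0
      · refine ⟨0, 1, zero_mem _, one_mem _, one_ne_zero, ?_⟩
        rw [← hyz, h0, div_zero, div_one]
      · exact ⟨y, z, hy, hz, h0, hyz⟩
    choose Y Z hYC hZC hZ0 hYZ using hrep
    set F : Kn Λ n → L := fun x => ν (Y x) / ν (Z x) with hFdef
    have hF : ∀ (x : Kn Λ n) (y z : K), y ∈ C → z ∈ C → z ≠ 0 → y / z = (x : K) →
        F x = ν y / ν z := by
      intro x y z hy hz hz0 h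
      exact WD (Y x) (Z x) y z (hYC x) (hZC x) hy hz (hZ0 x) hz0 (by rw [hYZ x, h])
    have hCoe : ∀ x y : Kn Λ n, ((x * y : Kn Λ n) : K) = (x : K) * (y : K) := fun _ _ => rfl
    refine ⟨{ toFun := F
              map_one' := ?_
              map_mul' := ?_
              map_zero' := ?_
              map_add' := ?_ }, ?_⟩
    · show F 1 = 1
      rw [hF 1 1 1 (one_mem C) (one_mem C) one_ne_zero (by norm_num), nu_one, div_one]
    · intro x y
      show F (x * y) = F x * F y
      have h1 : (Y x * Y y) / (Z x * Z y) = ((x * y : Kn Λ n) : K) := by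
        push_cast
        rw [← div_mul_div_comm, hYZ x, hYZ y]
      rw [hF (x * y) _ _ (mul_mem (hYC x) (hYC y)) (mul_mem (hZC x) (hZC y))
        (mul_ne_zero (hZ0 x) (hZ0 y)) h1,
        nu_mul _ (hYC x) _ (hYC y), nu_mul _ (hZC x) _ (hZC y), div_mul_div_comm]
    · show F 0 = 0
      rw [hF 0 0 1 (zero_mem C) (one_mem C) one_ne_zero (by norm_num), nu_zero, zero_div]
    · intro x y
      show F (x + y) = F x + F y
      have h1 : (Y x * Z y + Y y * Z x) / (Z x * Z y) = ((x + y : Kn Λ n) : K) := by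
        push_cast
        rw [← hYZ x, ← hYZ y, div_add_div _ _ (hZ0 x) (hZ0 y)]
        ring_nf
      have e1 := nu_ne _ (hZC x) (hZ0 x)
      have e2 := nu_ne _ (hZC y) (hZ0 y)
      rw [hF (x + y) _ _ (add_mem (mul_mem (hYC x) (hZC y)) (mul_mem (hYC y) (hZC x)))
        (mul_mem (hZC x) (hZC y)) (mul_ne_zero (hZ0 x) (hZ0 y)) h1,
        nu_add _ (mul_mem (hYC x) (hZC y)) _ (mul_mem (hYC y) (hZC x)),
        nu_mul _ (hYC x) _ (hZC y), nu_mul _ (hYC y) _ (hZC x),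
        nu_mul _ (hZC x) _ (hZC y)]
      simp only [hFdef]
      field_simp
    · intro l
      have hy : ((l : Kˣ) : K) ^ n ∈ C := Subring.subset_closure ⟨l, rfl⟩
      have := hF ⟨((l : Kˣ) : K) ^ n, hmemKn l⟩ (((l : Kˣ) : K) ^ n) 1 hy (one_mem C)
        one_ne_zero (by norm_num)
      show ((χ l : Lˣ) : L) = F _
      rw [this, nu_one, div_one]
      have : ((l : Kˣ) : K) ^ n = g (MonoidAlgebra.single l 1) := by simp [hgs]
      rw [this, hν, hfs]
      simp


end
end

section
/- For a prime p and an elementary abelian p-group E of rank r, the semidirect product G(r) = E ⋉ 𝔽_p[E], where E acts on its group algebra 𝔽_p[E] by translation, is nilpotent of nilpotency class exactly 1 + (p-1)r. -/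
section

variable {p : ℕ} [Fact p.Prime] {E : Type*} [AddCommGroup E]

noncomputable def translationAut (p : ℕ) [Fact p.Prime] (u : E) :
    MulAut (Multiplicative (AddMonoidAlgebra (ZMod p) E)) where
  toFun f := Multiplicative.ofAdd (AddMonoidAlgebra.single u 1 * f.toAdd)
  invFun f := Multiplicative.ofAdd (AddMonoidAlgebra.single (-u) 1 * f.toAdd)
  left_inv f := by
    simp [← mul_assoc, AddMonoidAlgebra.single_mul_single,
      ← AddMonoidAlgebra.one_def]
  right_inv f := by
    simp [← mul_assoc, AddMonoidAlgebra.single_mul_single,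
      ← AddMonoidAlgebra.one_def]
  map_mul' f g := by
    simp [mul_add]

noncomputable def translationHom (p : ℕ) [Fact p.Prime] :
    Multiplicative E →* MulAut (Multiplicative (AddMonoidAlgebra (ZMod p) E)) where
  toFun u := translationAut p u.toAdd
  map_one' := by
    ext f
    simp [translationAut, ← AddMonoidAlgebra.one_def]
  map_mul' u v := by
    ext f
    simp [translationAut, AddMonoidAlgebra.single_mul_single, ← mul_assoc]

abbrev Gr (p : ℕ) [Fact p.Prime] (E : Type*) [AddCommGroup E] : Type _ :=
  SemidirectProduct (Multiplicative (AddMonoidAlgebra (ZMod p) E)) (Multiplicative E)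
    (translationHom p)

/-! ### Auxiliary definitions -/

/-- `T u` is the basis element `single u 1` of the group algebra. -/
noncomputable def T (p : ℕ) [Fact p.Prime] (u : E) : AddMonoidAlgebra (ZMod p) E :=
  AddMonoidAlgebra.single u 1

lemma T_add (u v : E) : T p (u + v) = T p u * T p v := by
  simp [T, AddMonoidAlgebra.single_mul_single]

@[simp] lemma T_zero : T p (0 : E) = 1 := by simp [T, AddMonoidAlgebra.one_def]

lemma T_nsmul (k : ℕ) (u : E) : T p (k • u) = T p u ^ k := by
  simp [T, AddMonoidAlgebra.single_pow]

lemma charP_A : CharP (AddMonoidAlgebra (ZMod p) E) p := by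
  have h : Function.Injective (algebraMap (ZMod p) (AddMonoidAlgebra (ZMod p) E)) := by
    rw [AddMonoidAlgebra.coe_algebraMap]
    exact (AddMonoidAlgebra.single_right_injective (m := (0 : E))).comp (fun a b h => h)
  exact charP_of_injective_algebraMap h p

/-- The augmentation ideal. -/
noncomputable def Iaug (p : ℕ) [Fact p.Prime] (E : Type*) [AddCommGroup E] :
    Ideal (AddMonoidAlgebra (ZMod p) E) :=
  Ideal.span {x | ∃ u : E, x = T p u - 1}

lemma T_sub_one_mem (u : E) : T p u - 1 ∈ Iaug p E := Ideal.subset_span ⟨u, rfl⟩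

/-- `ι a` is the element `⟨a, 1⟩` of the semidirect product. -/
noncomputable def ι (p : ℕ) [Fact p.Prime] (a : AddMonoidAlgebra (ZMod p) E) : Gr p E :=
  ⟨Multiplicative.ofAdd a, 1⟩

lemma ι_add (a b : AddMonoidAlgebra (ZMod p) E) : ι p (a + b) = ι p a * ι p b := by
  refine SemidirectProduct.ext ?_ ?_
  · show Multiplicative.ofAdd (a + b)
      = Multiplicative.ofAdd a * translationHom p 1 (Multiplicative.ofAdd b)
    simp
  · exact (mul_one (1 : Multiplicative E)).symm

lemma ι_zero : ι p (0 : AddMonoidAlgebra (ZMod p) E) = 1 := rfl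

lemma ι_neg (a : AddMonoidAlgebra (ZMod p) E) : ι p (-a) = (ι p a)⁻¹ := by
  rw [eq_inv_iff_mul_eq_one, ← ι_add, neg_add_cancel, ι_zero]

lemma phi_apply (x : Multiplicative E) (f : Multiplicative (AddMonoidAlgebra (ZMod p) E)) :
    translationHom p x f = Multiplicative.ofAdd (T p x.toAdd * f.toAdd) := rfl

/-! ### The commutator formula -/

open scoped commutatorElement

lemma comm_left (g h : Gr p E) :
    (⁅g, h⁆).left.toAdd = (1 - T p h.right.toAdd) * g.left.toAdd
        - (1 - T p g.right.toAdd) * h.left.toAdd := by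
  simp only [commutatorElement_def, SemidirectProduct.mul_left, SemidirectProduct.inv_left,
    SemidirectProduct.mul_right, SemidirectProduct.inv_right, phi_apply,
    toAdd_mul, toAdd_ofAdd, toAdd_inv]
  simp only [add_comm, add_left_comm, add_assoc, add_neg_cancel, neg_add_cancel, add_zero,
    zero_add, add_neg_cancel_left, neg_add_cancel_left]
  ring_nf
  simp only [mul_assoc, ← T_add]
  have e1 : ∀ u v : E, u + (v + -u) = v := fun u v => by abel
  have e2 : ∀ u v : E, u + (v + (-u + -v)) = 0 := fun u v => by abel
  have e3 : ∀ u v : E, u + v + -u = v := fun u v => by abel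
  simp only [e1, e2, e3, add_neg_cancel, T_zero]
  ring

lemma comm_right (g h : Gr p E) : (⁅g, h⁆).right = 1 := by
  have h1 : (⁅g, h⁆).right = ⁅g.right, h.right⁆ := rfl
  rw [h1, commutatorElement_eq_one_iff_mul_comm]
  exact mul_comm _ _

lemma comm_ι (b : AddMonoidAlgebra (ZMod p) E) (u : E) :
    ⁅ι p b, (⟨1, Multiplicative.ofAdd u⟩ : Gr p E)⁆ = ι p ((1 - T p u) * b) := by
  refine SemidirectProduct.ext ?_ ?_
  · have := comm_left (ι p b) (⟨1, Multiplicative.ofAdd u⟩ : Gr p E)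
    apply Multiplicative.toAdd.injective
    rw [this]
    simp [ι]
  · rw [comm_right]; rfl

/-! ### The subgroup attached to an ideal -/

noncomputable def idealSubgroup (M : Ideal (AddMonoidAlgebra (ZMod p) E)) :
    Subgroup (Gr p E) where
  carrier := {g | g.right = 1 ∧ g.left.toAdd ∈ M}
  one_mem' := ⟨rfl, by simpa using M.zero_mem⟩
  mul_mem' := by
    rintro a b ⟨ha1, ha2⟩ ⟨hb1, hb2⟩
    refine ⟨?_, ?_⟩
    · rw [SemidirectProduct.mul_right, ha1, hb1, one_mul]
    · rw [SemidirectProduct.mul_left, ha1]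
      simpa using M.add_mem ha2 hb2
  inv_mem' := by
    rintro a ⟨ha1, ha2⟩
    refine ⟨by rw [SemidirectProduct.inv_right, ha1, inv_one], ?_⟩
    rw [SemidirectProduct.inv_left, ha1]
    simpa using M.neg_mem ha2

lemma ι_mem_idealSubgroup {M : Ideal (AddMonoidAlgebra (ZMod p) E)}
    {a : AddMonoidAlgebra (ZMod p) E} :
    ι p a ∈ idealSubgroup M ↔ a ∈ M := by
  constructor
  · rintro ⟨-, h⟩; simpa [ι] using h
  · intro h; exact ⟨rfl, by simpa [ι] using h⟩

lemma lcs_succ_comm {G : Type*} [Group G] (n : ℕ) :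
    (⊤ : Subgroup G).lowerCentralSeries (n + 1) = ⁅(⊤ : Subgroup G).lowerCentralSeries n, ⊤⁆ := rfl

lemma eq_ι_of_mem {M : Ideal (AddMonoidAlgebra (ZMod p) E)} {g : Gr p E}
    (hg : g ∈ idealSubgroup M) : g = ι p g.left.toAdd := by
  refine SemidirectProduct.ext ?_ ?_
  · simp [ι]
  · exact hg.1

lemma idealSubgroup_bot : (idealSubgroup (⊥ : Ideal (AddMonoidAlgebra (ZMod p) E))) = ⊥ := by
  ext g
  simp only [Subgroup.mem_bot]
  constructor
  · rintro ⟨h1, h2⟩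
    refine SemidirectProduct.ext ?_ h1
    simpa using h2
  · rintro rfl
    exact ⟨rfl, by simp⟩

/-! ### The lower central series -/

lemma helper_mul (k : ℕ) (M : Ideal (AddMonoidAlgebra (ZMod p) E))
    (hM : ∀ b ∈ M, ι p b ∈ (⊤ : Subgroup (Gr p E)).lowerCentralSeries k) :
    ∀ a ∈ Iaug p E * M, ι p a ∈ (⊤ : Subgroup (Gr p E)).lowerCentralSeries (k + 1) := by
  intro a ha
  refine Submodule.mul_induction_on ha ?_ ?_
  · intro x hx b hb
    induction hx using Submodule.span_induction generalizing b with
    | mem x h =>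
      obtain ⟨u, rfl⟩ := h
      have key : ι p ((T p u - 1) * b) = (⁅ι p b, (⟨1, Multiplicative.ofAdd u⟩ : Gr p E)⁆)⁻¹ := by
        rw [comm_ι, ← ι_neg]
        congr 1
        ring
      rw [key]
      refine inv_mem ?_
      rw [lcs_succ_comm]
      exact Subgroup.commutator_mem_commutator (hM b hb) (Subgroup.mem_top _)
    | zero => simpa [ι_zero] using ((⊤ : Subgroup (Gr p E)).lowerCentralSeries (k + 1)).one_mem
    | add x y hx hy ihx ihy =>
      rw [add_mul, ι_add]
      exact mul_mem (ihx b hb) (ihy b hb)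
    | smul c x hx ih =>
      have : c • x * b = x * (c * b) := by rw [smul_eq_mul]; ring
      rw [this]
      exact ih (c * b) (M.mul_mem_left c hb)
  · intro x y hx hy
    rw [ι_add]
    exact mul_mem hx hy

lemma lcs_succ_eq (n : ℕ) :
    (⊤ : Subgroup (Gr p E)).lowerCentralSeries (n + 1) = idealSubgroup (Iaug p E ^ (n + 1)) := by
  induction n with
  | zero =>
    apply le_antisymm
    · rw [lcs_succ_comm, Subgroup.commutator_le]
      intro g _ h _
      refine ⟨comm_right g h, ?_⟩
      rw [comm_left, pow_one]
      refine sub_mem (Ideal.mul_mem_right _ _ ?_) (Ideal.mul_mem_right _ _ ?_) <;>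
        · rw [show (1 : AddMonoidAlgebra (ZMod p) E) - T p _ = -(T p _ - 1) by ring]
          exact neg_mem (T_sub_one_mem _)
    · intro g hg
      rw [eq_ι_of_mem hg]
      refine helper_mul 0 ⊤ (fun b _ => Subgroup.mem_top _) _ ?_
      rw [Ideal.mul_top]
      simpa [pow_one] using hg.2
  | succ n ih =>
    apply le_antisymm
    · rw [lcs_succ_comm, Subgroup.commutator_le]
      intro g hg h _
      rw [ih] at hg
      refine ⟨comm_right g h, ?_⟩
      rw [comm_left, hg.1]
      have : T p (Multiplicative.toAdd (1 : Multiplicative E)) = 1 := by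
        simpa using (T_zero : T p (0 : E) = 1)
      rw [this, sub_self, zero_mul, sub_zero]
      rw [show n + 1 + 1 = (n + 1) + 1 from rfl, pow_succ']
      refine Submodule.mul_mem_mul ?_ hg.2
      rw [show (1 : AddMonoidAlgebra (ZMod p) E) - T p _ = -(T p _ - 1) by ring]
      exact neg_mem (T_sub_one_mem _)
    · intro g hg
      rw [eq_ι_of_mem hg]
      refine helper_mul (n + 1) (Iaug p E ^ (n + 1)) ?_ _ ?_
      · intro b hb
        rw [ih]
        exact ι_mem_idealSubgroup.mpr hb
      · rw [← pow_succ']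
        exact hg.2


/-! ### The algebra part -/

section Basis

variable {r : ℕ} (σ : E ≃+ (Fin r → ZMod p))

/-- Basis elements of `E` coming from the isomorphism with `(ZMod p)^r`. -/
noncomputable def bvec (i : Fin r) : E := σ.symm (Pi.single i 1)

/-- The ideal generated by `T (bvec i) - 1`. -/
noncomputable def Jgen : Ideal (AddMonoidAlgebra (ZMod p) E) :=
  Ideal.span (Set.range fun i : Fin r => T p (bvec σ i) - 1)

lemma sigma_sum (x : Fin r → ℕ) :
    σ (∑ i, x i • bvec σ i) = fun j => ((x j : ℕ) : ZMod p) := by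
  rw [map_sum]
  have h1 : ∀ i, σ (x i • bvec σ i) = Pi.single i ((x i : ℕ) : ZMod p) := by
    intro i
    rw [map_nsmul, bvec, σ.apply_symm_apply, ← Pi.single_smul]
    congr 1
    simp [nsmul_eq_mul]
  simp only [h1]
  exact Finset.univ_sum_single _

lemma basis_sum (u : E) : ∑ i, (σ u i).val • bvec σ i = u := by
  haveI : NeZero p := ⟨(Fact.out : p.Prime).ne_zero⟩
  apply σ.injective
  rw [sigma_sum]
  funext j
  simpa using ZMod.natCast_rightInverse (σ u j)

lemma T_sub_one_mem_Jgen (u : E) : T p u - 1 ∈ Jgen σ := by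
  haveI : NeZero p := ⟨(Fact.out : p.Prime).ne_zero⟩
  have hadd : ∀ u v : E, T p u - 1 ∈ Jgen σ → T p v - 1 ∈ Jgen σ →
      T p (u + v) - 1 ∈ Jgen σ := by
    intro u v hu hv
    have : T p (u + v) - 1 = T p u * (T p v - 1) + (T p u - 1) := by
      rw [T_add]; ring
    rw [this]
    exact add_mem (Ideal.mul_mem_left _ _ hv) hu
  have hzero : T p (0 : E) - 1 ∈ Jgen σ := by simp
  have hnsmul : ∀ (k : ℕ) (v : E), T p v - 1 ∈ Jgen σ → T p (k • v) - 1 ∈ Jgen σ := by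
    intro k v hv
    induction k with
    | zero => simpa using hzero
    | succ k ih =>
      rw [succ_nsmul]
      exact hadd _ _ ih hv
  rw [← basis_sum σ u]
  refine Finset.sum_induction _ (fun w => T p w - 1 ∈ Jgen σ) hadd hzero ?_
  intro i _
  exact hnsmul _ _ (Ideal.subset_span ⟨i, rfl⟩)

lemma Iaug_eq_Jgen : Iaug p E = Jgen σ := by
  apply le_antisymm
  · rw [Iaug, Ideal.span_le]
    rintro x ⟨u, rfl⟩
    exact T_sub_one_mem_Jgen σ u
  · rw [Jgen, Ideal.span_le]
    rintro x ⟨i, rfl⟩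
    exact T_sub_one_mem (bvec σ i)

lemma gen_pow_p (i : Fin r) : (T p (bvec σ i) - 1) ^ p = 0 := by
  haveI := (charP_A (p := p) (E := E))
  rw [sub_pow_char]
  have h1 : T p (bvec σ i) ^ p = T p (p • bvec σ i) := (T_nsmul p _).symm
  have h2 : p • bvec σ i = 0 := by
    apply σ.injective
    rw [map_nsmul, bvec, σ.apply_symm_apply, map_zero, ← Pi.single_smul]
    simp [nsmul_eq_mul]
  rw [h1, h2, T_zero, one_pow, sub_self]

lemma Jgen_pow_eq_bot : Jgen σ ^ ((p - 1) * r + 1) = ⊥ := by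
  have hp : 0 < p := (Fact.out : p.Prime).pos
  have hsp := Submodule.span_pow (R := AddMonoidAlgebra (ZMod p) E)
    (Set.range fun i : Fin r => T p (bvec σ i) - 1) ((p - 1) * r + 1)
  rw [Jgen, Ideal.span, hsp, ← le_bot_iff, Submodule.span_le]
  intro x hx
  rw [Set.mem_pow] at hx
  obtain ⟨f, hf⟩ := hx
  choose idx hidx using fun k => (f k).2
  have hx' : x = ∏ k, (T p (bvec σ (idx k)) - 1) := by
    rw [← hf, List.prod_ofFn]
    exact Finset.prod_congr rfl fun k _ => (hidx k).symm
  obtain ⟨i, hi⟩ := Fintype.exists_lt_card_fiber_of_mul_lt_card (f := idx) (n := p - 1)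
    (by simp only [Fintype.card_fin]; rw [Nat.mul_comm]; omega)
  set s : Finset (Fin ((p - 1) * r + 1)) := Finset.univ.filter fun k => idx k = i with hs
  have hcard : p ≤ s.card := by omega
  have h2 : ∏ k ∈ s, (T p (bvec σ (idx k)) - 1) = (T p (bvec σ i) - 1) ^ s.card := by
    rw [← Finset.prod_const]
    refine Finset.prod_congr rfl fun k hk => ?_
    rw [hs] at hk
    simp only [Finset.mem_filter] at hk
    rw [hk.2]
  have h3 : (T p (bvec σ i) - 1) ^ s.card = 0 := by
    have : (T p (bvec σ i) - 1) ^ s.card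
        = (T p (bvec σ i) - 1) ^ p * (T p (bvec σ i) - 1) ^ (s.card - p) := by
      rw [← pow_add]; congr 1; omega
    rw [this, gen_pow_p, zero_mul]
  have : x = 0 := by
    rw [hx', ← Finset.prod_filter_mul_prod_filter_not Finset.univ (fun k => idx k = i), ← hs,
      h2, h3, zero_mul]
  simp [this]

lemma geom_poly : ((Polynomial.X : Polynomial (ZMod p)) - 1) ^ (p - 1)
    = ∑ k ∈ Finset.range p, (Polynomial.X : Polynomial (ZMod p)) ^ k := by
  have hp : 0 < p := (Fact.out : p.Prime).pos
  have h1 : ((Polynomial.X : Polynomial (ZMod p)) - 1) ^ p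
      = Polynomial.X ^ p - 1 := by
    rw [sub_pow_char]; simp
  have h2 : ((Polynomial.X : Polynomial (ZMod p)) - 1)
      * ((Polynomial.X : Polynomial (ZMod p)) - 1) ^ (p - 1)
      = ((Polynomial.X : Polynomial (ZMod p)) - 1)
      * ∑ k ∈ Finset.range p, (Polynomial.X : Polynomial (ZMod p)) ^ k := by
    rw [← pow_succ', Nat.sub_add_cancel hp, h1, mul_comm, geom_sum_mul]
  have hne : ((Polynomial.X : Polynomial (ZMod p)) - 1) ≠ 0 := by
    simpa using Polynomial.X_sub_C_ne_zero (1 : ZMod p)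
  exact mul_left_cancel₀ hne h2

lemma gen_pow_pred (i : Fin r) :
    (T p (bvec σ i) - 1) ^ (p - 1) = ∑ k ∈ Finset.range p, T p (k • bvec σ i) := by
  have := congrArg (Polynomial.aeval (T p (bvec σ i))) (geom_poly (p := p))
  simp only [map_pow, map_sub, Polynomial.aeval_X, map_one, map_sum] at this
  rw [this]
  exact Finset.sum_congr rfl fun k _ => (T_nsmul k _).symm

lemma T_sum {s : Finset (Fin r)} (c : Fin r → E) :
    T p (∑ i ∈ s, c i) = ∏ i ∈ s, T p (c i) := by
  induction s using Finset.cons_induction with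
  | empty => simp
  | cons a s ha ih => rw [Finset.sum_cons, Finset.prod_cons, T_add, ih]

lemma prod_eq_norm [Fintype E] :
    ∏ i, ∑ k ∈ Finset.range p, T p (k • bvec σ i) = ∑ u : E, T p u := by
  haveI : NeZero p := ⟨(Fact.out : p.Prime).ne_zero⟩
  rw [Finset.prod_univ_sum]
  have h1 : ∀ x : Fin r → ℕ, ∏ i, T p (x i • bvec σ i) = T p (∑ i, x i • bvec σ i) :=
    fun x => (T_sum _).symm
  refine Finset.sum_nbij' (fun x => ∑ i, x i • bvec σ i) (fun u => fun i => (σ u i).val)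
    ?_ ?_ ?_ ?_ ?_
  · intro a _; exact Finset.mem_univ _
  · intro u _
    rw [Fintype.mem_piFinset]
    intro i
    rw [Finset.mem_range]
    exact ZMod.val_lt _
  · intro x hx
    rw [Fintype.mem_piFinset] at hx
    funext j
    show (σ (∑ i, x i • bvec σ i) j).val = x j
    rw [sigma_sum]
    exact (ZMod.val_natCast _ _).trans (Nat.mod_eq_of_lt (Finset.mem_range.mp (hx j)))
  · intro u _
    exact basis_sum σ u
  · intro x _
    exact h1 x

lemma prod_mem_card {R α : Type*} [CommRing R] (K : Ideal R) (s : Finset α) (y : α → R)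
    (hy : ∀ i ∈ s, y i ∈ K) : ∏ i ∈ s, y i ∈ K ^ s.card := by
  induction s using Finset.cons_induction with
  | empty => simp
  | cons a s ha ih =>
    rw [Finset.prod_cons, Finset.card_cons, pow_succ']
    exact Submodule.mul_mem_mul (hy a (Finset.mem_cons_self _ _))
      (ih fun i hi => hy i (Finset.mem_cons.2 (Or.inr hi)))

lemma norm_mem [Fintype E] :
    (∑ u : E, T p u : AddMonoidAlgebra (ZMod p) E) ∈ Jgen σ ^ ((p - 1) * r) := by
  rw [← prod_eq_norm σ]
  have h1 : ∀ i : Fin r, ∑ k ∈ Finset.range p, T p (k • bvec σ i)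
      = (T p (bvec σ i) - 1) ^ (p - 1) := fun i => (gen_pow_pred σ i).symm
  rw [Finset.prod_congr rfl fun i _ => h1 i]
  have h2 : ∀ i : Fin r, (T p (bvec σ i) - 1) ^ (p - 1) ∈ Jgen σ ^ (p - 1) := by
    intro i
    have : T p (bvec σ i) - 1 ∈ Jgen σ := Ideal.subset_span ⟨i, rfl⟩
    exact Ideal.pow_mem_pow this _
  have h3 := prod_mem_card (Jgen σ ^ (p - 1)) Finset.univ _ (fun i _ => h2 i)
  simpa [← pow_mul, Finset.card_univ] using h3

lemma norm_ne_zero [Fintype E] : (∑ u : E, T p u : AddMonoidAlgebra (ZMod p) E) ≠ 0 := by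
  classical
  intro h
  have h0 := congrArg ((Finsupp.applyAddHom (0 : E)).comp AddMonoidAlgebra.coeffAddEquiv.toAddMonoidHom : AddMonoidAlgebra (ZMod p) E →+ ZMod p) h
  rw [map_sum, map_zero] at h0
  simp only [AddMonoidHom.comp_apply, Finsupp.applyAddHom_apply] at h0
  change ∑ x, (T p x).coeff 0 = 0 at h0
  have h1 : ∀ u : E, (T p u).coeff 0 = if u = 0 then (1 : ZMod p) else 0 := by
    intro u
    rw [T, AddMonoidAlgebra.coeff_single, Finsupp.single_apply]
  rw [Finset.sum_congr rfl fun u _ => h1 u] at h0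
  rw [Finset.sum_ite_eq' Finset.univ (0 : E) fun _ => (1 : ZMod p)] at h0
  simp at h0

end Basis

/-- For an elementary abelian `p`-group `E` of rank `r`, the semidirect
product `G(r) = E ⋉ 𝔽_p[E]` (translation action) is nilpotent of nilpotency class
exactly `1 + (p-1)·r`: the lower central series reaches `⊥` exactly at step
`1 + (p-1)·r`. -/
theorem nilpotencyClass_of_Gr (r : ℕ) (hE : Nonempty (E ≃+ (Fin r → ZMod p))) :
    (⊤ : Subgroup (Gr p E)).lowerCentralSeries (1 + (p - 1) * r) = ⊥ ∧
    (⊤ : Subgroup (Gr p E)).lowerCentralSeries ((p - 1) * r) ≠ ⊥ := by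
  obtain ⟨σ⟩ := hE
  constructor
  · rw [Nat.add_comm, lcs_succ_eq]
    have hbot : Iaug p E ^ ((p - 1) * r + 1) = ⊥ := by
      rw [Iaug_eq_Jgen σ]; exact Jgen_pow_eq_bot σ
    rw [hbot, idealSubgroup_bot]
  · haveI : Fintype E := Fintype.ofEquiv _ σ.symm.toEquiv
    intro h
    rcases Nat.eq_zero_or_pos ((p - 1) * r) with h0 | hpos
    · rw [h0] at h
      have htop : (ι p (1 : AddMonoidAlgebra (ZMod p) E)) ∈ (⊥ : Subgroup (Gr p E)) := by
        rw [← h]; exact Subgroup.mem_top _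
      rw [Subgroup.mem_bot] at htop
      have h1 := congrArg (fun g : Gr p E => g.left.toAdd) htop
      simp only [ι] at h1
      have h2 : (1 : AddMonoidAlgebra (ZMod p) E) = 0 := by simpa using h1
      exact one_ne_zero h2
    · obtain ⟨m, hm⟩ : ∃ m, (p - 1) * r = m + 1 :=
        ⟨(p - 1) * r - 1, by omega⟩
      rw [hm, lcs_succ_eq] at h
      have hmem : (∑ u : E, T p u) ∈ Iaug p E ^ (m + 1) := by
        rw [← hm, Iaug_eq_Jgen σ]; exact norm_mem σ
      have h2 : ι p (∑ u : E, T p u) ∈ idealSubgroup (Iaug p E ^ (m + 1)) :=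
        ι_mem_idealSubgroup.mpr hmem
      rw [h, Subgroup.mem_bot] at h2
      have h3 := congrArg (fun g : Gr p E => g.left.toAdd) h2
      simp only [ι] at h3
      exact norm_ne_zero (by simpa using h3)

end
end

section
/- Let E be an elementary abelian p-group and M a cyclic 𝔽_p[E]-module generated by an element f. If ∑_{u∈E} u·f ≠ 0 in M, then M is a free 𝔽_p[E]-module of rank one (generated by f). -/
/-- Let `E` be a finite elementary abelian `p`-group and `M` a cyclic
module over the group algebra `𝔽_p[E]` generated by `f`.  If `∑_{u ∈ E} u • f ≠ 0`,
then `M` is free of rank one over `𝔽_p[E]`, generated by `f`: the map `r ↦ r • f` is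
bijective. -/
theorem free_of_sum_translates_ne_zero
    {p : ℕ} [Fact p.Prime] {E : Type*} [CommGroup E] [Fintype E]
    (hp : ∀ x : E, x ^ p = 1)
    {M : Type*} [AddCommGroup M] [Module (MonoidAlgebra (ZMod p) E) M]
    (f : M) (hgen : Submodule.span (MonoidAlgebra (ZMod p) E) {f} = ⊤)
    (hsum : ∑ u : E, (MonoidAlgebra.of (ZMod p) E u) • f ≠ 0) :
    Function.Bijective (fun r : MonoidAlgebra (ZMod p) E => r • f) := by
  classical
  set R := MonoidAlgebra (ZMod p) E with hR
  have hprime := (Fact.out : p.Prime)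
  set φ := LinearMap.toSpanSingleton R M f with hφ
  have hsurj : Function.Surjective φ := by
    rw [← LinearMap.range_eq_top, ← LinearMap.span_singleton_eq_range]
    exact hgen
  have hinj : Function.Injective φ := by
    rw [← LinearMap.ker_eq_bot]
    by_contra hker
    set I := LinearMap.ker φ with hI
    obtain ⟨v₀, hv₀I, hv₀ne⟩ := (Submodule.ne_bot_iff I).mp hker
    -- E acts on I via the module structure
    letI : MulAction E I := MulAction.compHom I (MonoidAlgebra.of (ZMod p) E)
    have hact : ∀ (g : E) (x : I), ((g • x : I) : R) = MonoidAlgebra.of (ZMod p) E g * (x : R) :=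
      fun g x => rfl
    have hE : IsPGroup p E := fun g => ⟨1, by simpa using hp g⟩
    haveI hfin : Finite R := Finite.of_equiv _ MonoidAlgebra.coeffEquiv.symm
    haveI hfinI : Finite I := Subtype.finite
    -- p divides the cardinality of I
    have hcard : p ∣ Nat.card I := by
      have hord : addOrderOf (⟨v₀, hv₀I⟩ : I) = p := by
        have hps : p • (⟨v₀, hv₀I⟩ : I) = 0 := by
          apply Subtype.ext
          show p • v₀ = (0 : R)
          rw [← Nat.cast_smul_eq_nsmul (ZMod p)]
          simp
        have hdvd : addOrderOf (⟨v₀, hv₀I⟩ : I) ∣ p :=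
          addOrderOf_dvd_of_nsmul_eq_zero hps
        rcases (Nat.dvd_prime hprime).mp hdvd with h1 | h1
        · exfalso
          have := AddMonoid.addOrderOf_eq_one_iff.mp h1
          apply hv₀ne
          simpa [Subtype.ext_iff] using this
        · exact h1
      have := addOrderOf_dvd_natCard (⟨v₀, hv₀I⟩ : I)
      rwa [hord] at this
    have h0fix : (0 : I) ∈ MulAction.fixedPoints E I := by
      rw [MulAction.mem_fixedPoints]
      intro g
      apply Subtype.ext
      rw [hact]
      simp
    obtain ⟨b, hbfix, hbne⟩ :=
      hE.exists_fixed_point_of_prime_dvd_card_of_fixed_point I hcard h0fix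
    set w : R := (b : R) with hw
    have hwI : w ∈ I := b.2
    have hwne : w ≠ 0 := by
      intro h
      exact hbne (Subtype.ext h.symm)
    have hwfix : ∀ g : E, MonoidAlgebra.of (ZMod p) E g * w = w := by
      intro g
      have := MulAction.mem_fixedPoints.mp hbfix g
      calc MonoidAlgebra.of (ZMod p) E g * w = ((g • b : I) : R) := rfl
        _ = w := by rw [this]
    -- w has constant coefficients
    have hconst : ∀ x : E, w.coeff x = w.coeff 1 := by
      intro x
      have h3 : (MonoidAlgebra.of (ZMod p) E x * w).coeff x = w.coeff x := by rw [hwfix x]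
      rw [MonoidAlgebra.of_apply, MonoidAlgebra.coeff_single_mul_apply, one_mul,
        inv_mul_cancel] at h3
      exact h3.symm
    set c : ZMod p := w.coeff 1 with hc
    have hcne : c ≠ 0 := by
      intro h
      apply hwne
      ext x
      rw [hconst x]
      simpa using h
    -- the "norm" element
    set N : R := ∑ u : E, MonoidAlgebra.of (ZMod p) E u with hN
    have hNapp : ∀ x : E, N.coeff x = 1 := by
      intro x
      rw [hN]
      rw [MonoidAlgebra.coeff_sum, Finsupp.finset_sum_apply]
      rw [Finset.sum_eq_single x]
      · simp [MonoidAlgebra.of_apply, MonoidAlgebra.single_apply]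
      · intro u _ hu
        simp [MonoidAlgebra.of_apply, MonoidAlgebra.single_apply, hu]
      · simp
    have hNI : N ∈ I := by
      have : MonoidAlgebra.single (1 : E) c⁻¹ * w = N := by
        ext x
        rw [MonoidAlgebra.coeff_single_mul_apply, inv_one, one_mul, hconst x,
          inv_mul_cancel₀ hcne, hNapp x]
      rw [← this]
      exact I.smul_mem _ hwI
    -- contradiction with hsum
    apply hsum
    have : φ N = 0 := hNI
    rw [hφ] at this
    rw [LinearMap.toSpanSingleton_apply, hN, Finset.sum_smul] at this
    exact this
  exact ⟨hinj, hsurj⟩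
end
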